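/- arXiv:1708.03116 — 6 statements merged into one kernel-verified Lean document; each statement's English description precedes it below -/
import Mathlib

section
/- Let X_n be an integer-valued random walk with i.i.d. bounded increments of mean zero and positive variance σ², started at X_0 = 0. Then the state 0 is recurrent: almost surely X_n = 0 for infinitely many n. -/
set_option maxHeartbeats 1000000

open MeasureTheory

namespace Stmt5Aux

open Finset ProbabilityTheory

variable {Ω : Type*} [MeasurableSpace Ω]

/-- Every subset of `ℤ` is measurable. -/
lemma measZ (s : Set ℤ) : MeasurableSet s := s.to_countable.measurableSet

/-- The random walk. -/
def S (ξ : ℕ → Ω → ℤ) (n : ℕ) (ω : Ω) : ℤ := ∑ i ∈ Finset.range n, ξ i ω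

lemma measurable_S (ξ : ℕ → Ω → ℤ) (hmeas : ∀ n, Measurable (ξ n)) (n : ℕ) :
    Measurable (S ξ n) :=
  Finset.measurable_sum _ fun i _ => hmeas i

section law

variable (μ : Measure Ω) [IsProbabilityMeasure μ] (ξ : ℕ → Ω → ℤ)
  (hmeas : ∀ n, Measurable (ξ n))
  (hindep : ProbabilityTheory.iIndepFun ξ μ)
  (hident : ∀ n, ProbabilityTheory.IdentDistrib (ξ n) (ξ 0) μ μ)

include hmeas hindep hident

/-- The law of a shifted finite window of an i.i.d. sequence is the product measure. -/
lemma map_tuple (m d : ℕ) :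
    Measure.map (fun ω (i : Fin d) => ξ (m + i) ω) μ
      = Measure.pi (fun _ : Fin d => Measure.map (ξ 0) μ) := by
  have hprob : IsProbabilityMeasure (Measure.map (ξ 0) μ) :=
    Measure.isProbabilityMeasure_map (hmeas 0).aemeasurable
  have hT : Measurable (fun ω (i : Fin d) => ξ (m + i) ω) :=
    measurable_pi_lambda _ fun i => hmeas (m + i)
  refine (Measure.pi_eq fun s hs => ?_).symm
  rw [Measure.map_apply hT (MeasurableSet.univ_pi hs)]
  classical
  set sets : ℕ → Set ℤ := fun j => if h : j - m < d then s ⟨j - m, h⟩ else Set.univ with hsets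
  have hpre : (fun ω (i : Fin d) => ξ (m + i) ω) ⁻¹' Set.pi Set.univ s
      = ⋂ j ∈ Finset.Ico m (m + d), ξ j ⁻¹' sets j := by
    ext ω
    simp only [Set.mem_preimage, Set.mem_pi, Set.mem_univ, forall_true_left, Set.mem_iInter,
      Finset.mem_Ico, hsets]
    constructor
    · intro h j hj
      have hjd : j - m < d := by omega
      rw [dif_pos hjd]
      have : m + (⟨j - m, hjd⟩ : Fin d) = j := by simp; omega
      simpa [this] using h ⟨j - m, hjd⟩
    · intro h i
      have hi := h (m + i) (by constructor <;> [omega; exact by have := i.isLt; omega])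
      have hlt : m + (i : ℕ) - m < d := by simpa using i.isLt
      rw [dif_pos hlt] at hi
      have heq : (⟨m + (i : ℕ) - m, hlt⟩ : Fin d) = i := by ext; simp
      rwa [heq] at hi
  rw [hpre, hindep.measure_inter_preimage_eq_mul (Finset.Ico m (m + d))
    (fun j _ => measZ (sets j))]
  have hmarg : ∀ j, μ (ξ j ⁻¹' sets j) = Measure.map (ξ 0) μ (sets j) := by
    intro j
    rw [(hident j).measure_mem_eq (measZ (sets j)),
      Measure.map_apply (hmeas 0) (measZ (sets j))]
  simp only [hmarg]
  rw [Finset.prod_Ico_eq_prod_range]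
  have : ∀ i ∈ Finset.range d, Measure.map (ξ 0) μ (sets (m + i - m))
      = Measure.map (ξ 0) μ (sets (m + i - m)) := fun _ _ => rfl
  have hterm : ∀ i ∈ Finset.range d,
      Measure.map (ξ 0) μ (sets (m + i)) = (fun i : ℕ =>
        if h : i < d then Measure.map (ξ 0) μ (s ⟨i, h⟩) else 1) i := by
    intro i hi
    have hi' : i < d := Finset.mem_range.1 hi
    have h1 : m + i - m = i := by omega
    simp [hsets, h1, hi']
  have hdd : m + d - m = d := by omega
  rw [hdd, Finset.prod_congr rfl hterm, ← Fin.prod_univ_eq_prod_range]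
  exact Finset.prod_congr rfl fun i _ => by simp [i.isLt]

/-- Shifting the time indices does not change probabilities of window events. -/
lemma shift_event {d : ℕ} (E : Set (Fin d → ℤ)) (hE : MeasurableSet E) (m : ℕ) :
    μ {ω | (fun i : Fin d => ξ (m + i) ω) ∈ E}
      = μ {ω | (fun i : Fin d => ξ (i : ℕ) ω) ∈ E} := by
  have hT : ∀ m, Measurable (fun ω (i : Fin d) => ξ (m + i) ω) := fun m =>
    measurable_pi_lambda _ fun i => hmeas (m + i)
  have h0 : (fun ω (i : Fin d) => ξ ((0 : ℕ) + i) ω) = fun ω (i : Fin d) => ξ (i : ℕ) ω := by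
    funext ω i; simp
  calc μ {ω | (fun i : Fin d => ξ (m + i) ω) ∈ E}
      = Measure.map (fun ω (i : Fin d) => ξ (m + i) ω) μ E := by
        rw [Measure.map_apply (hT m) hE]; rfl
    _ = Measure.map (fun ω (i : Fin d) => ξ ((0 : ℕ) + i) ω) μ E := by
        rw [map_tuple μ ξ hmeas hindep hident, map_tuple μ ξ hmeas hindep hident]
    _ = μ {ω | (fun i : Fin d => ξ (i : ℕ) ω) ∈ E} := by
        rw [h0, Measure.map_apply (by simpa using hT 0) hE]; rfl

/-- Stationarity of sums. -/
lemma sum_shift (m d : ℕ) :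
    μ {ω | ∑ i ∈ Finset.range d, ξ (m + i) ω = 0} = μ {ω | S ξ d ω = 0} := by
  have hE : MeasurableSet {v : Fin d → ℤ | ∑ i, v i = 0} :=
    (Finset.measurable_sum Finset.univ fun i _ => measurable_pi_apply i) (measZ {0})
  have key := shift_event μ ξ hmeas hindep hident {v : Fin d → ℤ | ∑ i, v i = 0} hE m
  have h1 : {ω : Ω | (fun i : Fin d => ξ (m + i) ω) ∈ {v : Fin d → ℤ | ∑ i, v i = 0}}
      = {ω | ∑ i ∈ Finset.range d, ξ (m + i) ω = 0} := by
    ext ω; simp [Fin.sum_univ_eq_sum_range (fun i => ξ (m + i) ω)]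
  have h2 : {ω : Ω | (fun i : Fin d => ξ (i : ℕ) ω) ∈ {v : Fin d → ℤ | ∑ i, v i = 0}}
      = {ω | S ξ d ω = 0} := by
    ext ω; simp [S, Fin.sum_univ_eq_sum_range (fun i => ξ i ω)]
  rw [h1, h2] at key
  exact key

end law

/-- First passage event at time `m` (first time in `[a, ∞)` that the walk equals `x`). -/
def G (ξ : ℕ → Ω → ℤ) (x : ℤ) (a m : ℕ) : Set Ω :=
  {ω | S ξ m ω = x ∧ ∀ j ∈ Finset.Ico a m, S ξ j ω ≠ x}

lemma measurableSet_G (ξ : ℕ → Ω → ℤ) (hmeas : ∀ n, Measurable (ξ n)) (x : ℤ) (a m : ℕ) :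
    MeasurableSet (G ξ x a m) := by
  have h1 : MeasurableSet {ω | S ξ m ω = x} := measurable_S ξ hmeas m (measZ {x})
  have h2 : ∀ j, MeasurableSet {ω : Ω | S ξ j ω ≠ x} := fun j =>
    (measurable_S ξ hmeas j (measZ {x})).compl
  have : G ξ x a m = {ω | S ξ m ω = x} ∩ ⋂ j ∈ Finset.Ico a m, {ω | S ξ j ω ≠ x} := by
    ext ω; simp [G, Set.mem_iInter]
  rw [this]
  exact h1.inter (MeasurableSet.biInter (Finset.Ico a m).countable_toSet fun j _ => h2 j)

lemma pairwise_disjoint_G (ξ : ℕ → Ω → ℤ) (x : ℤ) (a : ℕ) (s : Finset ℕ)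
    (hs : ∀ m ∈ s, a ≤ m) :
    Set.PairwiseDisjoint (s : Set ℕ) (G ξ x a) := by
  have key : ∀ m ∈ s, ∀ m' ∈ s, m < m' → Disjoint (G ξ x a m) (G ξ x a m') := by
    intro m hm m' hm' h
    refine Set.disjoint_left.2 fun ω hω hω' => ?_
    exact hω'.2 m (Finset.mem_Ico.2 ⟨hs m hm, h⟩) hω.1
  intro m hm m' hm' hne
  rcases lt_or_gt_of_ne hne with h | h
  · exact key m hm m' hm' h
  · exact (key m' hm' m hm h).symm

section decomp

variable (μ : Measure Ω) [IsProbabilityMeasure μ] (ξ : ℕ → Ω → ℤ)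
  (hmeas : ∀ n, Measurable (ξ n))
  (hindep : ProbabilityTheory.iIndepFun ξ μ)
  (hident : ∀ n, ProbabilityTheory.IdentDistrib (ξ n) (ξ 0) μ μ)

include hmeas hindep hident

/-- First-passage decomposition. -/
lemma decomp (x : ℤ) (a n : ℕ) (han : a ≤ n) :
    μ {ω | S ξ n ω = x}
      = ∑ m ∈ Finset.Icc a n, μ (G ξ x a m) * μ {ω | S ξ (n - m) ω = 0} := by
  classical
  set D : ℕ → Set Ω := fun m => {ω | ∑ i ∈ Finset.Ico m n, ξ i ω = 0} with hD
  have hmeasD : ∀ m, MeasurableSet (D m) := fun m =>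
    (Finset.measurable_sum _ fun i _ => hmeas i) (measZ {0})
  -- the decomposition as a set identity
  have hset : {ω | S ξ n ω = x} = ⋃ m ∈ Finset.Icc a n, G ξ x a m ∩ D m := by
    ext ω
    simp only [Set.mem_setOf_eq, Set.mem_iUnion, Finset.mem_Icc, exists_prop]
    constructor
    · intro hn
      have hex : ∃ m, a ≤ m ∧ m ≤ n ∧ S ξ m ω = x := ⟨n, han, le_rfl, hn⟩
      obtain ⟨m, hm⟩ := hex
      -- take the least such m
      have hex' : ∃ m, (a ≤ m ∧ m ≤ n ∧ S ξ m ω = x) := ⟨m, hm⟩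
      set m₀ := Nat.find hex' with hm₀
      obtain ⟨h1, h2, h3⟩ := Nat.find_spec hex'
      refine ⟨m₀, ⟨h1, h2⟩, ⟨h3, fun j hj => ?_⟩, ?_⟩
      · rcases Finset.mem_Ico.1 hj with ⟨hja, hjm⟩
        intro hSj
        exact Nat.find_min hex' hjm ⟨hja, by omega, hSj⟩
      · show ∑ i ∈ Finset.Ico m₀ n, ξ i ω = 0
        have := Finset.sum_Ico_eq_sub (fun i => ξ i ω) h2
        rw [this]
        change S ξ n ω - S ξ m₀ ω = 0
        rw [hn, h3, sub_self]
    · rintro ⟨m, ⟨hma, hmn⟩, ⟨hSm, _⟩, hDm⟩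
      have hsum : S ξ m ω + ∑ i ∈ Finset.Ico m n, ξ i ω = S ξ n ω := by
        rw [S, S, Finset.range_eq_Ico, Finset.range_eq_Ico]
        exact Finset.sum_Ico_consecutive (fun i => ξ i ω) (Nat.zero_le m) hmn
      have hDm' : ∑ i ∈ Finset.Ico m n, ξ i ω = 0 := hDm
      rw [← hsum, hSm, hDm', add_zero]
  rw [hset]
  -- disjointness
  have hdisj : Set.PairwiseDisjoint (↑(Finset.Icc a n)) (fun m => G ξ x a m ∩ D m) := by
    intro m hm m' hm' hne
    exact (pairwise_disjoint_G ξ x a (Finset.Icc a n)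
      (fun m hm => (Finset.mem_Icc.1 hm).1) hm hm' hne).mono
      Set.inter_subset_left Set.inter_subset_left
  rw [measure_biUnion_finset hdisj fun m _ =>
    (measurableSet_G ξ hmeas x a m).inter (hmeasD m)]
  refine Finset.sum_congr rfl fun m hm => ?_
  rcases Finset.mem_Icc.1 hm with ⟨hma, hmn⟩
  -- independence step
  have hST : Disjoint (Finset.range m) (Finset.Ico m n) := by
    simp only [Finset.disjoint_left, Finset.mem_range, Finset.mem_Ico]
    omega
  have hIndep := hindep.indepFun_finset (Finset.range m) (Finset.Ico m n) hST hmeas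
  -- express G and D as preimages
  set r : ℕ → ((i : ↥(Finset.range m)) → ℤ) → ℤ := fun j v =>
    ∑ i ∈ (Finset.range m).attach, if (i : ℕ) < j then v i else 0 with hr
  have hrmeas : ∀ j, Measurable (r j) := by
    intro j
    refine Finset.measurable_sum _ fun i _ => ?_
    by_cases h : (i : ℕ) < j
    · simpa [h] using measurable_pi_apply i
    · simpa [h] using measurable_const
  have hrS : ∀ j, j ≤ m → ∀ ω, r j (fun i : ↥(Finset.range m) => ξ i ω) = S ξ j ω := by
    intro j hj ω
    rw [hr]
    dsimp only
    rw [Finset.sum_attach (Finset.range m) (fun i => if i < j then ξ i ω else 0),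
      ← Finset.sum_filter]
    have hfil : (Finset.range m).filter (· < j) = Finset.range j := by
      ext i
      simp only [Finset.mem_filter, Finset.mem_range]
      omega
    rw [hfil]
    rfl
  set A : Set ((i : ↥(Finset.range m)) → ℤ) :=
    {v | r m v = x ∧ ∀ j ∈ Finset.Ico a m, r j v ≠ x} with hA
  have hAmeas : MeasurableSet A := by
    have h1 : MeasurableSet {v | r m v = x} := (hrmeas m) (measZ {x})
    have h2 : ∀ j, MeasurableSet {v | r j v ≠ x} := fun j => ((hrmeas j) (measZ {x})).compl
    have : A = {v | r m v = x} ∩ ⋂ j ∈ Finset.Ico a m, {v | r j v ≠ x} := by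
      ext v; simp [hA, Set.mem_iInter]
    rw [this]
    exact h1.inter (MeasurableSet.biInter (Finset.Ico a m).countable_toSet fun j _ => h2 j)
  set B : Set ((i : ↥(Finset.Ico m n)) → ℤ) :=
    {w | ∑ i ∈ (Finset.Ico m n).attach, w i = 0} with hB
  have hBmeas : MeasurableSet B :=
    (Finset.measurable_sum _ fun i _ => measurable_pi_apply i) (measZ {0})
  have hGpre : G ξ x a m = (fun ω (i : ↥(Finset.range m)) => ξ i ω) ⁻¹' A := by
    ext ω
    simp only [G, Set.mem_setOf_eq, Set.mem_preimage, hA]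
    constructor
    · rintro ⟨h1, h2⟩
      exact ⟨by rw [hrS m le_rfl ω]; exact h1,
        fun j hj => by rw [hrS j (le_of_lt (Finset.mem_Ico.1 hj).2) ω]; exact h2 j hj⟩
    · rintro ⟨h1, h2⟩
      rw [hrS m le_rfl ω] at h1
      exact ⟨h1, fun j hj => by
        have := h2 j hj
        rwa [hrS j (le_of_lt (Finset.mem_Ico.1 hj).2) ω] at this⟩
  have hDpre : D m = (fun ω (i : ↥(Finset.Ico m n)) => ξ i ω) ⁻¹' B := by
    ext ω
    simp only [hD, Set.mem_setOf_eq, Set.mem_preimage, hB]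
    rw [Finset.sum_attach (Finset.Ico m n) (fun i => ξ i ω)]
  rw [hGpre, hDpre, hIndep.measure_inter_preimage_eq_mul A B hAmeas hBmeas, ← hGpre, ← hDpre]
  congr 1
  -- stationarity : μ (D m) = μ {S (n - m) = 0}
  have : D m = {ω | ∑ i ∈ Finset.range (n - m), ξ (m + i) ω = 0} := by
    ext ω
    simp only [hD, Set.mem_setOf_eq]
    rw [Finset.sum_Ico_eq_sum_range]
  rw [this, sum_shift μ ξ hmeas hindep hident m (n - m)]

end decomp

/-- Summation exchange inequality. -/
lemma double_sum_le (g h : ℕ → ENNReal) (a N : ℕ) :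
    ∑ n ∈ Finset.Icc a N, ∑ m ∈ Finset.Icc a n, g m * h (n - m)
      ≤ (∑ m ∈ Finset.Icc a N, g m) * ∑ j ∈ Finset.range (N + 1), h j := by
  classical
  rw [Finset.sum_sigma']
  have hRHS : (∑ m ∈ Finset.Icc a N, g m) * ∑ j ∈ Finset.range (N + 1), h j
      = ∑ p ∈ (Finset.Icc a N).sigma (fun _ => Finset.range (N + 1)), g p.1 * h p.2 := by
    rw [Finset.sum_mul]
    simp_rw [Finset.mul_sum]
    rw [Finset.sum_sigma']
  rw [hRHS]
  set e : (Σ _ : ℕ, ℕ) → (Σ _ : ℕ, ℕ) := fun p => ⟨p.2, p.1 - p.2⟩ with he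
  have hinj : Set.InjOn e ((Finset.Icc a N).sigma (fun n => Finset.Icc a n)) := by
    rintro ⟨n, m⟩ hp ⟨n', m'⟩ hq hpq
    have hp' : (a ≤ n ∧ n ≤ N) ∧ a ≤ m ∧ m ≤ n := by simpa using hp
    have hq' : (a ≤ n' ∧ n' ≤ N) ∧ a ≤ m' ∧ m' ≤ n' := by simpa using hq
    simp only [he, Sigma.mk.inj_iff, heq_eq_eq] at hpq
    obtain ⟨h1, h2⟩ := hpq
    obtain rfl : m = m' := h1
    obtain rfl : n = n' := by omega
    rfl
  have himg : Finset.image e ((Finset.Icc a N).sigma (fun n => Finset.Icc a n))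
      ⊆ (Finset.Icc a N).sigma (fun _ => Finset.range (N + 1)) := by
    intro p hp
    simp only [Finset.mem_image, Finset.mem_sigma, Finset.mem_Icc] at hp
    obtain ⟨⟨n, m⟩, ⟨⟨h1, h2⟩, ⟨h3, h4⟩⟩, rfl⟩ := hp
    have heq : e ⟨n, m⟩ = ⟨m, n - m⟩ := rfl
    rw [heq]
    have hn1 : a ≤ n := h1
    have hn2 : n ≤ N := h2
    have hm1 : a ≤ m := h3
    have hm2 : m ≤ n := h4
    simp only [Finset.mem_sigma, Finset.mem_Icc, Finset.mem_range]
    omega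
  calc ∑ p ∈ (Finset.Icc a N).sigma (fun n => Finset.Icc a n), g p.2 * h (p.1 - p.2)
      = ∑ p ∈ Finset.image e ((Finset.Icc a N).sigma (fun n => Finset.Icc a n)),
          g p.1 * h p.2 := by
        rw [Finset.sum_image (fun p hp q hq hpq => hinj hp hq hpq)]
    _ ≤ _ := Finset.sum_le_sum_of_subset himg

/-- The event of returning to `0`. -/
def R (ξ : ℕ → Ω → ℤ) : Set Ω := {ω | ∃ n, 1 ≤ n ∧ S ξ n ω = 0}

/-- The event that the walk started at time `m` returns to its value at time `m`. -/
def Bev (ξ : ℕ → Ω → ℤ) (m : ℕ) : Set Ω :=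
  {ω | ∃ n, 1 ≤ n ∧ ∑ i ∈ Finset.range n, ξ (m + i) ω = 0}

/-- The expected number of visits to `0` up to time `N`. -/
noncomputable def U (μ : Measure Ω) (ξ : ℕ → Ω → ℤ) (N : ℕ) : ENNReal :=
  ∑ j ∈ Finset.range (N + 1), μ {ω | S ξ j ω = 0}

section renewal

variable (μ : Measure Ω) [IsProbabilityMeasure μ] (ξ : ℕ → Ω → ℤ)
  (hmeas : ∀ n, Measurable (ξ n))
  (hindep : ProbabilityTheory.iIndepFun ξ μ)
  (hident : ∀ n, ProbabilityTheory.IdentDistrib (ξ n) (ξ 0) μ μ)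

include hmeas hindep hident

/-- The expected number of visits to any state is at most that to `0`. -/
lemma sum_le_U (x : ℤ) (N : ℕ) :
    ∑ n ∈ Finset.Icc 0 N, μ {ω | S ξ n ω = x} ≤ U μ ξ N := by
  have hdec : ∀ n ∈ Finset.Icc 0 N, μ {ω | S ξ n ω = x}
      = ∑ m ∈ Finset.Icc 0 n, μ (G ξ x 0 m) * μ {ω | S ξ (n - m) ω = 0} :=
    fun n _ => decomp μ ξ hmeas hindep hident x 0 n (Nat.zero_le n)
  rw [Finset.sum_congr rfl hdec]
  calc ∑ n ∈ Finset.Icc 0 N, ∑ m ∈ Finset.Icc 0 n,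
        μ (G ξ x 0 m) * μ {ω | S ξ (n - m) ω = 0}
      ≤ (∑ m ∈ Finset.Icc 0 N, μ (G ξ x 0 m))
          * ∑ j ∈ Finset.range (N + 1), μ {ω | S ξ j ω = 0} :=
        double_sum_le _ _ 0 N
    _ ≤ 1 * U μ ξ N := by
        refine mul_le_mul' ?_ le_rfl
        rw [← measure_biUnion_finset (pairwise_disjoint_G ξ x 0 _ (fun m _ => Nat.zero_le m))
          (fun m _ => measurableSet_G ξ hmeas x 0 m)]
        exact prob_le_one
    _ = U μ ξ N := one_mul _

/-- The renewal inequality. -/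
lemma renewal_ineq (N : ℕ) : U μ ξ N ≤ 1 + μ (R ξ) * U μ ξ N := by
  have hsplit : U μ ξ N = μ {ω | S ξ 0 ω = 0} + ∑ n ∈ Finset.Icc 1 N, μ {ω | S ξ n ω = 0} := by
    rw [U]
    have : Finset.range (N + 1) = insert 0 (Finset.Icc 1 N) := by
      ext i; simp only [Finset.mem_range, Finset.mem_insert, Finset.mem_Icc]; omega
    rw [this, Finset.sum_insert (by simp)]
  have h0 : μ {ω | S ξ 0 ω = 0} = 1 := by
    have : {ω : Ω | S ξ 0 ω = 0} = Set.univ := by ext ω; simp [S]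
    rw [this, measure_univ]
  have hdec : ∀ n ∈ Finset.Icc 1 N, μ {ω | S ξ n ω = 0}
      = ∑ m ∈ Finset.Icc 1 n, μ (G ξ 0 1 m) * μ {ω | S ξ (n - m) ω = 0} :=
    fun n hn => decomp μ ξ hmeas hindep hident 0 1 n (Finset.mem_Icc.1 hn).1
  have hGR : ∑ m ∈ Finset.Icc 1 N, μ (G ξ 0 1 m) ≤ μ (R ξ) := by
    rw [← measure_biUnion_finset (pairwise_disjoint_G ξ 0 1 _ (fun m hm => (Finset.mem_Icc.1 hm).1))
      (fun m _ => measurableSet_G ξ hmeas 0 1 m)]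
    refine measure_mono ?_
    intro ω hω
    simp only [Set.mem_iUnion, exists_prop] at hω
    obtain ⟨m, hm, hG, -⟩ := hω
    exact ⟨m, (Finset.mem_Icc.1 hm).1, hG⟩
  calc U μ ξ N = 1 + ∑ n ∈ Finset.Icc 1 N, μ {ω | S ξ n ω = 0} := by rw [hsplit, h0]
    _ = 1 + ∑ n ∈ Finset.Icc 1 N, ∑ m ∈ Finset.Icc 1 n,
          μ (G ξ 0 1 m) * μ {ω | S ξ (n - m) ω = 0} := by rw [Finset.sum_congr rfl hdec]
    _ ≤ 1 + (∑ m ∈ Finset.Icc 1 N, μ (G ξ 0 1 m))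
          * ∑ j ∈ Finset.range (N + 1), μ {ω | S ξ j ω = 0} :=
        add_le_add le_rfl (double_sum_le _ _ 1 N)
    _ ≤ 1 + μ (R ξ) * U μ ξ N := add_le_add le_rfl (mul_le_mul' hGR le_rfl)

end renewal

section moments

variable (μ : Measure Ω) [IsProbabilityMeasure μ] (ξ : ℕ → Ω → ℤ) (k : ℕ)
  (hmeas : ∀ n, Measurable (ξ n))
  (hindep : ProbabilityTheory.iIndepFun ξ μ)
  (hident : ∀ n, ProbabilityTheory.IdentDistrib (ξ n) (ξ 0) μ μ)
  (hbdd : ∀ᵐ ω ∂μ, |ξ 0 ω| ≤ (k : ℤ))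

lemma measurable_cast : Measurable (fun z : ℤ => (z : ℝ)) := measurable_of_countable _

include hmeas hident hbdd in
lemma bdd_ae (i : ℕ) : ∀ᵐ ω ∂μ, |ξ i ω| ≤ (k : ℤ) := by
  have hs : MeasurableSet {z : ℤ | ¬ |z| ≤ (k : ℤ)} := measZ _
  have h0 : μ (ξ 0 ⁻¹' {z : ℤ | ¬ |z| ≤ (k : ℤ)}) = 0 := by
    rw [ae_iff] at hbdd; exact hbdd
  have := (hident i).measure_mem_eq hs
  rw [ae_iff]
  rw [show {ω | ¬|ξ i ω| ≤ (k : ℤ)} = ξ i ⁻¹' {z : ℤ | ¬ |z| ≤ (k : ℤ)} from rfl]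
  rw [this, h0]

include hmeas hident hbdd in
lemma integrable_mul (i j : ℕ) :
    Integrable (fun ω => ((ξ i ω : ℤ) : ℝ) * ((ξ j ω : ℤ) : ℝ)) μ := by
  refine ⟨((measurable_cast.comp (hmeas i)).mul
    (measurable_cast.comp (hmeas j))).aestronglyMeasurable, ?_⟩
  refine HasFiniteIntegral.of_bounded (C := (k : ℝ) * (k : ℝ)) ?_
  filter_upwards [bdd_ae μ ξ k hmeas hident hbdd i, bdd_ae μ ξ k hmeas hident hbdd j]
    with ω h1 h2
  have h1' : |((ξ i ω : ℤ) : ℝ)| ≤ (k : ℝ) := by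
    rw [← Int.cast_abs]; exact_mod_cast h1
  have h2' : |((ξ j ω : ℤ) : ℝ)| ≤ (k : ℝ) := by
    rw [← Int.cast_abs]; exact_mod_cast h2
  rw [Real.norm_eq_abs, abs_mul]
  exact mul_le_mul h1' h2' (abs_nonneg _) (Nat.cast_nonneg k)

include hmeas hident hbdd in
lemma integrable_X (i : ℕ) : Integrable (fun ω => ((ξ i ω : ℤ) : ℝ)) μ := by
  refine ⟨(measurable_cast.comp (hmeas i)).aestronglyMeasurable, ?_⟩
  refine HasFiniteIntegral.of_bounded (C := (k : ℝ)) ?_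
  filter_upwards [bdd_ae μ ξ k hmeas hident hbdd i] with ω h1
  rw [Real.norm_eq_abs, ← Int.cast_abs]
  exact_mod_cast h1

include hmeas hident in
lemma integral_X (hmean : ∫ ω, ((ξ 0 ω : ℤ) : ℝ) ∂μ = 0) (i : ℕ) :
    ∫ ω, ((ξ i ω : ℤ) : ℝ) ∂μ = 0 := by
  rw [← hmean]
  exact ((hident i).comp measurable_cast).integral_eq

include hident in
lemma integral_X_sq (i : ℕ) :
    ∫ ω, ((ξ i ω : ℤ) : ℝ) ^ 2 ∂μ = ∫ ω, ((ξ 0 ω : ℤ) : ℝ) ^ 2 ∂μ :=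
  ((hident i).comp (measurable_cast.pow_const 2)).integral_eq

include hmeas hindep hident hbdd in
lemma second_moment (hmean : ∫ ω, ((ξ 0 ω : ℤ) : ℝ) ∂μ = 0) (n : ℕ) :
    ∫ ω, ((S ξ n ω : ℤ) : ℝ) ^ 2 ∂μ = n * ∫ ω, ((ξ 0 ω : ℤ) : ℝ) ^ 2 ∂μ := by
  have hcast : ∀ ω, ((S ξ n ω : ℤ) : ℝ) ^ 2
      = ∑ i ∈ Finset.range n, ∑ j ∈ Finset.range n, ((ξ i ω : ℤ) : ℝ) * ((ξ j ω : ℤ) : ℝ) := by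
    intro ω
    rw [S]
    push_cast
    rw [sq, Finset.sum_mul_sum]
  simp_rw [hcast]
  rw [integral_finset_sum _ fun i _ => integrable_finset_sum _ fun j _ =>
    integrable_mul μ ξ k hmeas hident hbdd i j]
  have : ∀ i ∈ Finset.range n, ∫ ω, ∑ j ∈ Finset.range n,
      ((ξ i ω : ℤ) : ℝ) * ((ξ j ω : ℤ) : ℝ) ∂μ
      = ∑ j ∈ Finset.range n, ∫ ω, ((ξ i ω : ℤ) : ℝ) * ((ξ j ω : ℤ) : ℝ) ∂μ :=
    fun i _ => integral_finset_sum _ fun j _ => integrable_mul μ ξ k hmeas hident hbdd i j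
  rw [Finset.sum_congr rfl this]
  have hterm : ∀ i ∈ Finset.range n, ∀ j ∈ Finset.range n,
      ∫ ω, ((ξ i ω : ℤ) : ℝ) * ((ξ j ω : ℤ) : ℝ) ∂μ
        = if i = j then ∫ ω, ((ξ 0 ω : ℤ) : ℝ) ^ 2 ∂μ else 0 := by
    intro i _ j _
    by_cases hij : i = j
    · subst hij
      simp only [if_true]
      rw [← integral_X_sq μ ξ hident i]
      congr 1; funext ω; rw [sq]
    · simp only [hij, if_false]
      have hInd : ProbabilityTheory.IndepFun (fun ω => ((ξ i ω : ℤ) : ℝ))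
          (fun ω => ((ξ j ω : ℤ) : ℝ)) μ :=
        ProbabilityTheory.IndepFun.comp (hindep.indepFun hij) measurable_cast measurable_cast
      have := hInd.integral_mul_eq_mul_integral (integrable_X μ ξ k hmeas hident hbdd i).aestronglyMeasurable
        (integrable_X μ ξ k hmeas hident hbdd j).aestronglyMeasurable
      have hXi := integral_X μ ξ hmeas hident hmean i
      have hXj := integral_X μ ξ hmeas hident hmean j
      calc ∫ ω, ((ξ i ω : ℤ) : ℝ) * ((ξ j ω : ℤ) : ℝ) ∂μ
          = (∫ ω, ((ξ i ω : ℤ) : ℝ) ∂μ) * ∫ ω, ((ξ j ω : ℤ) : ℝ) ∂μ := this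
        _ = 0 := by rw [hXi, hXj, mul_zero]
  calc ∑ i ∈ Finset.range n, ∑ j ∈ Finset.range n,
        ∫ ω, ((ξ i ω : ℤ) : ℝ) * ((ξ j ω : ℤ) : ℝ) ∂μ
      = ∑ i ∈ Finset.range n, ∑ j ∈ Finset.range n,
          (if i = j then ∫ ω, ((ξ 0 ω : ℤ) : ℝ) ^ 2 ∂μ else 0) := by
        refine Finset.sum_congr rfl fun i hi => Finset.sum_congr rfl fun j hj => ?_
        exact hterm i hi j hj
    _ = n * ∫ ω, ((ξ 0 ω : ℤ) : ℝ) ^ 2 ∂μ := by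
        have : ∀ i ∈ Finset.range n, (∑ j ∈ Finset.range n,
            if i = j then ∫ ω, ((ξ 0 ω : ℤ) : ℝ) ^ 2 ∂μ else (0 : ℝ))
            = ∫ ω, ((ξ 0 ω : ℤ) : ℝ) ^ 2 ∂μ := by
          intro i hi
          rw [Finset.sum_ite_eq (Finset.range n) i (fun _ => ∫ ω, ((ξ 0 ω : ℤ) : ℝ) ^ 2 ∂μ),
            if_pos hi]
        rw [Finset.sum_congr rfl this, Finset.sum_const, Finset.card_range, nsmul_eq_mul]

end moments

section cheb

variable (μ : Measure Ω) [IsProbabilityMeasure μ] (ξ : ℕ → Ω → ℤ) (k : ℕ)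
  (hmeas : ∀ n, Measurable (ξ n))
  (hindep : ProbabilityTheory.iIndepFun ξ μ)
  (hident : ∀ n, ProbabilityTheory.IdentDistrib (ξ n) (ξ 0) μ μ)
  (hbdd : ∀ᵐ ω ∂μ, |ξ 0 ω| ≤ (k : ℤ))

include hmeas hindep hident in
lemma counting (N M : ℕ) :
    ∑ n ∈ Finset.Icc 0 N, μ {ω | |S ξ n ω| ≤ (M : ℤ)}
      ≤ (2 * M + 1 : ℕ) * U μ ξ N := by
  have habs : ∀ n, {ω | |S ξ n ω| ≤ (M : ℤ)}
      = ⋃ x ∈ Finset.Icc (-(M : ℤ)) (M : ℤ), {ω | S ξ n ω = x} := by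
    intro n
    ext ω
    simp only [Set.mem_setOf_eq, Set.mem_iUnion, Finset.mem_Icc, exists_prop, abs_le]
    constructor
    · rintro ⟨h1, h2⟩; exact ⟨S ξ n ω, ⟨h1, h2⟩, rfl⟩
    · rintro ⟨x, ⟨h1, h2⟩, rfl⟩; exact ⟨h1, h2⟩
  have hdis : ∀ n, Set.PairwiseDisjoint (↑(Finset.Icc (-(M : ℤ)) (M : ℤ)))
      (fun x => {ω | S ξ n ω = x}) := by
    intro n x hx y hy hxy
    refine Set.disjoint_left.2 fun ω h1 h2 => hxy ?_
    rw [← h1, ← h2]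
  have hmeas' : ∀ n (x : ℤ), MeasurableSet {ω | S ξ n ω = x} := fun n x =>
    (measurable_S ξ hmeas n) (measZ {x})
  have hsum : ∀ n, μ {ω | |S ξ n ω| ≤ (M : ℤ)}
      = ∑ x ∈ Finset.Icc (-(M : ℤ)) (M : ℤ), μ {ω | S ξ n ω = x} := by
    intro n
    rw [habs n, measure_biUnion_finset (hdis n) fun x _ => hmeas' n x]
  calc ∑ n ∈ Finset.Icc 0 N, μ {ω | |S ξ n ω| ≤ (M : ℤ)}
      = ∑ n ∈ Finset.Icc 0 N, ∑ x ∈ Finset.Icc (-(M : ℤ)) (M : ℤ), μ {ω | S ξ n ω = x} :=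
        Finset.sum_congr rfl fun n _ => hsum n
    _ = ∑ x ∈ Finset.Icc (-(M : ℤ)) (M : ℤ), ∑ n ∈ Finset.Icc 0 N, μ {ω | S ξ n ω = x} :=
        Finset.sum_comm
    _ ≤ ∑ _x ∈ Finset.Icc (-(M : ℤ)) (M : ℤ), U μ ξ N :=
        Finset.sum_le_sum fun x _ => sum_le_U μ ξ hmeas hindep hident x N
    _ = (Finset.Icc (-(M : ℤ)) (M : ℤ)).card • U μ ξ N := (Finset.sum_const _)
    _ = (2 * M + 1 : ℕ) * U μ ξ N := by
        have hc : (Finset.Icc (-(M : ℤ)) (M : ℤ)).card = 2 * M + 1 := by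
          rw [Int.card_Icc]
          omega
        rw [hc, nsmul_eq_mul]

include hmeas hindep hident hbdd in
lemma cheb (hvar : 0 < ∫ ω, ((ξ 0 ω : ℤ) : ℝ) ^ 2 ∂μ)
    (hmean : ∫ ω, ((ξ 0 ω : ℤ) : ℝ) ∂μ = 0) (N n M : ℕ) (hn : n ≤ N)
    (hM : 2 * (∫ ω, ((ξ 0 ω : ℤ) : ℝ) ^ 2 ∂μ) * N ≤ (M : ℝ) ^ 2) :
    (1 : ℝ) / 2 ≤ (μ {ω | |S ξ n ω| ≤ (M : ℤ)}).toReal := by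
  set σ2 := ∫ ω, ((ξ 0 ω : ℤ) : ℝ) ^ 2 ∂μ with hσ2
  set f : Ω → ℝ := fun ω => ((S ξ n ω : ℤ) : ℝ) ^ 2 with hf
  have hfeq : f = fun ω => ∑ i ∈ Finset.range n, ∑ j ∈ Finset.range n,
      ((ξ i ω : ℤ) : ℝ) * ((ξ j ω : ℤ) : ℝ) := by
    funext ω
    rw [hf]
    dsimp only
    rw [S]
    push_cast
    rw [sq, Finset.sum_mul_sum]
  have hfint : Integrable f μ := by
    rw [hfeq]
    exact integrable_finset_sum _ fun i _ => integrable_finset_sum _ fun j _ =>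
      integrable_mul μ ξ k hmeas hident hbdd i j
  have hint : ∫ ω, f ω ∂μ = n * σ2 := second_moment μ ξ k hmeas hindep hident hbdd hmean n
  set ε : ℝ := ((M : ℝ) + 1) ^ 2 with hε
  have hεpos : 0 < ε := by positivity
  have hmarkov := mul_meas_ge_le_integral_of_nonneg
    (ae_of_all μ fun ω => sq_nonneg _ : 0 ≤ᵐ[μ] f) hfint ε
  rw [hint] at hmarkov
  have hσ2pos : (0 : ℝ) < σ2 := hvar
  have hNn : (n : ℝ) * σ2 ≤ N * σ2 := by
    have : (n : ℝ) ≤ N := by exact_mod_cast hn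
    nlinarith
  have hhalf : (N : ℝ) * σ2 ≤ ε / 2 := by
    have h1 : (M : ℝ) ^ 2 ≤ ε := by rw [hε]; nlinarith [Nat.cast_nonneg (α := ℝ) M]
    nlinarith
  have hsub : {ω | ¬ |S ξ n ω| ≤ (M : ℤ)} ⊆ {ω | ε ≤ f ω} := by
    intro ω hω
    simp only [Set.mem_setOf_eq, not_le] at hω
    have h1 : (M : ℤ) + 1 ≤ |S ξ n ω| := hω
    have h2 : ((M : ℝ) + 1) ≤ |((S ξ n ω : ℤ) : ℝ)| := by
      rw [← Int.cast_abs]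
      exact_mod_cast h1
    have h3 : ε ≤ |((S ξ n ω : ℤ) : ℝ)| ^ 2 := by
      rw [hε]
      exact pow_le_pow_left₀ (by positivity) h2 2
    simpa [hf, sq_abs] using h3
  have hcompl : (μ {ω | ¬ |S ξ n ω| ≤ (M : ℤ)}).toReal ≤ 1 / 2 := by
    have h1 : μ {ω | ¬ |S ξ n ω| ≤ (M : ℤ)} ≤ μ {ω | ε ≤ f ω} := measure_mono hsub
    have h2 : (μ {ω | ε ≤ f ω}).toReal ≤ 1 / 2 := by
      have h3 : ε * (μ {ω | ε ≤ f ω}).toReal ≤ ε / 2 := le_trans hmarkov (hNn.trans hhalf)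
      nlinarith [h3]
    exact le_trans (ENNReal.toReal_mono (measure_ne_top μ _) h1) h2
  have hE : MeasurableSet {ω | |S ξ n ω| ≤ (M : ℤ)} :=
    (measurable_S ξ hmeas n) (measZ {z : ℤ | |z| ≤ (M : ℤ)})
  have h4 : μ {ω | |S ξ n ω| ≤ (M : ℤ)}ᶜ = 1 - μ {ω | |S ξ n ω| ≤ (M : ℤ)} :=
    prob_compl_eq_one_sub hE
  have h5 : {ω | |S ξ n ω| ≤ (M : ℤ)}ᶜ = {ω | ¬ |S ξ n ω| ≤ (M : ℤ)} := rfl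
  have h6 : (μ {ω | ¬ |S ξ n ω| ≤ (M : ℤ)}).toReal
      = 1 - (μ {ω | |S ξ n ω| ≤ (M : ℤ)}).toReal := by
    rw [← h5, h4, ENNReal.toReal_sub_of_le prob_le_one ENNReal.one_ne_top, ENNReal.toReal_one]
  linarith

lemma U_ne_top (N : ℕ) : U μ ξ N ≠ ⊤ := by
  refine ne_top_of_le_ne_top (b := ((N : ENNReal) + 1)) (by simp) ?_
  calc U μ ξ N ≤ ∑ _j ∈ Finset.range (N + 1), (1 : ENNReal) :=
        Finset.sum_le_sum fun j _ => prob_le_one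
    _ = (N + 1 : ℕ) * 1 := by rw [Finset.sum_const, Finset.card_range, nsmul_eq_mul]
    _ = (N : ENNReal) + 1 := by push_cast; ring

include hmeas hindep hident hbdd in
lemma U_unbounded (hvar : 0 < ∫ ω, ((ξ 0 ω : ℤ) : ℝ) ^ 2 ∂μ)
    (hmean : ∫ ω, ((ξ 0 ω : ℤ) : ℝ) ∂μ = 0) (C : ℝ) :
    ∃ N, C ≤ (U μ ξ N).toReal := by
  set σ2 := ∫ ω, ((ξ 0 ω : ℤ) : ℝ) ^ 2 ∂μ with hσ2
  set C' : ℝ := max C 1 with hC'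
  have hC1 : 1 ≤ C' := le_max_right _ _
  set q : ℝ := Real.sqrt (2 * σ2) with hq
  have hq0 : 0 ≤ q := Real.sqrt_nonneg _
  set a : ℝ := 4 * C' * q with ha
  set b : ℝ := 6 * C' with hb
  have ha0 : 0 ≤ a := by positivity
  have hb0 : 0 ≤ b := by rw [hb]; linarith
  set t : ℝ := max (a + b) 1 with ht
  have ht1 : 1 ≤ t := le_max_right _ _
  have htab : a + b ≤ t := le_max_left _ _
  set N : ℕ := ⌈t ^ 2⌉₊ with hN
  set s : ℝ := Real.sqrt N with hs
  have hs0 : 0 ≤ s := Real.sqrt_nonneg _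
  have hst : t ≤ s := by
    rw [hs]
    have h1 : t ^ 2 ≤ (N : ℝ) := Nat.le_ceil _
    have := Real.sqrt_le_sqrt h1
    rwa [Real.sqrt_sq (by linarith : (0:ℝ) ≤ t)] at this
  have hss : s * s = (N : ℝ) := Real.mul_self_sqrt (Nat.cast_nonneg N)
  set M : ℕ := ⌈Real.sqrt (2 * σ2 * N)⌉₊ with hM
  have hM2 : 2 * σ2 * N ≤ (M : ℝ) ^ 2 := by
    have h1 : Real.sqrt (2 * σ2 * N) ≤ (M : ℝ) := Nat.le_ceil _
    have h2 : (0 : ℝ) ≤ 2 * σ2 * N := by positivity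
    nlinarith [Real.sq_sqrt h2, Real.sqrt_nonneg (2 * σ2 * N)]
  have hMs : (M : ℝ) ≤ q * s + 1 := by
    have h1 : (⌈Real.sqrt (2 * σ2 * N)⌉₊ : ℝ) < Real.sqrt (2 * σ2 * N) + 1 :=
      Nat.ceil_lt_add_one (Real.sqrt_nonneg _)
    have h2 : Real.sqrt (2 * σ2 * N) = q * s := by
      rw [hq, hs, ← Real.sqrt_mul (by positivity)]
    rw [hM]
    linarith [h2 ▸ h1]
  -- per-n lower bound and summation
  have hper : ∀ n ∈ Finset.Icc 0 N, (1 : ℝ) / 2 ≤ (μ {ω | |S ξ n ω| ≤ (M : ℤ)}).toReal :=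
    fun n hn => cheb μ ξ k hmeas hindep hident hbdd hvar hmean N n M
      (Finset.mem_Icc.1 hn).2 hM2
  have hcount := counting μ ξ hmeas hindep hident N M
  have hsumto : ((N : ℝ) + 1) * (1 / 2)
      ≤ ∑ n ∈ Finset.Icc 0 N, (μ {ω | |S ξ n ω| ≤ (M : ℤ)}).toReal := by
    have := Finset.card_nsmul_le_sum (Finset.Icc 0 N)
      (fun n => (μ {ω | |S ξ n ω| ≤ (M : ℤ)}).toReal) (1 / 2) hper
    rw [Nat.card_Icc] at this
    simpa [nsmul_eq_mul, add_comm] using this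
  have htoReal : ∑ n ∈ Finset.Icc 0 N, (μ {ω | |S ξ n ω| ≤ (M : ℤ)}).toReal
      ≤ (2 * M + 1 : ℕ) * (U μ ξ N).toReal := by
    rw [← ENNReal.toReal_sum (fun n _ => measure_ne_top μ _)]
    have h2 : ((2 * M + 1 : ℕ) * U μ ξ N).toReal
        = (2 * M + 1 : ℕ) * (U μ ξ N).toReal := by
      rw [ENNReal.toReal_mul, ENNReal.toReal_natCast]
    rw [← h2]
    exact ENNReal.toReal_mono
      (ENNReal.mul_ne_top (ENNReal.natCast_ne_top _) (U_ne_top μ ξ N)) hcount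
  have hkey : ((N : ℝ) + 1) / 2 ≤ (2 * M + 1 : ℕ) * (U μ ξ N).toReal := by
    calc ((N : ℝ) + 1) / 2 = ((N : ℝ) + 1) * (1 / 2) := by ring
      _ ≤ _ := le_trans hsumto htoReal
  -- arithmetic: C' * (2 * (2M+1)) ≤ N + 1
  have harith : 2 * C' * (2 * (M : ℝ) + 1) ≤ (N : ℝ) + 1 := by
    have h1 : s ≥ a + b := le_trans htab hst
    have h2 : s ≥ 1 := le_trans ht1 hst
    nlinarith [hMs, hss, hq0, hC1, mul_nonneg hq0 hs0]
  refine ⟨N, ?_⟩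
  have hMpos : (0 : ℝ) < (2 * M + 1 : ℕ) := by positivity
  have hCC : C ≤ C' := le_max_left _ _
  have hfin : C' * (2 * (2 * M + 1 : ℕ)) ≤ (N : ℝ) + 1 := by
    push_cast
    push_cast at harith
    linarith
  have hU0 : 0 ≤ (U μ ξ N).toReal := ENNReal.toReal_nonneg
  nlinarith [hkey, hfin, hMpos, hCC, hU0]

include hmeas hindep hident hbdd in
lemma return_one (hvar : 0 < ∫ ω, ((ξ 0 ω : ℤ) : ℝ) ^ 2 ∂μ)
    (hmean : ∫ ω, ((ξ 0 ω : ℤ) : ℝ) ∂μ = 0) : μ (R ξ) = 1 := by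
  by_contra hne
  have hle : μ (R ξ) ≤ 1 := prob_le_one
  have hlt : μ (R ξ) < 1 := lt_of_le_of_ne hle hne
  set r : ℝ := (μ (R ξ)).toReal with hr
  have hr1 : r < 1 := by
    rw [hr, ← ENNReal.toReal_one]
    exact (ENNReal.toReal_lt_toReal (measure_ne_top μ _) ENNReal.one_ne_top).2 hlt
  have hr0 : 0 ≤ r := ENNReal.toReal_nonneg
  -- renewal in real form
  have hren : ∀ N, (U μ ξ N).toReal ≤ 1 + r * (U μ ξ N).toReal := by
    intro N
    have h1 := renewal_ineq μ ξ hmeas hindep hident N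
    have h2 : (U μ ξ N).toReal ≤ (1 + μ (R ξ) * U μ ξ N).toReal :=
      ENNReal.toReal_mono (by
        exact ENNReal.add_ne_top.2 ⟨ENNReal.one_ne_top,
          ENNReal.mul_ne_top (measure_ne_top μ _) (U_ne_top μ ξ N)⟩) h1
    rwa [ENNReal.toReal_add ENNReal.one_ne_top
      (ENNReal.mul_ne_top (measure_ne_top μ _) (U_ne_top μ ξ N)),
      ENNReal.toReal_mul, ENNReal.toReal_one] at h2
  have hbnd : ∀ N, (U μ ξ N).toReal ≤ 1 / (1 - r) := by
    intro N
    have h1 := hren N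
    have h2 : (0 : ℝ) < 1 - r := by linarith
    rw [le_div_iff₀ h2]
    nlinarith
  obtain ⟨N, hN⟩ := U_unbounded μ ξ k hmeas hindep hident hbdd hvar hmean (1 / (1 - r) + 1)
  linarith [hbnd N]

end cheb

section final

variable (μ : Measure Ω) [IsProbabilityMeasure μ] (ξ : ℕ → Ω → ℤ) (k : ℕ)
  (hmeas : ∀ n, Measurable (ξ n))
  (hindep : ProbabilityTheory.iIndepFun ξ μ)
  (hident : ∀ n, ProbabilityTheory.IdentDistrib (ξ n) (ξ 0) μ μ)
  (hbdd : ∀ᵐ ω ∂μ, |ξ 0 ω| ≤ (k : ℤ))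

include hmeas in
lemma measurableSet_Bev (m : ℕ) : MeasurableSet (Bev ξ m) := by
  have : Bev ξ m = ⋃ n ∈ {n : ℕ | 1 ≤ n},
      {ω | ∑ i ∈ Finset.range n, ξ (m + i) ω = 0} := by
    ext ω
    simp only [Bev, Set.mem_setOf_eq, Set.mem_iUnion, exists_prop]
  rw [this]
  exact MeasurableSet.biUnion (Set.to_countable _) fun n _ =>
    (Finset.measurable_sum _ fun i _ => hmeas (m + i)) (measZ {0})

include hmeas hindep hident hbdd in
lemma Bev_one (hvar : 0 < ∫ ω, ((ξ 0 ω : ℤ) : ℝ) ^ 2 ∂μ)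
    (hmean : ∫ ω, ((ξ 0 ω : ℤ) : ℝ) ∂μ = 0) (m : ℕ) : μ (Bev ξ m) = 1 := by
  classical
  set BN : ℕ → ℕ → Set Ω := fun m N =>
    {ω | ∃ n, 1 ≤ n ∧ n ≤ N ∧ ∑ i ∈ Finset.range n, ξ (m + i) ω = 0} with hBN
  -- window event
  set E : (N : ℕ) → Set (Fin N → ℤ) := fun N =>
    {v | ∃ n, 1 ≤ n ∧ n ≤ N ∧
      (∑ i ∈ Finset.range n, if h : i < N then v ⟨i, h⟩ else 0) = 0} with hE
  have hEmeas : ∀ N, MeasurableSet (E N) := by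
    intro N
    have hg : ∀ n, Measurable (fun v : Fin N → ℤ =>
        ∑ i ∈ Finset.range n, if h : i < N then v ⟨i, h⟩ else 0) := by
      intro n
      refine Finset.measurable_sum _ fun i _ => ?_
      by_cases h : i < N
      · simpa [h] using measurable_pi_apply (⟨i, h⟩ : Fin N)
      · simpa [h] using measurable_const
    have : E N = ⋃ n ∈ {n : ℕ | 1 ≤ n ∧ n ≤ N}, (fun v : Fin N → ℤ =>
        ∑ i ∈ Finset.range n, if h : i < N then v ⟨i, h⟩ else 0) ⁻¹' {0} := by
      ext v
      simp only [hE, Set.mem_setOf_eq, Set.mem_iUnion, Set.mem_preimage,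
        Set.mem_singleton_iff, exists_prop]
      tauto
    rw [this]
    exact MeasurableSet.biUnion (Set.to_countable _) fun n _ => (hg n) (measZ {0})
  have hsum_eq : ∀ (m N n : ℕ), n ≤ N → ∀ ω,
      (∑ i ∈ Finset.range n, if h : i < N then (fun j : Fin N => ξ (m + j) ω) ⟨i, h⟩ else 0)
        = ∑ i ∈ Finset.range n, ξ (m + i) ω := by
    intro m N n hnN ω
    refine Finset.sum_congr rfl fun i hi => ?_
    have hiN : i < N := lt_of_lt_of_le (Finset.mem_range.1 hi) hnN
    simp [hiN]
  have hwin : ∀ m N, BN m N = (fun ω (i : Fin N) => ξ (m + i) ω) ⁻¹' E N := by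
    intro m N
    ext ω
    simp only [hBN, hE, Set.mem_setOf_eq, Set.mem_preimage]
    constructor
    · rintro ⟨n, h1, h2, h3⟩
      exact ⟨n, h1, h2, by rw [hsum_eq m N n h2 ω]; exact h3⟩
    · rintro ⟨n, h1, h2, h3⟩
      rw [hsum_eq m N n h2 ω] at h3
      exact ⟨n, h1, h2, h3⟩
  have hshift : ∀ N, μ (BN m N) = μ (BN 0 N) := by
    intro N
    rw [hwin m N, hwin 0 N]
    have := shift_event μ ξ hmeas hindep hident (E N) (hEmeas N) m
    have h0 := shift_event μ ξ hmeas hindep hident (E N) (hEmeas N) 0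
    rw [show (fun ω (i : Fin N) => ξ (m + i) ω) ⁻¹' E N
      = {ω | (fun i : Fin N => ξ (m + i) ω) ∈ E N} from rfl,
      show (fun ω (i : Fin N) => ξ (0 + i) ω) ⁻¹' E N
      = {ω | (fun i : Fin N => ξ (0 + i) ω) ∈ E N} from rfl]
    rw [this, ← h0]
  have hmono : ∀ m, Monotone (BN m) := by
    intro m N N' hNN'
    rintro ω ⟨n, h1, h2, h3⟩
    exact ⟨n, h1, le_trans h2 hNN', h3⟩
  have hunion : ∀ m, (⋃ N, BN m N) = Bev ξ m := by
    intro m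
    ext ω
    simp only [Set.mem_iUnion, hBN, Set.mem_setOf_eq, Bev]
    constructor
    · rintro ⟨N, n, h1, h2, h3⟩; exact ⟨n, h1, h3⟩
    · rintro ⟨n, h1, h3⟩; exact ⟨n, n, h1, le_rfl, h3⟩
  have hsup : ∀ m, μ (Bev ξ m) = ⨆ N, μ (BN m N) := by
    intro m
    rw [← hunion m]
    exact Directed.measure_iUnion ((hmono m).directed_le)
  have hB0 : Bev ξ 0 = R ξ := by
    ext ω
    simp only [Bev, R, Set.mem_setOf_eq, zero_add, S]
  rw [hsup m]
  have : ∀ N, μ (BN m N) = μ (BN 0 N) := hshift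
  simp_rw [this]
  rw [← hsup 0, hB0]
  exact return_one μ ξ k hmeas hindep hident hbdd hvar hmean

end final

end Stmt5Aux

/-- A random walk on ℤ with i.i.d. bounded increments of mean zero and positive
variance is recurrent: state 0 is visited infinitely often almost surely. -/
theorem stmt_5 {Ω : Type*} [MeasurableSpace Ω] (μ : Measure Ω) [IsProbabilityMeasure μ]
    (k : ℕ) (ξ : ℕ → Ω → ℤ) (hmeas : ∀ n, Measurable (ξ n))
    (hindep : ProbabilityTheory.iIndepFun ξ μ)
    (hident : ∀ n, ProbabilityTheory.IdentDistrib (ξ n) (ξ 0) μ μ)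
    (hbdd : ∀ᵐ ω ∂μ, |ξ 0 ω| ≤ (k : ℤ))
    (hmean : ∫ ω, ((ξ 0 ω : ℤ) : ℝ) ∂μ = 0)
    (hvar : 0 < ∫ ω, (((ξ 0 ω : ℤ) : ℝ)) ^ 2 ∂μ) :
    ∀ᵐ ω ∂μ, {n : ℕ | ∑ i ∈ Finset.range n, ξ i ω = 0}.Infinite := by
  have hBone : ∀ m, μ (Stmt5Aux.Bev ξ m) = 1 :=
    fun m => Stmt5Aux.Bev_one μ ξ k hmeas hindep hident hbdd hvar hmean m
  have hae : ∀ᵐ ω ∂μ, ∀ m, ω ∈ Stmt5Aux.Bev ξ m := by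
    rw [MeasureTheory.ae_all_iff]
    intro m
    rw [MeasureTheory.ae_iff]
    have hc : {ω | ¬ ω ∈ Stmt5Aux.Bev ξ m} = (Stmt5Aux.Bev ξ m)ᶜ := rfl
    rw [hc, prob_compl_eq_one_sub (Stmt5Aux.measurableSet_Bev ξ hmeas m), hBone m, tsub_self]
  filter_upwards [hae] with ω hω
  -- from each Bev, find a later return to the current value
  have hstep : ∀ m, ∃ n' > m, Stmt5Aux.S ξ n' ω = Stmt5Aux.S ξ m ω := by
    intro m
    obtain ⟨n, hn1, hn0⟩ := hω m
    refine ⟨m + n, by omega, ?_⟩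
    have hsplit : Stmt5Aux.S ξ m ω + ∑ i ∈ Finset.Ico m (m + n), ξ i ω
        = Stmt5Aux.S ξ (m + n) ω := by
      rw [Stmt5Aux.S, Stmt5Aux.S, Finset.range_eq_Ico, Finset.range_eq_Ico]
      exact Finset.sum_Ico_consecutive (fun i => ξ i ω) (Nat.zero_le m) (by omega)
    have hIco : ∑ i ∈ Finset.Ico m (m + n), ξ i ω = 0 := by
      rw [Finset.sum_Ico_eq_sum_range]
      simpa using hn0
    rw [← hsplit, hIco, add_zero]
  have hclaim : ∀ N, ∃ n ≥ N, Stmt5Aux.S ξ n ω = 0 := by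
    intro N
    induction N with
    | zero => exact ⟨0, le_rfl, by simp [Stmt5Aux.S]⟩
    | succ N ih =>
      obtain ⟨n, hn, h0⟩ := ih
      obtain ⟨n', hn', h0'⟩ := hstep n
      exact ⟨n', by omega, by rw [h0', h0]⟩
  by_contra hfin
  rw [Set.not_infinite] at hfin
  obtain ⟨b, hb⟩ := hfin.bddAbove
  obtain ⟨n, hn, h0⟩ := hclaim (b + 1)
  have : n ≤ b := hb h0
  omega
end

section
/- Let P be the transition matrix of a recurrent irreducible Markov chain on a countable state space S. If m = (m_i)_{i ∈ S} is a nonzero complex-valued vector with mP = m and Σ_{i∈S} m_i absolutely convergent, then Σ_{i∈S} m_i ≠ 0 and (Σ_{i∈S} m_i)^{-1} m is the unique stationary distribution of the chain. -/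
open scoped Classical

/-- n-step transition "matrix" of a Markov chain on a countable state space. -/
noncomputable def iterP {S : Type*} (P : S → S → ℝ) : ℕ → S → S → ℝ
  | 0 => fun i j => if i = j then 1 else 0
  | (n + 1) => fun i j => ∑' l, iterP P n i l * P l j


lemma iterP_nonneg {S : Type*} (P : S → S → ℝ) (hnn : ∀ i j, 0 ≤ P i j) :
    ∀ n i j, 0 ≤ iterP P n i j := by
  intro n
  induction n with
  | zero => intro i j; simp only [iterP]; split <;> norm_num
  | succ n ih =>
    intro i j
    exact tsum_nonneg fun l => mul_nonneg (ih i l) (hnn l j)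

lemma iterP_path {S : Type*} (P : S → S → ℝ) (hnn : ∀ i j, 0 ≤ P i j) :
    ∀ n i j, 0 < iterP P n i j → Relation.ReflTransGen (fun a b => 0 < P a b) i j := by
  intro n
  induction n with
  | zero =>
    intro i j h
    simp only [iterP] at h
    split at h
    · subst ‹i = j›; exact Relation.ReflTransGen.refl
    · norm_num at h
  | succ n ih =>
    intro i j h
    simp only [iterP] at h
    by_contra hc
    have hz : ∀ l, iterP P n i l * P l j = 0 := by
      intro l
      by_contra hl
      have hP : 0 < P l j :=
        lt_of_le_of_ne (hnn l j) (fun e => hl (by rw [← e, mul_zero]))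
      have hI : 0 < iterP P n i l :=
        lt_of_le_of_ne (iterP_nonneg P hnn n i l)
          (by intro e; exact hl (by rw [← e, zero_mul]))
      exact hc ((ih i l hI).tail hP)
    rw [show (fun l => iterP P n i l * P l j) = fun _ => (0:ℝ) from funext hz,
      tsum_zero] at h
    exact lt_irrefl 0 h

lemma real_of_re_eq_abs {z : ℂ} (h : z.re = ‖z‖) : z = (‖z‖ : ℂ) := by
  have h2 := Complex.sq_norm z
  rw [Complex.normSq_apply] at h2
  rw [← h] at h2
  have h5 : z.im * z.im = 0 := by nlinarith
  have him : z.im = 0 := mul_self_eq_zero.mp h5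
  apply Complex.ext <;> simp [← h, him]

lemma align {ι : Type*} {f : ι → ℂ} {a : ℂ} (hf : HasSum f a) (ha : a ≠ 0)
    (hs : Summable fun i => ‖f i‖)
    (heq : ∑' i, ‖f i‖ = ‖a‖) :
    ∀ i, f i = (a / ‖a‖) * ‖f i‖ := by
  have haa : (0:ℝ) < ‖a‖ := norm_pos_iff.mpr ha
  set u : ℂ := (starRingEnd ℂ) a / (‖a‖ : ℂ) with hu
  have habs_u : ‖u‖ = 1 := by
    rw [hu, norm_div, Complex.norm_conj, Complex.norm_real, Real.norm_eq_abs, abs_of_pos haa, div_self haa.ne']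
  have hua : u * a = (‖a‖ : ℂ) := by
    rw [hu, div_mul_eq_mul_div, mul_comm, Complex.mul_conj, ← Complex.sq_norm]
    push_cast
    rw [sq, mul_div_assoc, div_self (by exact_mod_cast haa.ne'), mul_one]
  have hg : HasSum (fun i => (u * f i).re) (‖a‖) := by
    have := Complex.hasSum_re (hf.mul_left u)
    rwa [hua, Complex.ofReal_re] at this
  have hle : ∀ i, (u * f i).re ≤ ‖f i‖ := by
    intro i
    calc (u * f i).re ≤ ‖u * f i‖ := Complex.re_le_norm _
    _ = ‖f i‖ := by rw [norm_mul, habs_u, one_mul]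
  have hdiff : ∀ i, ‖f i‖ - (u * f i).re = 0 := by
    intro i
    have hsum0 : HasSum (fun i => ‖f i‖ - (u * f i).re) 0 := by
      have := hs.hasSum.sub hg
      rwa [heq, sub_self] at this
    have h1 : ‖f i‖ - (u * f i).re ≤ 0 := by
      have := le_hasSum hsum0 i (fun j _ => sub_nonneg.mpr (hle j))
      linarith [this]
    linarith [sub_nonneg.mpr (hle i)]
  intro i
  have h3 : (u * f i).re = ‖u * f i‖ := by
    have := hdiff i
    rw [norm_mul, habs_u, one_mul]
    linarith
  have h4 : u * f i = (‖f i‖ : ℂ) := by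
    have := real_of_re_eq_abs h3
    rwa [norm_mul, habs_u, one_mul] at this
  have hu0 : u ≠ 0 := by
    intro h; rw [h, norm_zero] at habs_u; norm_num at habs_u
  have h6 : u * (a / (‖a‖ : ℂ)) = 1 := by
    rw [mul_div_assoc', hua, div_self]
    exact_mod_cast haa.ne'
  have h5 : a / (‖a‖ : ℂ) = u⁻¹ := eq_inv_of_mul_eq_one_left (by
    rw [mul_comm] at h6; exact h6)
  rw [h5, ← h4, inv_mul_cancel_left₀ hu0]

lemma core {S : Type*} [Countable S] (P : S → S → ℝ)
    (hnn : ∀ i j, 0 ≤ P i j) (hrow : ∀ i, HasSum (P i) 1)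
    (hirr : ∀ i j, ∃ n, 0 < iterP P n i j)
    (m : S → ℂ) (hm0 : m ≠ 0)
    (hstat : ∀ j, HasSum (fun i => m i * (P i j : ℂ)) (m j))
    (habs : Summable (fun i => ‖m i‖)) :
    ∃ u : ℂ, ‖u‖ = 1 ∧ (∀ i, m i = u * ‖m i‖) ∧
      (∀ i, 0 < ‖m i‖) ∧
      (∀ j, HasSum (fun i => ‖m i‖ * P i j) (‖m j‖)) := by
  set ν : S → ℝ := fun i => ‖m i‖ with hν
  have hνnn : ∀ i, 0 ≤ ν i := fun i => norm_nonneg _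
  have hPle1 : ∀ i j, P i j ≤ 1 := fun i j => le_hasSum (hrow i) j (fun k _ => hnn i k)
  -- columnwise summability
  have hscol : ∀ j, Summable (fun i => ν i * P i j) := by
    intro j
    apply Summable.of_nonneg_of_le (fun i => mul_nonneg (hνnn i) (hnn i j))
      (fun i => by
        calc ν i * P i j ≤ ν i * 1 := mul_le_mul_of_nonneg_left (hPle1 i j) (hνnn i)
        _ = ν i := mul_one _) habs
  -- product summability
  have hF : Summable (fun p : S × S => ν p.1 * P p.1 p.2) := by
    apply (summable_prod_of_nonneg (fun p => mul_nonneg (hνnn p.1) (hnn p.1 p.2))).2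
    refine ⟨fun i => ((hrow i).summable).mul_left (ν i), ?_⟩
    apply Summable.congr habs
    intro i
    rw [show (fun y => ν (i, y).1 * P (i, y).1 (i, y).2) = fun y => ν i * P i y from rfl, tsum_mul_left, (hrow i).tsum_eq, mul_one]
  -- marginal in j summable
  have hTs : Summable (fun j => ∑' i, ν i * P i j) := by
    have h1 : Summable (fun p : S × S => ν p.2 * P p.2 p.1) := by
      have := hF.prod_symm
      exact this.congr (fun p => rfl)
    exact ((summable_prod_of_nonneg (fun p => mul_nonneg (hνnn p.2) (hnn p.2 p.1))).1 h1).2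
  -- total sums agree
  have htot : ∑' j, (∑' i, ν i * P i j) = ∑' i, ν i := by
    have := Summable.tsum_comm' (f := fun i j => ν i * P i j) hF
      (fun i => ((hrow i).summable).mul_left (ν i)) (fun j => hscol j)
    rw [this]
    apply tsum_congr
    intro i
    rw [tsum_mul_left, (hrow i).tsum_eq, mul_one]
  -- pointwise inequality
  have habs_term : ∀ i j, ‖m i * (P i j : ℂ)‖ = ν i * P i j := by
    intro i j
    rw [norm_mul, Complex.norm_real, Real.norm_eq_abs, abs_of_nonneg (hnn i j)]
  have hineq : ∀ j, ν j ≤ ∑' i, ν i * P i j := by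
    intro j
    have hsn : Summable fun i => ‖m i * (P i j : ℂ)‖ := by
      apply Summable.congr (hscol j)
      intro i
      rw [habs_term]
    have h1 : ‖m j‖ ≤ ∑' i, ‖m i * (P i j : ℂ)‖ := by
      rw [← (hstat j).tsum_eq]
      exact norm_tsum_le_tsum_norm hsn
    calc ν j = ‖m j‖ := rfl
    _ ≤ ∑' i, ‖m i * (P i j : ℂ)‖ := h1
    _ = ∑' i, ν i * P i j := tsum_congr (fun i => by rw [habs_term])
  -- equality
  have hT : ∀ j, ∑' i, ν i * P i j = ν j := by
    have hsum0 : HasSum (fun j => (∑' i, ν i * P i j) - ν j) 0 := by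
      have := hTs.hasSum.sub habs.hasSum
      rwa [htot, sub_self] at this
    intro j
    have h1 := le_hasSum hsum0 j (fun k _ => sub_nonneg.mpr (hineq k))
    have h2 := sub_nonneg.mpr (hineq j)
    linarith
  have hstatν : ∀ j, HasSum (fun i => ν i * P i j) (ν j) := fun j => (hT j) ▸ (hscol j).hasSum
  -- positivity
  obtain ⟨i0, hi0⟩ : ∃ i, m i ≠ 0 := by
    by_contra hc; push_neg at hc; exact hm0 (funext hc)
  have hν0 : 0 < ν i0 := norm_pos_iff.mpr hi0
  have hprop : ∀ a b, Relation.ReflTransGen (fun x y => 0 < P x y) a b → 0 < ν a → 0 < ν b := by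
    intro a b hab
    induction hab with
    | refl => exact id
    | @tail b' c h1 h2 ih =>
      intro ha
      have hb := ih ha
      have h3 := le_hasSum (hstatν c) b' (fun k _ => mul_nonneg (hνnn k) (hnn k c))
      exact lt_of_lt_of_le (mul_pos hb h2) h3
  have hpos : ∀ j, 0 < ν j := by
    intro j
    obtain ⟨n, hn⟩ := hirr i0 j
    exact hprop _ _ (iterP_path P hnn n _ _ hn) hν0
  have hmne : ∀ j, m j ≠ 0 := by
    intro j h
    have := hpos j
    rw [hν] at this
    simp only [h, norm_zero] at this
    exact lt_irrefl 0 this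
  have hνC : ∀ i, ((ν i : ℝ) : ℂ) ≠ 0 := fun i => by exact_mod_cast (hpos i).ne'
  -- alignment along edges
  have halign : ∀ j i, 0 < P i j → m i / (ν i : ℂ) = m j / (ν j : ℂ) := by
    intro j i hij
    have hsn : Summable fun i => ‖m i * (P i j : ℂ)‖ := by
      apply Summable.congr (hscol j)
      intro i
      rw [habs_term]
    have heq : ∑' i, ‖m i * (P i j : ℂ)‖ = ‖m j‖ := by
      rw [tsum_congr (fun i => habs_term i j), hT j]
    have key := align (hstat j) (hmne j) hsn heq i
    rw [habs_term] at key
    have key2 : m i * (P i j : ℂ) = (m j / (ν j : ℂ)) * (ν i : ℂ) * (P i j : ℂ) := by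
      rw [key]
      push_cast
      ring
    have hPij : ((P i j : ℝ) : ℂ) ≠ 0 := by exact_mod_cast hij.ne'
    have key3 : m i = (m j / (ν j : ℂ)) * (ν i : ℂ) := mul_right_cancel₀ hPij key2
    rw [key3]
    rw [mul_div_assoc, div_self (hνC i), mul_one]
  have hconst : ∀ a b, Relation.ReflTransGen (fun x y => 0 < P x y) a b →
      m a / (ν a : ℂ) = m b / (ν b : ℂ) := by
    intro a b h
    induction h with
    | refl => rfl
    | @tail b' c h1 h2 ih => rw [ih]; exact halign c b' h2
  set u : ℂ := m i0 / (ν i0 : ℂ) with hu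
  have hmu : ∀ i, m i = u * (ν i : ℂ) := by
    intro i
    obtain ⟨n, hn⟩ := hirr i0 i
    have := hconst i0 i (iterP_path P hnn n _ _ hn)
    rw [hu, this, div_mul_cancel₀ _ (hνC i)]
  refine ⟨u, ?_, hmu, hpos, hstatν⟩
  rw [hu, norm_div, Complex.norm_real, Real.norm_eq_abs, abs_of_pos hν0]
  exact div_self hν0.ne'

lemma myHasSumCongr {ι α : Type*} [AddCommMonoid α] [TopologicalSpace α] {f g : ι → α} {a : α}
    (h : HasSum f a) (he : ∀ i, f i = g i) : HasSum g a := (funext he : f = g) ▸ h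

/-- For a recurrent irreducible Markov chain on a countable state space, any nonzero
complex stationary vector m with absolutely convergent sum has nonzero total sum, and
m normalized by its sum is the unique stationary distribution. -/
theorem stmt_7 {S : Type*} [Countable S] (P : S → S → ℝ)
    (hnn : ∀ i j, 0 ≤ P i j) (hrow : ∀ i, HasSum (P i) 1)
    (hirr : ∀ i j, ∃ n, 0 < iterP P n i j)
    (hrec : ∀ i, ¬ Summable (fun n => iterP P n i i))
    (m : S → ℂ) (hm0 : m ≠ 0)
    (hstat : ∀ j, HasSum (fun i => m i * (P i j : ℂ)) (m j))
    (habs : Summable (fun i => ‖m i‖)) :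
    (∑' i, m i) ≠ 0 ∧
    (∀ i, (m i / ∑' l, m l).im = 0) ∧
    (∀ i, 0 ≤ (m i / ∑' l, m l).re) ∧
    HasSum (fun i => (m i / ∑' l, m l).re) 1 ∧
    (∀ j, HasSum (fun i => (m i / ∑' l, m l).re * P i j) ((m j / ∑' l, m l).re)) ∧
    (∀ ρ : S → ℝ, (∀ i, 0 ≤ ρ i) → HasSum ρ 1 →
      (∀ j, HasSum (fun i => ρ i * P i j) (ρ j)) →
      ∀ i, ρ i = (m i / ∑' l, m l).re) := by
  obtain ⟨u, hu1, hmu, hpos, hstatν⟩ := core P hnn hrow hirr m hm0 hstat habs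
  set ν : S → ℝ := fun i => ‖m i‖ with hν
  set A : ℝ := ∑' i, ν i with hA
  obtain ⟨i1, hi1⟩ : ∃ i, m i ≠ 0 := by
    by_contra hc; push_neg at hc; exact hm0 (funext hc)
  have hApos : 0 < A :=
    lt_of_lt_of_le (hpos i1) (Summable.le_tsum habs i1 (fun j _ => norm_nonneg _))
  have hune : u ≠ 0 := by
    intro h; rw [h, norm_zero] at hu1; norm_num at hu1
  have hAC : ((A : ℝ) : ℂ) ≠ 0 := by exact_mod_cast hApos.ne'
  have hsum_m : HasSum m (u * A) := by
    have h1 : HasSum (fun i => ((ν i : ℝ) : ℂ)) ((A : ℝ) : ℂ) :=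
      Complex.hasSum_ofReal.mpr habs.hasSum
    exact myHasSumCongr (h1.mul_left u) (fun i => (hmu i).symm)
  have hSig : ∑' i, m i = u * A := hsum_m.tsum_eq
  have hSigne : (∑' i, m i) ≠ 0 := by
    rw [hSig]; exact mul_ne_zero hune hAC
  have hdiv : ∀ i, m i / (∑' l, m l) = ((ν i / A : ℝ) : ℂ) := by
    intro i
    rw [hSig, hmu i, mul_div_mul_left _ _ hune, Complex.ofReal_div]
  have hre : ∀ i, (m i / ∑' l, m l).re = ν i / A := by
    intro i; rw [hdiv i, Complex.ofReal_re]
  refine ⟨hSigne, fun i => by rw [hdiv i, Complex.ofReal_im], ?_, ?_, ?_, ?_⟩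
  · intro i
    rw [hre i]
    exact div_nonneg (norm_nonneg _) hApos.le
  · have h1 : HasSum (fun i => ν i / A) 1 := by
      have := habs.hasSum.div_const A
      rwa [← hA, div_self hApos.ne'] at this
    exact myHasSumCongr h1 (fun i => (hre i).symm)
  · intro j
    have h1 : HasSum (fun i => ν i / A * P i j) (ν j / A) := by
      have := (hstatν j).div_const A
      exact myHasSumCongr this (fun i => by rw [div_mul_eq_mul_div, mul_div_right_comm])
    rw [hre j]
    exact myHasSumCongr h1 (fun i => by rw [hre i])
  · intro ρ hρnn hρ1 hρstat i
    by_contra hne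
    rw [hre i] at hne
    set μ : S → ℝ := fun k => ρ k - ν k / A with hμ
    have hπsum : HasSum (fun k => ν k / A) 1 := by
      have := habs.hasSum.div_const A
      rwa [← hA, div_self hApos.ne'] at this
    have hμsum : HasSum μ 0 := by
      have := hρ1.sub hπsum
      rwa [sub_self] at this
    have hπstat : ∀ j, HasSum (fun k => ν k / A * P k j) (ν j / A) := by
      intro j
      have := (hstatν j).div_const A
      exact myHasSumCongr this (fun k => by rw [div_mul_eq_mul_div, mul_div_right_comm])
    have hμstat : ∀ j, HasSum (fun k => μ k * P k j) (μ j) := by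
      intro j
      have := (hρstat j).sub (hπstat j)
      exact myHasSumCongr this (fun k => by rw [hμ]; ring)
    set mc : S → ℂ := fun k => ((μ k : ℝ) : ℂ) with hmc
    have hmc0 : mc ≠ 0 := by
      intro h
      apply hne
      have := congrFun h i
      rw [hmc] at this
      simp only [Pi.zero_apply, Complex.ofReal_eq_zero] at this
      exact sub_eq_zero.mp this
    have hmcstat : ∀ j, HasSum (fun k => mc k * (P k j : ℂ)) (mc j) := by
      intro j
      have h1 : HasSum (fun k => ((μ k * P k j : ℝ) : ℂ)) ((μ j : ℝ) : ℂ) :=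
        Complex.hasSum_ofReal.mpr (hμstat j)
      exact myHasSumCongr h1 (fun k => by push_cast; ring)
    have hμsummable : Summable μ := hμsum.summable
    have hmcabs : Summable fun k => ‖mc k‖ := by
      have h1 : Summable fun k => |μ k| := summable_abs_iff.mpr hμsummable
      exact Summable.congr h1 (fun k => by rw [hmc]; exact (Complex.norm_real _).symm)
    obtain ⟨w, hw1, hmw, hwpos, _⟩ := core P hnn hrow hirr mc hmc0 hmcstat hmcabs
    set B : ℝ := ∑' k, ‖mc k‖ with hB
    have hBpos : 0 < B :=
      lt_of_lt_of_le (hwpos i) (Summable.le_tsum hmcabs i (fun j _ => norm_nonneg _))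
    have hwne : w ≠ 0 := by
      intro h; rw [h, norm_zero] at hw1; norm_num at hw1
    have hsum1 : HasSum mc (w * B) := by
      have h1 : HasSum (fun k => ((‖mc k‖ : ℝ) : ℂ)) ((B : ℝ) : ℂ) :=
        Complex.hasSum_ofReal.mpr hmcabs.hasSum
      exact myHasSumCongr (h1.mul_left w) (fun k => (hmw k).symm)
    have hsum2 : HasSum mc 0 := by
      have h2 : HasSum (fun k => ((μ k : ℝ) : ℂ)) (((0:ℝ) : ℝ) : ℂ) :=
        Complex.hasSum_ofReal.mpr hμsum
      rw [Complex.ofReal_zero] at h2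
      exact h2
    have : w * B = 0 := hsum1.unique hsum2
    rcases mul_eq_zero.mp this with h | h
    · exact hwne h
    · rw [Complex.ofReal_eq_zero] at h
      exact hBpos.ne' h
end

section
/- Let m be a complex-valued stationary vector (mP = m) for a recurrent irreducible countable-state Markov chain with Σ_i |m_i| < ∞ and m ≠ 0. Then the real part Re(m) satisfies: either Re(m_i) ≥ 0 for all i, or Re(m_i) ≤ 0 for all i. (The same holds for the imaginary part.) -/
open scoped Classical

/-- Key real lemma: a summable real stationary vector for an irreducible chain has
constant sign. -/
lemma key_real {S : Type*} [Countable S] (P : S → S → ℝ)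
    (hnn : ∀ i j, 0 ≤ P i j) (hrow : ∀ i, HasSum (P i) 1)
    (hirr : ∀ i j, ∃ n, 0 < iterP P n i j)
    (f : S → ℝ)
    (hstat : ∀ j, HasSum (fun i => f i * P i j) (f j))
    (habs : Summable (fun i => |f i|)) :
    (∀ i, 0 ≤ f i) ∨ (∀ i, f i ≤ 0) := by
  have hP1 : ∀ i j, P i j ≤ 1 := fun i j =>
    le_hasSum (hrow i) j (fun k _ => hnn i k)
  -- row sums of |f i| * P i j
  have hgP_sum : ∀ i, HasSum (fun j => |f i| * P i j) (|f i|) := by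
    intro i
    simpa using (hrow i).mul_left (|f i|)
  -- columns are summable
  have hcol_sum : ∀ j, Summable (fun i => |f i| * P i j) := by
    intro j
    refine Summable.of_nonneg_of_le (fun i => mul_nonneg (abs_nonneg _) (hnn i j))
      (fun i => ?_) habs
    calc |f i| * P i j ≤ |f i| * 1 :=
          mul_le_mul_of_nonneg_left (hP1 i j) (abs_nonneg _)
      _ = |f i| := mul_one _
  set t : S → ℝ := fun j => ∑' i, |f i| * P i j with ht
  -- |f j| ≤ t j
  have habs_le_t : ∀ j, |f j| ≤ t j := by
    intro j
    have h1 : |f j| = |∑' i, f i * P i j| := by rw [(hstat j).tsum_eq]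
    have h2 : |∑' i, f i * P i j| ≤ ∑' i, ‖f i * P i j‖ := by
      have hs : Summable fun i => ‖f i * P i j‖ := by
        simpa [Real.norm_eq_abs, abs_mul, abs_of_nonneg (hnn _ j)] using hcol_sum j
      simpa [Real.norm_eq_abs] using norm_tsum_le_tsum_norm hs
    have h3 : (∑' i, ‖f i * P i j‖) = t j := by
      simp [Real.norm_eq_abs, abs_mul, abs_of_nonneg (hnn _ j), ht]
    rw [h1]; rw [h3] at h2; exact h2
  -- full product summability
  have hFprod : Summable (fun p : S × S => |f p.1| * P p.1 p.2) := by
    refine (summable_prod_of_nonneg ?_).mpr ⟨fun i => (hgP_sum i).summable, ?_⟩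
    · intro p; exact mul_nonneg (abs_nonneg _) (hnn _ _)
    · simpa only [fun i => (hgP_sum i).tsum_eq] using habs
  -- Fubini : ∑ t = ∑ |f|
  have hfub : ∑' j, t j = ∑' i, |f i| := by
    have := Summable.tsum_comm (f := fun i j => |f i| * P i j) hFprod
    -- this : ∑' j i, ... = ∑' i j, ...
    rw [ht]
    simp only [fun i => (hgP_sum i).tsum_eq] at this
    exact this
  -- t summable
  have ht_summable : Summable t := by
    have hswap : Summable (fun p : S × S => |f p.2| * P p.2 p.1) :=
      (Equiv.prodComm S S).summable_iff.mpr hFprod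
    have := ((summable_prod_of_nonneg
      (f := fun p : S × S => |f p.2| * P p.2 p.1)
      (fun p => mul_nonneg (abs_nonneg _) (hnn _ _))).mp hswap).2
    simpa [ht] using this
  -- pointwise equality t = |f|
  have hteq : ∀ j, t j = |f j| := by
    by_contra h
    push_neg at h
    obtain ⟨j0, hj0⟩ := h
    have hlt : |f j0| < t j0 := lt_of_le_of_ne (habs_le_t j0) (Ne.symm hj0)
    have : (∑' j, |f j|) < ∑' j, t j :=
      Summable.tsum_lt_tsum habs_le_t hlt habs ht_summable
    rw [hfub] at this
    exact lt_irrefl _ this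
  -- the nonnegative stationary vector h = |f| - f
  set h : S → ℝ := fun i => |f i| - f i with hdef
  have hh_nonneg : ∀ i, 0 ≤ h i := fun i => sub_nonneg.mpr (le_abs_self _)
  have hh_stat : ∀ j, HasSum (fun i => h i * P i j) (h j) := by
    intro j
    have h1 : HasSum (fun i => |f i| * P i j) (|f j|) := by
      have := (hcol_sum j).hasSum
      rwa [show (∑' i, |f i| * P i j) = |f j| from hteq j] at this
    have := h1.sub (hstat j)
    simpa [hdef, sub_mul] using this
  -- positivity propagates one step
  have hstep : ∀ i j, 0 < h i → 0 < P i j → 0 < h j := by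
    intro i j hi hp
    have hle : h i * P i j ≤ h j := by
      rw [← (hh_stat j).tsum_eq]
      exact Summable.le_tsum (hh_stat j).summable i
        (fun k _ => mul_nonneg (hh_nonneg k) (hnn k j))
    exact lt_of_lt_of_le (mul_pos hi hp) hle
  -- positivity propagates along iterP
  have hprop : ∀ n b, 0 < h b → ∀ a, 0 < iterP P n b a → 0 < h a := by
    intro n
    induction n with
    | zero =>
        intro b hb a ha
        simp only [iterP] at ha
        split_ifs at ha with hba
        · exact hba ▸ hb
        · exact absurd ha (lt_irrefl 0)
    | succ n ih =>
        intro b hb a ha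
        simp only [iterP] at ha
        have hex : ∃ l, 0 < iterP P n b l * P l a := by
          by_contra hc
          push_neg at hc
          have hz : ∀ l, iterP P n b l * P l a = 0 := fun l =>
            le_antisymm (hc l) (mul_nonneg (iterP_nonneg P hnn n b l) (hnn l a))
          rw [tsum_congr hz, tsum_zero] at ha
          exact lt_irrefl 0 ha
        obtain ⟨l, hl⟩ := hex
        have h1 : 0 < iterP P n b l := by
          rcases lt_or_eq_of_le (iterP_nonneg P hnn n b l) with h' | h'
          · exact h'
          · exfalso; rw [← h'] at hl; simp at hl
        have h2 : 0 < P l a := by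
          rcases lt_or_eq_of_le (hnn l a) with h' | h'
          · exact h'
          · exfalso; rw [← h'] at hl; simp at hl
        exact hstep l a (ih b hb l h1) h2
  -- conclude
  by_cases hpos : ∀ i, 0 ≤ f i
  · exact Or.inl hpos
  · push_neg at hpos
    obtain ⟨a, ha⟩ := hpos
    right
    intro i
    by_contra hi
    push_neg at hi
    have hha : 0 < h a := by
      have : f a < |f a| := lt_of_lt_of_le ha (abs_nonneg _)
      simpa [hdef, sub_pos] using this
    obtain ⟨n, hn⟩ := hirr a i
    have : 0 < h i := hprop n a hha i hn
    have hfi : h i = 0 := by simp [hdef, abs_of_pos hi]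
    rw [hfi] at this
    exact lt_irrefl 0 this

/-- For a recurrent irreducible countable-state Markov chain, the real part of any
nonzero absolutely summable complex stationary vector has constant sign (and likewise
for the imaginary part). -/
theorem stmt_8 {S : Type*} [Countable S] (P : S → S → ℝ)
    (hnn : ∀ i j, 0 ≤ P i j) (hrow : ∀ i, HasSum (P i) 1)
    (hirr : ∀ i j, ∃ n, 0 < iterP P n i j)
    (hrec : ∀ i, ¬ Summable (fun n => iterP P n i i))
    (m : S → ℂ) (hm0 : m ≠ 0)
    (hstat : ∀ j, HasSum (fun i => m i * (P i j : ℂ)) (m j))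
    (habs : Summable (fun i => ‖m i‖)) :
    ((∀ i, 0 ≤ (m i).re) ∨ (∀ i, (m i).re ≤ 0)) ∧
    ((∀ i, 0 ≤ (m i).im) ∨ (∀ i, (m i).im ≤ 0)) := by
  constructor
  · refine key_real P hnn hrow hirr (fun i => (m i).re) ?_ ?_
    · intro j
      have := Complex.hasSum_iff (fun i => m i * (P i j : ℂ)) (m j) |>.mp (hstat j) |>.1
      simpa [Complex.mul_re] using this
    · refine Summable.of_nonneg_of_le (fun i => abs_nonneg _) (fun i => ?_) habs
      exact Complex.abs_re_le_norm (m i)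
  · refine key_real P hnn hrow hirr (fun i => (m i).im) ?_ ?_
    · intro j
      have := Complex.hasSum_iff (fun i => m i * (P i j : ℂ)) (m j) |>.mp (hstat j) |>.2
      simpa [Complex.mul_im] using this
    · refine Summable.of_nonneg_of_le (fun i => abs_nonneg _) (fun i => ?_) habs
      exact Complex.abs_im_le_norm (m i)
end

section
/- Let p_j, q_j (1 ≤ j ≤ k) be nonnegative with Σ(p_j + q_j) = 1, maximal rightward index k_p, maximal leftward index k_q, mean μ = Σ j(p_j − q_j) < 0, and gcd{j : p_j+q_j>0} = 1. Then the polynomial χ̃(z) = −z^{k_q} + Σ_{j=1}^{k_p} p_j z^{k_q + j} + Σ_{j=1}^{k_q} q_j z^{k_q − j} has exactly k_q roots (with multiplicity) of absolute value ≤ 1, and these all have absolute value strictly less than 1 except for the root z = 1. -/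
open scoped Classical

/-- The polynomial χ̃(z) = −z^{k_q} + Σ_j p_j z^{k_q+j} + Σ_j q_j z^{k_q−j}. -/
noncomputable def chiTilde (k kq : ℕ) (p q : ℕ → ℝ) : Polynomial ℂ :=
  (∑ j ∈ Finset.Icc 1 k, Polynomial.C ((p j : ℝ) : ℂ) * Polynomial.X ^ (kq + j)) +
    (∑ j ∈ Finset.Icc 1 kq, Polynomial.C ((q j : ℝ) : ℂ) * Polynomial.X ^ (kq - j)) -
    Polynomial.X ^ kq

namespace Stmt11Aux

open Polynomial Filter Topology


lemma multiset_exists_min {s : Multiset ℂ} (hs : s ≠ 0) (f : ℂ → ℝ) :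
    ∃ x ∈ s, ∀ y ∈ s, f x ≤ f y := by
  induction s using Multiset.induction_on with
  | empty => exact absurd rfl hs
  | cons a t ih =>
    rcases eq_or_ne t 0 with rfl | ht
    · exact ⟨a, Multiset.mem_cons_self _ _, by simp⟩
    · obtain ⟨x, hx, hmin⟩ := ih ht
      rcases le_total (f a) (f x) with h | h
      · refine ⟨a, Multiset.mem_cons_self _ _, fun y hy => ?_⟩
        rcases Multiset.mem_cons.mp hy with rfl | hy
        · exact le_refl _
        · exact h.trans (hmin y hy)
      · refine ⟨x, Multiset.mem_cons_of_mem hx, fun y hy => ?_⟩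
        rcases Multiset.mem_cons.mp hy with rfl | hy
        · exact h
        · exact hmin y hy

lemma multiset_le_prod {s : Multiset ℝ} {δ : ℝ} (hδ : 0 ≤ δ) (h : ∀ x ∈ s, δ ≤ x) :
    δ ^ Multiset.card s ≤ s.prod := by
  induction s using Multiset.induction_on with
  | empty => simp
  | cons a t ih =>
    have ha := h a (Multiset.mem_cons_self _ _)
    have ht := ih (fun x hx => h x (Multiset.mem_cons_of_mem hx))
    rw [Multiset.prod_cons, Multiset.card_cons, pow_succ']
    exact mul_le_mul ha ht (pow_nonneg hδ _) (hδ.trans ha)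

lemma rel_count {r : ℂ → ℂ → Prop} {P Q : ℂ → Prop} :
    ∀ {s t : Multiset ℂ}, Multiset.Rel r s t →
      (∀ x y, y ∈ t → r x y → (P x ↔ Q y)) →
      Multiset.card (s.filter P) = Multiset.card (t.filter Q) := by
  intro s t h
  induction h with
  | zero => intro _; simp
  | @cons a b s t hab hst ih =>
    intro hcond
    have hPQ : P a ↔ Q b := hcond a b (Multiset.mem_cons_self _ _) hab
    have ih' := ih (fun x y hy hxy => hcond x y (Multiset.mem_cons_of_mem hy) hxy)
    rw [Multiset.filter_cons, Multiset.filter_cons, Multiset.card_add, Multiset.card_add, ih']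
    congr 1
    by_cases hPa : P a
    · rw [if_pos hPa, if_pos (hPQ.mp hPa)]; simp
    · rw [if_neg hPa, if_neg (fun h => hPa (hPQ.mpr h))]

lemma roots_card (P : Polynomial ℂ) (hP : P ≠ 0) : Multiset.card P.roots = P.natDegree := by
  have := Polynomial.Splits.natDegree_eq_card_roots
    (IsAlgClosed.splits P)
  simpa [Polynomial.map_id] using this.symm

lemma abs_eval (P : Polynomial ℂ) (hP : P ≠ 0) (z : ℂ) :
    ‖P.eval z‖ =
      ‖P.leadingCoeff‖ * ((P.roots.map (fun x => ‖z - x‖)).prod) := by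
  conv_lhs => rw [← Polynomial.C_leadingCoeff_mul_prod_multiset_X_sub_C (roots_card P hP)]
  rw [Polynomial.eval_mul, Polynomial.eval_C, norm_mul]
  congr 1
  rw [Polynomial.eval_multiset_prod, Multiset.map_map, (by intro s; exact map_multiset_prod (normHom (α := ℂ)) s : ∀ s : Multiset ℂ, ‖s.prod‖ = (s.map (fun x => ‖x‖)).prod),
    Multiset.map_map]
  congr 1
  ext x
  simp


lemma eval_tendsto {α : Type} {l : Filter α} {N : ℕ} {P : Polynomial ℂ} {F : α → Polynomial ℂ}
    (hFd : ∀ᶠ a in l, (F a).natDegree ≤ N)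
    (hcoef : ∀ i, Tendsto (fun a => (F a).coeff i) l (𝓝 (P.coeff i)))
    (hPd : P.natDegree ≤ N) (z : ℂ) :
    Tendsto (fun a => (F a).eval z) l (𝓝 (P.eval z)) := by
  have hform : ∀ᶠ a in l, (F a).eval z = ∑ i ∈ Finset.range (N + 1), (F a).coeff i * z ^ i := by
    filter_upwards [hFd] with a ha
    exact Polynomial.eval_eq_sum_range' (Nat.lt_succ_of_le ha) z
  have htarget : P.eval z = ∑ i ∈ Finset.range (N + 1), P.coeff i * z ^ i :=
    Polynomial.eval_eq_sum_range' (Nat.lt_succ_of_le hPd) z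
  rw [htarget]
  exact Tendsto.congr' (hform.mono fun a h => h.symm)
    (tendsto_finset_sum _ fun i _ => (hcoef i).mul tendsto_const_nhds)

lemma roots_tendsto {α : Type} (l : Filter α) :
    ∀ (N : ℕ) (P : Polynomial ℂ) (F : α → Polynomial ℂ),
      P.natDegree = N → P ≠ 0 →
      (∀ᶠ a in l, (F a).natDegree = N) →
      (∀ i, Tendsto (fun a => (F a).coeff i) l (𝓝 (P.coeff i))) →
      ∀ δ, 0 < δ →
      ∀ᶠ a in l, Multiset.Rel (fun x y => ‖x - y‖ < δ) (F a).roots P.roots := by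
  intro N
  induction N with
  | zero =>
    intro P F hPd hP hFd hcoef δ hδ
    filter_upwards [hFd] with a ha
    have h1 : (F a).roots = 0 :=
      Multiset.card_eq_zero.mp (Nat.le_zero.mp (ha ▸ Polynomial.card_roots' (F a)))
    have h2 : P.roots = 0 :=
      Multiset.card_eq_zero.mp (Nat.le_zero.mp (by rw [roots_card P hP, hPd]))
    rw [h1, h2]
    exact Multiset.Rel.zero
  | succ N ih =>
    intro P F hPd hP hFd hcoef δ hδ
    have hc0 : P.coeff (N + 1) ≠ 0 := by
      rw [← hPd]; exact Polynomial.leadingCoeff_ne_zero.mpr hP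
    have hcabs : 0 < ‖P.coeff (N + 1)‖ := by
      simpa using hc0
    -- pick a root r of P
    have hcard : Multiset.card P.roots = N + 1 := by rw [roots_card P hP, hPd]
    have hr0 : P.roots ≠ 0 := by
      intro h; rw [h] at hcard; simp at hcard
    obtain ⟨r, hr⟩ := Multiset.exists_mem_of_ne_zero hr0
    set P1 := P /ₘ (X - C r) with hP1def
    have hfac : (X - C r) * P1 = P :=
      Polynomial.mul_divByMonic_eq_iff_isRoot.mpr (Polynomial.isRoot_of_mem_roots hr)
    have hP1ne : P1 ≠ 0 := fun h => hP (by rw [← hfac, h, mul_zero])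
    have hP1d : P1.natDegree = N := by
      rw [hP1def, Polynomial.natDegree_divByMonic P (Polynomial.monic_X_sub_C r), hPd,
        Polynomial.natDegree_X_sub_C]
      omega
    have hProots : P.roots = r ::ₘ P1.roots := by
      conv_lhs => rw [← hfac]
      rw [Polynomial.roots_mul (hfac.symm ▸ hP), Polynomial.roots_X_sub_C]
      rw [Multiset.singleton_add]
    -- the nearest-root function
    have hFne : ∀ᶠ a in l, (F a).natDegree = N + 1 ∧ F a ≠ 0 ∧ (F a).roots ≠ 0 := by
      filter_upwards [hFd] with a ha
      have hane : F a ≠ 0 := fun h => by simp [h] at ha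
      refine ⟨ha, hane, fun h => ?_⟩
      have := roots_card (F a) hane
      rw [h, ha] at this; simp at this
    set ρ : α → ℂ := fun a =>
      if h : (F a).roots = 0 then 0
      else (multiset_exists_min h (fun x => ‖x - r‖)).choose with hρdef
    have hρmem : ∀ a, (F a).roots ≠ 0 → ρ a ∈ (F a).roots := by
      intro a h
      simp only [hρdef, dif_neg h]
      exact (multiset_exists_min h (fun x => ‖x - r‖)).choose_spec.1
    have hρmin : ∀ a, (h : (F a).roots ≠ 0) →
        ∀ y ∈ (F a).roots, ‖ρ a - r‖ ≤ ‖y - r‖ := by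
      intro a h
      simp only [hρdef, dif_neg h]
      exact (multiset_exists_min h (fun x => ‖x - r‖)).choose_spec.2
    -- ρ tends to r
    have hPr : P.eval r = 0 := Polynomial.isRoot_of_mem_roots hr
    have hevalT : Tendsto (fun a => (F a).eval r) l (𝓝 0) := by
      rw [← hPr]
      exact eval_tendsto (by filter_upwards [hFd] with a ha; exact ha.le) hcoef hPd.le r
    have hleadT : Tendsto (fun a => ‖(F a).coeff (N + 1)‖) l
        (𝓝 (‖P.coeff (N + 1)‖)) :=
      (continuous_norm.tendsto _).comp (hcoef (N + 1))
    have hρtend : Tendsto ρ l (𝓝 r) := by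
      rw [Metric.tendsto_nhds]
      intro ε hε
      have hpos : 0 < ‖P.coeff (N + 1)‖ / 2 * ε ^ (N + 1) := by positivity
      have h1 : ∀ᶠ a in l, ‖(F a).eval r‖ <
          ‖P.coeff (N + 1)‖ / 2 * ε ^ (N + 1) := by
        have := Metric.tendsto_nhds.mp hevalT _ hpos
        filter_upwards [this] with a ha
        simpa [Complex.dist_eq] using ha
      have h2 : ∀ᶠ a in l, ‖P.coeff (N + 1)‖ / 2 <
          ‖(F a).coeff (N + 1)‖ :=
        hleadT.eventually_const_lt (by linarith)
      filter_upwards [h1, h2, hFne] with a ha1 ha2 ⟨haD, hane, hrne⟩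
      rw [Complex.dist_eq]
      by_contra hcon
      push_neg at hcon
      have hall : ∀ y ∈ ((F a).roots.map (fun x => ‖r - x‖)), ε ≤ y := by
        intro y hy
        obtain ⟨x, hx, rfl⟩ := Multiset.mem_map.mp hy
        have h := (hρmin a hrne x hx)
        calc ε ≤ ‖ρ a - r‖ := hcon
        _ ≤ ‖x - r‖ := h
        _ = ‖r - x‖ := by rw [norm_sub_rev]
      have hprod : ε ^ (N + 1) ≤ ((F a).roots.map (fun x => ‖r - x‖)).prod := by
        have := multiset_le_prod hε.le hall
        rwa [Multiset.card_map, roots_card (F a) hane, haD] at this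
      have heval := abs_eval (F a) hane r
      have hlead : (F a).leadingCoeff = (F a).coeff (N + 1) := by
        rw [Polynomial.leadingCoeff, haD]
      rw [hlead] at heval
      have : ‖P.coeff (N + 1)‖ / 2 * ε ^ (N + 1) ≤
          ‖(F a).coeff (N + 1)‖ *
            ((F a).roots.map (fun x => ‖r - x‖)).prod := by
        apply mul_le_mul ha2.le hprod (by positivity) (by positivity)
      rw [← heval] at this
      exact absurd (lt_of_le_of_lt this ha1) (lt_irrefl _)
    -- deflation
    set G : α → Polynomial ℂ := fun a => (F a) /ₘ (X - C (ρ a)) with hGdef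
    have hGfac : ∀ᶠ a in l, (X - C (ρ a)) * G a = F a := by
      filter_upwards [hFne] with a ⟨_, _, hrne⟩
      exact Polynomial.mul_divByMonic_eq_iff_isRoot.mpr
        (Polynomial.isRoot_of_mem_roots (hρmem a hrne))
    have hGd : ∀ᶠ a in l, (G a).natDegree = N := by
      filter_upwards [hFd] with a ha
      rw [hGdef]
      simp only
      rw [Polynomial.natDegree_divByMonic (F a) (Polynomial.monic_X_sub_C (ρ a)), ha,
        Polynomial.natDegree_X_sub_C]
      omega
    have hGroots : ∀ᶠ a in l, (F a).roots = ρ a ::ₘ (G a).roots := by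
      filter_upwards [hGfac, hFne] with a hfaca ⟨_, hane, _⟩
      conv_lhs => rw [← hfaca]
      rw [Polynomial.roots_mul (hfaca.symm ▸ hane), Polynomial.roots_X_sub_C,
        Multiset.singleton_add]
    have hGcoef : ∀ i, Tendsto (fun a => (G a).coeff i) l (𝓝 (P1.coeff i)) := by
      intro n
      have hform : ∀ᶠ a in l, (G a).coeff n =
          ∑ i ∈ Finset.Icc (n + 1) (N + 1), (ρ a) ^ (i - (n + 1)) * (F a).coeff i := by
        filter_upwards [hFd] with a ha
        rw [hGdef]
        simp only
        rw [Polynomial.coeff_divByMonic_X_sub_C, ha]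
      have htarget : P1.coeff n =
          ∑ i ∈ Finset.Icc (n + 1) (N + 1), r ^ (i - (n + 1)) * P.coeff i := by
        rw [hP1def, Polynomial.coeff_divByMonic_X_sub_C, hPd]
      rw [htarget]
      exact Tendsto.congr' (hform.mono fun a h => h.symm)
        (tendsto_finset_sum _ fun i _ => (hρtend.pow _).mul (hcoef i))
    have IH := ih P1 G hP1d hP1ne hGd hGcoef δ hδ
    have hclose := Metric.tendsto_nhds.mp hρtend δ hδ
    filter_upwards [IH, hGroots, hclose] with a h1 h2 h3
    rw [h2, hProots]
    exact Multiset.Rel.cons (by rwa [Complex.dist_eq] at h3) h1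


lemma count_stable {α : Type} (l : Filter α) (N : ℕ) (P : Polynomial ℂ) (F : α → Polynomial ℂ)
    (R : ℝ)
    (hPd : P.natDegree = N) (hP : P ≠ 0)
    (hFd : ∀ᶠ a in l, (F a).natDegree = N)
    (hcoef : ∀ i, Tendsto (fun a => (F a).coeff i) l (𝓝 (P.coeff i)))
    (hcirc : ∀ z ∈ P.roots, ‖z‖ ≠ R) :
    ∀ᶠ a in l, Multiset.card ((F a).roots.filter (fun z => ‖z‖ < R)) =
      Multiset.card (P.roots.filter (fun z => ‖z‖ < R)) := by
  obtain ⟨δ, hδ, hsep⟩ : ∃ δ, 0 < δ ∧ ∀ y ∈ P.roots, δ ≤ |‖y‖ - R| := by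
    rcases eq_or_ne P.roots 0 with h | h
    · exact ⟨1, one_pos, by simp [h]⟩
    · obtain ⟨x, hx, hmin⟩ := multiset_exists_min h (fun y => |‖y‖ - R|)
      exact ⟨_, abs_pos.mpr (sub_ne_zero.mpr (hcirc x hx)), hmin⟩
  filter_upwards [roots_tendsto l N P F hPd hP hFd hcoef δ hδ] with a ha
  refine rel_count ha (fun x y hy hxy => ?_)
  have h1 : |‖x‖ - ‖y‖| < δ :=
    lt_of_le_of_lt (abs_norm_sub_norm_le x y) hxy
  have h2 := hsep y hy
  have h3 := abs_lt.mp h1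
  rcases lt_or_gt_of_ne (hcirc y hy) with hlt | hgt
  · rw [abs_of_neg (by linarith)] at h2
    constructor
    · intro _; exact hlt
    · intro _; linarith
  · rw [abs_of_pos (by linarith)] at h2
    constructor
    · intro hx'; linarith
    · intro hy'; linarith


noncomputable def Q0 (k kq : ℕ) (p q : ℕ → ℝ) : Polynomial ℂ :=
  (∑ j ∈ Finset.Icc 1 k, Polynomial.C ((p j : ℝ) : ℂ) * Polynomial.X ^ (kq + j)) +
    (∑ j ∈ Finset.Icc 1 kq, Polynomial.C ((q j : ℝ) : ℂ) * Polynomial.X ^ (kq - j))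

noncomputable def Tp (kp kq : ℕ) (p : ℕ → ℝ) : Polynomial ℂ :=
  Polynomial.C ((p kp : ℝ) : ℂ) * Polynomial.X ^ (kq + kp)

noncomputable def Fp (k kp kq : ℕ) (p q : ℕ → ℝ) (t : ℝ) : Polynomial ℂ :=
  Polynomial.C ((t : ℝ) : ℂ) * (Q0 k kq p q - Tp kp kq p) +
    (Tp kp kq p - Polynomial.X ^ kq)

variable {k kp kq : ℕ} {p q : ℕ → ℝ}

lemma chi_eq : chiTilde k kq p q = Q0 k kq p q - Polynomial.X ^ kq := by
  rw [chiTilde, Q0]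

lemma Fp_one : Fp k kp kq p q 1 = chiTilde k kq p q := by
  rw [Fp, chi_eq]
  push_cast
  rw [map_one]
  ring

lemma Fp_zero : Fp k kp kq p q 0 = Tp kp kq p - Polynomial.X ^ kq := by
  rw [Fp]
  push_cast
  rw [map_zero]
  ring

lemma Q0_coeff (m : ℕ) : (Q0 k kq p q).coeff m =
    (∑ j ∈ Finset.Icc 1 k, if kq + j = m then ((p j : ℝ) : ℂ) else 0) +
      (∑ j ∈ Finset.Icc 1 kq, if kq - j = m then ((q j : ℝ) : ℂ) else 0) := by
  simp only [Q0, Polynomial.coeff_add, Polynomial.finset_sum_coeff, Polynomial.coeff_C_mul,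
    Polynomial.coeff_X_pow, mul_ite, mul_one, mul_zero]
  congr 1 <;> exact Finset.sum_congr rfl fun j _ => by simp only [eq_comm]

lemma Q0_coeff_top (hkp1 : 1 ≤ kp) (hkpk : kp ≤ k) (hkq1 : 1 ≤ kq) :
    (Q0 k kq p q).coeff (kq + kp) = ((p kp : ℝ) : ℂ) := by
  rw [Q0_coeff]
  have h1 : (∑ j ∈ Finset.Icc 1 k, if kq + j = kq + kp then ((p j : ℝ) : ℂ) else 0)
      = ((p kp : ℝ) : ℂ) := by
    rw [Finset.sum_eq_single kp]
    · simp
    · intro j hj hne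
      rw [if_neg (fun h => hne (by omega))]
    · intro h
      exact absurd (Finset.mem_Icc.mpr ⟨hkp1, hkpk⟩) h
  have h2 : (∑ j ∈ Finset.Icc 1 kq, if kq - j = kq + kp then ((q j : ℝ) : ℂ) else 0) = 0 := by
    apply Finset.sum_eq_zero
    intro j hj
    rw [Finset.mem_Icc] at hj
    rw [if_neg (by omega)]
  rw [h1, h2, add_zero]

lemma Q0_coeff_high (hpmax : ∀ j, kp < j → p j = 0) (m : ℕ) (hm : kq + kp < m) :
    (Q0 k kq p q).coeff m = 0 := by
  rw [Q0_coeff]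
  have h1 : (∑ j ∈ Finset.Icc 1 k, if kq + j = m then ((p j : ℝ) : ℂ) else 0) = 0 := by
    apply Finset.sum_eq_zero
    intro j hj
    split_ifs with h
    · have : kp < j := by omega
      rw [hpmax j this]
      simp
    · rfl
  have h2 : (∑ j ∈ Finset.Icc 1 kq, if kq - j = m then ((q j : ℝ) : ℂ) else 0) = 0 := by
    apply Finset.sum_eq_zero
    intro j hj
    rw [Finset.mem_Icc] at hj
    rw [if_neg (by omega)]
  rw [h1, h2, add_zero]

lemma Fp_coeff (t : ℝ) (i : ℕ) : (Fp k kp kq p q t).coeff i =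
    (t : ℂ) * (Q0 k kq p q - Tp kp kq p).coeff i +
      (Tp kp kq p - Polynomial.X ^ kq).coeff i := by
  simp [Fp]

lemma Tp_coeff (i : ℕ) : (Tp kp kq p).coeff i =
    if kq + kp = i then ((p kp : ℝ) : ℂ) else 0 := by
  simp only [Tp, Polynomial.coeff_C_mul, Polynomial.coeff_X_pow, mul_ite, mul_one, mul_zero]
  simp only [eq_comm]

lemma Fp_coeff_top (hkp1 : 1 ≤ kp) (hkpk : kp ≤ k) (hkq1 : 1 ≤ kq) (t : ℝ) :
    (Fp k kp kq p q t).coeff (kq + kp) = ((p kp : ℝ) : ℂ) := by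
  rw [Fp_coeff, Polynomial.coeff_sub, Polynomial.coeff_sub, Q0_coeff_top hkp1 hkpk hkq1,
    Tp_coeff, if_pos rfl, Polynomial.coeff_X_pow, if_neg (by omega)]
  ring

lemma Fp_coeff_high (hpmax : ∀ j, kp < j → p j = 0) (t : ℝ) (m : ℕ) (hm : kq + kp < m) :
    (Fp k kp kq p q t).coeff m = 0 := by
  rw [Fp_coeff, Polynomial.coeff_sub, Polynomial.coeff_sub, Q0_coeff_high hpmax m hm,
    Tp_coeff, if_neg (by omega), Polynomial.coeff_X_pow, if_neg (by omega)]
  ring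

lemma Fp_natDegree (hkp1 : 1 ≤ kp) (hkpk : kp ≤ k) (hkq1 : 1 ≤ kq) (hpk : 0 < p kp)
    (hpmax : ∀ j, kp < j → p j = 0) (t : ℝ) :
    (Fp k kp kq p q t).natDegree = kq + kp := by
  have htop : (Fp k kp kq p q t).coeff (kq + kp) ≠ 0 := by
    rw [Fp_coeff_top hkp1 hkpk hkq1]
    exact_mod_cast hpk.ne'
  apply le_antisymm
  · rw [Polynomial.natDegree_le_iff_coeff_eq_zero]
    exact fun m hm => Fp_coeff_high hpmax t m hm
  · exact Polynomial.le_natDegree_of_ne_zero htop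

lemma Fp_ne_zero (hkp1 : 1 ≤ kp) (hkpk : kp ≤ k) (hkq1 : 1 ≤ kq) (hpk : 0 < p kp) (t : ℝ) :
    Fp k kp kq p q t ≠ 0 := by
  intro h
  have : (Fp k kp kq p q t).coeff (kq + kp) = 0 := by rw [h]; simp
  rw [Fp_coeff_top hkp1 hkpk hkq1] at this
  exact hpk.ne' (by exact_mod_cast this)

lemma Q0_eval (z : ℂ) : (Q0 k kq p q).eval z =
    (∑ j ∈ Finset.Icc 1 k, ((p j : ℝ) : ℂ) * z ^ (kq + j)) +
      (∑ j ∈ Finset.Icc 1 kq, ((q j : ℝ) : ℂ) * z ^ (kq - j)) := by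
  simp [Q0, Polynomial.eval_finset_sum]


noncomputable def Bf (k kq : ℕ) (p q : ℕ → ℝ) (R : ℝ) : ℝ :=
  (∑ j ∈ Finset.Icc 1 k, p j * R ^ (kq + j)) +
    (∑ j ∈ Finset.Icc 1 kq, q j * R ^ (kq - j))

lemma abs_Q0_le (hp : ∀ j, 0 ≤ p j) (hq : ∀ j, 0 ≤ q j) {z : ℂ} {R : ℝ}
    (hz : ‖z‖ = R) :
    ‖(Q0 k kq p q).eval z‖ ≤ Bf k kq p q R := by
  rw [Q0_eval, Bf]
  refine le_trans (norm_add_le _ _) (add_le_add ?_ ?_) <;>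
  · refine le_trans (norm_sum_le _ _) (le_of_eq (Finset.sum_congr rfl fun j _ => ?_))
    rw [norm_mul, norm_pow, Complex.norm_real, Real.norm_eq_abs, hz, abs_of_nonneg (by first | exact hp j | exact hq j)]

lemma abs_Tp_le (hp : ∀ j, 0 ≤ p j) (hq : ∀ j, 0 ≤ q j) (hkp1 : 1 ≤ kp) (hkpk : kp ≤ k)
    {R : ℝ} (hR : 0 ≤ R) : p kp * R ^ (kq + kp) ≤ Bf k kq p q R := by
  rw [Bf]
  have h1 : p kp * R ^ (kq + kp) ≤ ∑ j ∈ Finset.Icc 1 k, p j * R ^ (kq + j) := by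
    apply Finset.single_le_sum (f := fun j => p j * R ^ (kq + j))
    · intro j _
      exact mul_nonneg (hp j) (pow_nonneg hR _)
    · exact Finset.mem_Icc.mpr ⟨hkp1, hkpk⟩
  have h2 : 0 ≤ ∑ j ∈ Finset.Icc 1 kq, q j * R ^ (kq - j) :=
    Finset.sum_nonneg fun j _ => mul_nonneg (hq j) (pow_nonneg hR _)
  linarith

lemma Fp_eval (t : ℝ) (z : ℂ) : (Fp k kp kq p q t).eval z =
    ((t : ℂ) * (Q0 k kq p q).eval z + ((1 - t : ℝ) : ℂ) * (Tp kp kq p).eval z) - z ^ kq := by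
  simp only [Fp, Polynomial.eval_add, Polynomial.eval_sub, Polynomial.eval_mul,
    Polynomial.eval_C, Polynomial.eval_pow, Polynomial.eval_X]
  push_cast
  ring

lemma Fp_circle (hp : ∀ j, 0 ≤ p j) (hq : ∀ j, 0 ≤ q j) (hkp1 : 1 ≤ kp) (hkpk : kp ≤ k)
    {t : ℝ} (ht0 : 0 ≤ t) (ht1 : t ≤ 1) {z : ℂ} {R : ℝ} (hz : ‖z‖ = R)
    (hB : Bf k kq p q R < R ^ kq) :
    (Fp k kp kq p q t).eval z ≠ 0 := by
  have hR : 0 ≤ R := hz ▸ norm_nonneg z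
  have hQ := abs_Q0_le (k := k) (kq := kq) (p := p) (q := q) hp hq hz
  have hT : ‖(Tp kp kq p).eval z‖ ≤ Bf k kq p q R := by
    have : ‖(Tp kp kq p).eval z‖ = p kp * R ^ (kq + kp) := by
      simp only [Tp, Polynomial.eval_mul, Polynomial.eval_C, Polynomial.eval_pow,
        Polynomial.eval_X, norm_mul, norm_pow, Complex.norm_real, Real.norm_eq_abs, hz]
      rw [abs_of_nonneg (hp kp)]
    rw [this]
    exact abs_Tp_le hp hq hkp1 hkpk hR
  intro hzero
  rw [Fp_eval] at hzero
  have hzq : z ^ kq = (t : ℂ) * (Q0 k kq p q).eval z + ((1 - t : ℝ) : ℂ) * (Tp kp kq p).eval z := by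
    linear_combination -hzero
  have habs : R ^ kq ≤ Bf k kq p q R := by
    calc R ^ kq = ‖z ^ kq‖ := by rw [norm_pow, hz]
    _ ≤ ‖(t : ℂ) * (Q0 k kq p q).eval z‖ +
        ‖((1 - t : ℝ) : ℂ) * (Tp kp kq p).eval z‖ := by
        rw [hzq]; exact norm_add_le _ _
    _ = t * ‖(Q0 k kq p q).eval z‖ + (1 - t) * ‖(Tp kp kq p).eval z‖ := by
        rw [norm_mul, norm_mul, Complex.norm_real, Complex.norm_real, Real.norm_eq_abs, Real.norm_eq_abs,
          abs_of_nonneg ht0, abs_of_nonneg (by linarith : (0:ℝ) ≤ 1 - t)]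
    _ ≤ t * Bf k kq p q R + (1 - t) * Bf k kq p q R := by
        apply add_le_add
        · exact mul_le_mul_of_nonneg_left hQ ht0
        · exact mul_le_mul_of_nonneg_left hT (by linarith)
    _ = Bf k kq p q R := by ring
  exact absurd hB (not_lt.mpr habs)


lemma F0_count (hpk : 0 < p kp) (hkp1 : 1 ≤ kp) {R : ℝ} (hR0 : 0 < R)
    (hcR : p kp * R ^ kp < 1) :
    Multiset.card ((Fp k kp kq p q 0).roots.filter (fun z => ‖z‖ < R)) = kq := by
  set c : ℂ := ((p kp : ℝ) : ℂ) with hc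
  have hc0 : c ≠ 0 := by
    rw [hc]
    exact_mod_cast hpk.ne'
  set W : Polynomial ℂ := Polynomial.C c * Polynomial.X ^ kp - 1 with hW
  have hW0 : W ≠ 0 := by
    intro h
    have h2 : W.coeff kp = c := by
      rw [hW, Polynomial.coeff_sub, Polynomial.coeff_C_mul, Polynomial.coeff_X_pow,
        if_pos rfl, mul_one, Polynomial.coeff_one, if_neg (by omega : ¬ kp = 0), sub_zero]
    rw [h, Polynomial.coeff_zero] at h2
    exact hc0 h2.symm
  have hfac : Fp k kp kq p q 0 = Polynomial.X ^ kq * W := by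
    rw [Fp_zero, Tp, hW, pow_add]
    ring
  have hne : Polynomial.X ^ kq * W ≠ 0 :=
    mul_ne_zero (pow_ne_zero _ Polynomial.X_ne_zero) hW0
  have hroots : (Fp k kp kq p q 0).roots = kq • ({0} : Multiset ℂ) + W.roots := by
    rw [hfac, Polynomial.roots_mul hne, Polynomial.roots_pow, Polynomial.roots_X]
  rw [hroots, Multiset.filter_add, Multiset.card_add]
  have h1 : Multiset.card ((kq • ({0} : Multiset ℂ)).filter (fun z => ‖z‖ < R)) = kq := by
    rw [Multiset.nsmul_singleton]
    rw [Multiset.filter_eq_self.mpr]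
    · exact Multiset.card_replicate _ _
    · intro a ha
      rw [Multiset.eq_of_mem_replicate ha]
      simpa using hR0
  have h2 : (W.roots.filter (fun z => ‖z‖ < R)) = 0 := by
    rw [Multiset.filter_eq_nil]
    intro w hw hwR
    have hroot : W.eval w = 0 := Polynomial.isRoot_of_mem_roots hw
    rw [hW] at hroot
    simp only [Polynomial.eval_sub, Polynomial.eval_mul, Polynomial.eval_C,
      Polynomial.eval_pow, Polynomial.eval_X, Polynomial.eval_one] at hroot
    have habs : ‖c‖ * ‖w‖ ^ kp = 1 := by
      have : c * w ^ kp = 1 := by linear_combination hroot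
      calc ‖c‖ * ‖w‖ ^ kp = ‖c * w ^ kp‖ := by
            rw [norm_mul, norm_pow]
      _ = 1 := by rw [this, norm_one]
    have hcabs : ‖c‖ = p kp := by
      rw [hc, Complex.norm_real, Real.norm_eq_abs, abs_of_nonneg hpk.le]
    have hwle : ‖w‖ ^ kp ≤ R ^ kp := pow_le_pow_left₀ (norm_nonneg w) hwR.le kp
    have : ‖c‖ * ‖w‖ ^ kp < 1 := by
      rw [hcabs]
      calc p kp * ‖w‖ ^ kp ≤ p kp * R ^ kp :=
            mul_le_mul_of_nonneg_left hwle hpk.le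
      _ < 1 := hcR
    rw [habs] at this
    exact lt_irrefl _ this
  rw [h2]
  simpa using h1

lemma count_R (hp : ∀ j, 0 ≤ p j) (hq : ∀ j, 0 ≤ q j) (hkp1 : 1 ≤ kp) (hkpk : kp ≤ k)
    (hkq1 : 1 ≤ kq) (hpk : 0 < p kp) (hpmax : ∀ j, kp < j → p j = 0)
    {R : ℝ} (hR1 : 1 < R) (hB : Bf k kq p q R < R ^ kq) :
    Multiset.card ((chiTilde k kq p q).roots.filter (fun z => ‖z‖ < R)) = kq := by
  have hR0 : (0 : ℝ) < R := by linarith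
  set g : ℝ → ℕ :=
    fun t => Multiset.card ((Fp k kp kq p q t).roots.filter (fun z => ‖z‖ < R))
    with hg
  have hloc : ∀ t0 : ℝ, t0 ∈ Set.Icc (0:ℝ) 1 → ∀ᶠ t in 𝓝 t0, g t = g t0 := by
    intro t0 ht0
    apply count_stable (𝓝 t0) (kq + kp) (Fp k kp kq p q t0) (Fp k kp kq p q) R
      (Fp_natDegree hkp1 hkpk hkq1 hpk hpmax t0) (Fp_ne_zero hkp1 hkpk hkq1 hpk t0)
      (Filter.Eventually.of_forall fun t => Fp_natDegree hkp1 hkpk hkq1 hpk hpmax t)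
    · intro i
      simp only [Fp_coeff]
      exact ((Complex.continuous_ofReal.tendsto t0).mul tendsto_const_nhds).add
        tendsto_const_nhds
    · intro z hz hzR
      exact Fp_circle hp hq hkp1 hkpk ht0.1 ht0.2 hzR hB
        (Polynomial.isRoot_of_mem_roots hz)
  haveI hPC : PreconnectedSpace (Set.Icc (0:ℝ) 1) := Subtype.preconnectedSpace isPreconnected_Icc
  have hlc : IsLocallyConstant (fun x : Set.Icc (0:ℝ) 1 => g x) := by
    rw [IsLocallyConstant.iff_eventually_eq]
    intro x
    exact (continuous_subtype_val.continuousAt (x := x)).eventually (hloc x x.2)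
  have h10 : g 1 = g 0 := hlc.apply_eq_of_preconnectedSpace
    ⟨1, by norm_num⟩ ⟨0, by norm_num⟩
  have hcR : p kp * R ^ kp < 1 := by
    have h1 : p kp * R ^ (kq + kp) ≤ Bf k kq p q R := abs_Tp_le hp hq hkp1 hkpk hR0.le
    have h2 : p kp * R ^ (kq + kp) < R ^ kq := lt_of_le_of_lt h1 hB
    rw [pow_add] at h2
    have h3 : (p kp * R ^ kp) * R ^ kq < 1 * R ^ kq := by rw [one_mul]; linarith [h2]
    exact lt_of_mul_lt_mul_right h3 (pow_nonneg hR0.le kq)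
  have h0 : g 0 = kq := F0_count hpk hkp1 hR0 hcR
  have h1 : g 1 = Multiset.card
      ((chiTilde k kq p q).roots.filter (fun z => ‖z‖ < R)) := by
    rw [hg]; simp only [Fp_one]
  rw [← h1, h10, h0]


-- extension of sums over Icc 1 kq to Icc 1 k when q vanishes above kq
lemma sum_q_ext (hqmax : ∀ j, kq < j → q j = 0) (hkqk : kq ≤ k) (f : ℕ → ℝ) :
    ∑ j ∈ Finset.Icc 1 kq, q j * f j = ∑ j ∈ Finset.Icc 1 k, q j * f j := by
  apply Finset.sum_subset
  · exact Finset.Icc_subset_Icc le_rfl hkqk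
  · intro j hj hj'
    rw [Finset.mem_Icc] at hj
    rw [Finset.mem_Icc] at hj'
    rw [hqmax j (by omega), zero_mul]

lemma chi_eval (z : ℂ) : (chiTilde k kq p q).eval z =
    (∑ j ∈ Finset.Icc 1 k, ((p j : ℝ) : ℂ) * z ^ (kq + j)) +
      (∑ j ∈ Finset.Icc 1 kq, ((q j : ℝ) : ℂ) * z ^ (kq - j)) - z ^ kq := by
  simp [chiTilde, Polynomial.eval_finset_sum]

lemma chi_eval_one (hqmax : ∀ j, kq < j → q j = 0) (hkqk : kq ≤ k)
    (hsum : ∑ j ∈ Finset.Icc 1 k, (p j + q j) = 1) :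
    (chiTilde k kq p q).eval 1 = 0 := by
  rw [chi_eval]
  simp only [one_pow, mul_one]
  have hq' : ∑ j ∈ Finset.Icc 1 kq, ((q j : ℝ) : ℂ) = ∑ j ∈ Finset.Icc 1 k, ((q j : ℝ) : ℂ) := by
    apply Finset.sum_subset (Finset.Icc_subset_Icc le_rfl hkqk)
    intro j hj hj'
    rw [Finset.mem_Icc] at hj hj'
    rw [hqmax j (by omega)]
    norm_num
  rw [hq', ← Finset.sum_add_distrib]
  have : ∑ j ∈ Finset.Icc 1 k, (((p j : ℝ) : ℂ) + ((q j : ℝ) : ℂ)) =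
      ((∑ j ∈ Finset.Icc 1 k, (p j + q j) : ℝ) : ℂ) := by
    push_cast
    rfl
  rw [this, hsum]
  norm_num

-- the real function φ
noncomputable def phi (k kq : ℕ) (p q : ℕ → ℝ) (x : ℝ) : ℝ :=
  (∑ j ∈ Finset.Icc 1 k, p j * x ^ (kq + j)) +
    (∑ j ∈ Finset.Icc 1 kq, q j * x ^ (kq - j)) - x ^ kq

lemma Bf_phi (R : ℝ) : Bf k kq p q R = phi k kq p q R + R ^ kq := by
  rw [Bf, phi]; ring

lemma phi_one (hqmax : ∀ j, kq < j → q j = 0) (hkqk : kq ≤ k)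
    (hsum : ∑ j ∈ Finset.Icc 1 k, (p j + q j) = 1) : phi k kq p q 1 = 0 := by
  rw [phi]
  simp only [one_pow, mul_one]
  have e3 : ∑ j ∈ Finset.Icc 1 kq, q j = ∑ j ∈ Finset.Icc 1 k, q j := by
    have := sum_q_ext (q := q) hqmax hkqk (fun _ => 1)
    simpa using this
  rw [e3]
  have e5 : (∑ j ∈ Finset.Icc 1 k, p j) + (∑ j ∈ Finset.Icc 1 k, q j) = 1 := by
    rw [← Finset.sum_add_distrib]; exact hsum
  linarith

lemma phi_hasDeriv :
    HasDerivAt (phi k kq p q)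
      ((∑ j ∈ Finset.Icc 1 k, p j * ((kq + j : ℕ) : ℝ)) +
        (∑ j ∈ Finset.Icc 1 kq, q j * ((kq - j : ℕ) : ℝ)) - (kq : ℝ)) 1 := by
  have h1 : ∀ j ∈ Finset.Icc 1 k,
      HasDerivAt (fun x : ℝ => p j * x ^ (kq + j)) (p j * ((kq + j : ℕ) : ℝ)) 1 := by
    intro j _
    have := (hasDerivAt_pow (kq + j) (1 : ℝ)).const_mul (p j)
    simpa using this
  have h2 : ∀ j ∈ Finset.Icc 1 kq,
      HasDerivAt (fun x : ℝ => q j * x ^ (kq - j)) (q j * ((kq - j : ℕ) : ℝ)) 1 := by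
    intro j _
    have := (hasDerivAt_pow (kq - j) (1 : ℝ)).const_mul (q j)
    simpa using this
  have h3 : HasDerivAt (fun x : ℝ => x ^ kq) ((kq : ℝ)) 1 := by
    have := hasDerivAt_pow kq (1 : ℝ)
    simpa using this
  refine (((HasDerivAt.sum h1).add (HasDerivAt.sum h2)).sub h3).congr_of_eventuallyEq
    (Filter.Eventually.of_forall fun x => ?_)
  simp [phi, Finset.sum_apply]

lemma deriv_eq_mu (hqmax : ∀ j, kq < j → q j = 0) (hkqk : kq ≤ k)
    (hsum : ∑ j ∈ Finset.Icc 1 k, (p j + q j) = 1) :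
    (∑ j ∈ Finset.Icc 1 k, p j * ((kq + j : ℕ) : ℝ)) +
      (∑ j ∈ Finset.Icc 1 kq, q j * ((kq - j : ℕ) : ℝ)) - (kq : ℝ) =
      ∑ j ∈ Finset.Icc 1 k, (j : ℝ) * (p j - q j) := by
  have e1 : ∑ j ∈ Finset.Icc 1 k, p j * ((kq + j : ℕ) : ℝ) =
      (kq : ℝ) * (∑ j ∈ Finset.Icc 1 k, p j) + ∑ j ∈ Finset.Icc 1 k, (j : ℝ) * p j := by
    rw [Finset.mul_sum, ← Finset.sum_add_distrib]
    apply Finset.sum_congr rfl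
    intro j _
    push_cast
    ring
  have e2 : ∑ j ∈ Finset.Icc 1 kq, q j * ((kq - j : ℕ) : ℝ) =
      (kq : ℝ) * (∑ j ∈ Finset.Icc 1 kq, q j) - ∑ j ∈ Finset.Icc 1 kq, (j : ℝ) * q j := by
    rw [Finset.mul_sum, ← Finset.sum_sub_distrib]
    apply Finset.sum_congr rfl
    intro j hj
    rw [Finset.mem_Icc] at hj
    rw [Nat.cast_sub hj.2]
    ring
  have e3 : ∑ j ∈ Finset.Icc 1 kq, q j = ∑ j ∈ Finset.Icc 1 k, q j := by
    have := sum_q_ext (q := q) hqmax hkqk (fun _ => 1)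
    simpa using this
  have e4 : ∑ j ∈ Finset.Icc 1 kq, (j : ℝ) * q j = ∑ j ∈ Finset.Icc 1 k, (j : ℝ) * q j := by
    have := sum_q_ext (q := q) hqmax hkqk (fun j => (j : ℝ))
    calc ∑ j ∈ Finset.Icc 1 kq, (j : ℝ) * q j = ∑ j ∈ Finset.Icc 1 kq, q j * (j : ℝ) := by
          apply Finset.sum_congr rfl; intros; ring
    _ = ∑ j ∈ Finset.Icc 1 k, q j * (j : ℝ) := this
    _ = ∑ j ∈ Finset.Icc 1 k, (j : ℝ) * q j := by
          apply Finset.sum_congr rfl; intros; ring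
  have e5 : (∑ j ∈ Finset.Icc 1 k, p j) + (∑ j ∈ Finset.Icc 1 k, q j) = 1 := by
    rw [← Finset.sum_add_distrib]; exact hsum
  rw [e1, e2, e3, e4]
  have : ∑ j ∈ Finset.Icc 1 k, (j : ℝ) * (p j - q j) =
      (∑ j ∈ Finset.Icc 1 k, (j : ℝ) * p j) - ∑ j ∈ Finset.Icc 1 k, (j : ℝ) * q j := by
    rw [← Finset.sum_sub_distrib]
    apply Finset.sum_congr rfl
    intros; ring
  rw [this]
  nlinarith [e5]

lemma eventually_Bf_lt (hqmax : ∀ j, kq < j → q j = 0) (hkqk : kq ≤ k)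
    (hsum : ∑ j ∈ Finset.Icc 1 k, (p j + q j) = 1)
    (hmu : (∑ j ∈ Finset.Icc 1 k, (j : ℝ) * (p j - q j)) < 0) :
    ∀ᶠ x in 𝓝[>] (1 : ℝ), Bf k kq p q x < x ^ kq := by
  have hD : HasDerivAt (phi k kq p q) (∑ j ∈ Finset.Icc 1 k, (j : ℝ) * (p j - q j)) 1 := by
    have := phi_hasDeriv (k := k) (kq := kq) (p := p) (q := q)
    rwa [deriv_eq_mu hqmax hkqk hsum] at this
  have hs : Tendsto (slope (phi k kq p q) 1) (𝓝[≠] 1)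
      (𝓝 (∑ j ∈ Finset.Icc 1 k, (j : ℝ) * (p j - q j))) :=
    hasDerivAt_iff_tendsto_slope.mp hD
  have hs' : Tendsto (slope (phi k kq p q) 1) (𝓝[>] 1)
      (𝓝 (∑ j ∈ Finset.Icc 1 k, (j : ℝ) * (p j - q j))) :=
    hs.mono_left (nhdsWithin_mono 1 (fun x hx => ne_of_gt hx))
  have hneg : ∀ᶠ x in 𝓝[>] (1 : ℝ), slope (phi k kq p q) 1 x < 0 :=
    hs'.eventually_lt_const hmu
  filter_upwards [hneg, self_mem_nhdsWithin] with x hx hx1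
  have hx1' : (1 : ℝ) < x := hx1
  rw [slope_def_field, phi_one hqmax hkqk hsum, sub_zero] at hx
  have hphi : phi k kq p q x < 0 := by
    by_contra hcon
    push_neg at hcon
    have : 0 ≤ phi k kq p q x / (x - 1) := div_nonneg hcon (by linarith)
    linarith
  rw [Bf_phi]
  linarith


lemma unit_re_one {u : ℂ} (h1 : ‖u‖ = 1) (h2 : u.re = 1) : u = 1 := by
  have hn : Complex.normSq u = 1 := by
    rw [← Complex.sq_norm, h1, one_pow]
  rw [Complex.normSq_apply, h2] at hn
  have : u.im * u.im = 0 := by nlinarith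
  have him : u.im = 0 := by
    exact mul_self_eq_zero.mp this
  exact Complex.ext (by simpa using h2) (by simpa using him)

lemma boundary (hp : ∀ j, 0 ≤ p j) (hq : ∀ j, 0 ≤ q j)
    (hqmax : ∀ j, kq < j → q j = 0) (hkqk : kq ≤ k)
    (hsum : ∑ j ∈ Finset.Icc 1 k, (p j + q j) = 1)
    (hgcd : Finset.gcd ((Finset.Icc 1 k).filter (fun j => 0 < p j + q j)) id = 1)
    {z : ℂ} (hz : ‖z‖ = 1) (hroot : (chiTilde k kq p q).eval z = 0)
    (hne : z ≠ 1) : False := by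
  set w : ℂ := (starRingEnd ℂ) z with hw
  have hwz : w * z = 1 := by
    rw [hw, mul_comm, Complex.mul_conj]
    norm_cast
    rw [Complex.normSq_eq_norm_sq, hz, one_pow]
  have hAB : (∑ j ∈ Finset.Icc 1 k, ((p j : ℝ) : ℂ) * z ^ (kq + j)) +
      (∑ j ∈ Finset.Icc 1 kq, ((q j : ℝ) : ℂ) * z ^ (kq - j)) = z ^ kq := by
    have := chi_eval (k := k) (kq := kq) (p := p) (q := q) z
    rw [hroot] at this
    linear_combination -this
  have e3 : w ^ kq * z ^ kq = 1 := by
    rw [← mul_pow, hwz, one_pow]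
  have key : (∑ j ∈ Finset.Icc 1 k, ((p j : ℝ) : ℂ) * z ^ j) +
      (∑ j ∈ Finset.Icc 1 kq, ((q j : ℝ) : ℂ) * w ^ j) = 1 := by
    have := congrArg (fun u => w ^ kq * u) hAB
    simp only [mul_add, Finset.mul_sum] at this
    rw [e3] at this
    calc (∑ j ∈ Finset.Icc 1 k, ((p j : ℝ) : ℂ) * z ^ j) +
        (∑ j ∈ Finset.Icc 1 kq, ((q j : ℝ) : ℂ) * w ^ j)
        = (∑ j ∈ Finset.Icc 1 k, w ^ kq * (((p j : ℝ) : ℂ) * z ^ (kq + j))) +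
          (∑ j ∈ Finset.Icc 1 kq, w ^ kq * (((q j : ℝ) : ℂ) * z ^ (kq - j))) := by
          congr 1
          · apply Finset.sum_congr rfl
            intro j _
            have e2 : w ^ kq * z ^ (kq + j) = z ^ j := by
              calc w ^ kq * z ^ (kq + j) = (w * z) ^ kq * z ^ j := by
                    rw [pow_add, mul_pow]; ring
              _ = z ^ j := by rw [hwz, one_pow, one_mul]
            rw [← e2]; ring
          · apply Finset.sum_congr rfl
            intro j hj
            rw [Finset.mem_Icc] at hj
            have e1 : w ^ kq * z ^ (kq - j) = w ^ j := by
              have hkqj : w ^ kq = w ^ j * w ^ (kq - j) := by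
                rw [← pow_add]
                congr 1
                omega
              calc w ^ kq * z ^ (kq - j) = w ^ j * (w ^ (kq - j) * z ^ (kq - j)) := by
                    rw [hkqj]; ring
              _ = w ^ j * ((w * z) ^ (kq - j)) := by rw [mul_pow]
              _ = w ^ j := by rw [hwz, one_pow, mul_one]
            rw [← e1]; ring
    _ = 1 := this
  -- take real parts
  have hre : (∑ j ∈ Finset.Icc 1 k, p j * (z ^ j).re) +
      (∑ j ∈ Finset.Icc 1 kq, q j * (z ^ j).re) = 1 := by
    have := congrArg Complex.re key
    simp only [Complex.add_re, Complex.one_re] at this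
    rw [Complex.re_sum, Complex.re_sum] at this
    calc (∑ j ∈ Finset.Icc 1 k, p j * (z ^ j).re) +
        (∑ j ∈ Finset.Icc 1 kq, q j * (z ^ j).re)
        = (∑ j ∈ Finset.Icc 1 k, (((p j : ℝ) : ℂ) * z ^ j).re) +
          (∑ j ∈ Finset.Icc 1 kq, (((q j : ℝ) : ℂ) * w ^ j).re) := by
          congr 1
          · exact Finset.sum_congr rfl fun j _ => by rw [Complex.re_ofReal_mul]
          · apply Finset.sum_congr rfl
            intro j _
            rw [Complex.re_ofReal_mul]
            congr 1
            rw [hw, ← map_pow]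
            exact (Complex.conj_re _).symm
    _ = 1 := this
  have habsj : ∀ j : ℕ, ‖z ^ j‖ = 1 := by
    intro j
    rw [norm_pow, hz, one_pow]
  have hrele : ∀ j : ℕ, (z ^ j).re ≤ 1 := by
    intro j
    calc (z ^ j).re ≤ ‖z ^ j‖ := Complex.re_le_norm _
    _ = 1 := habsj j
  -- extend the q-sum
  have hq' : ∑ j ∈ Finset.Icc 1 kq, q j * (z ^ j).re =
      ∑ j ∈ Finset.Icc 1 k, q j * (z ^ j).re :=
    sum_q_ext hqmax hkqk (fun j => (z ^ j).re)
  rw [hq'] at hre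
  have hcomb : ∑ j ∈ Finset.Icc 1 k, (p j + q j) * (z ^ j).re = 1 := by
    rw [← hre, ← Finset.sum_add_distrib]
    apply Finset.sum_congr rfl
    intros; ring
  have hzero : ∑ j ∈ Finset.Icc 1 k, (p j + q j) * (1 - (z ^ j).re) = 0 := by
    have : ∑ j ∈ Finset.Icc 1 k, (p j + q j) * (1 - (z ^ j).re) =
        (∑ j ∈ Finset.Icc 1 k, (p j + q j)) -
          ∑ j ∈ Finset.Icc 1 k, (p j + q j) * (z ^ j).re := by
      rw [← Finset.sum_sub_distrib]
      apply Finset.sum_congr rfl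
      intros; ring
    rw [this, hsum, hcomb, sub_self]
  have hterms : ∀ j ∈ Finset.Icc 1 k, (p j + q j) * (1 - (z ^ j).re) = 0 := by
    refine (Finset.sum_eq_zero_iff_of_nonneg ?_).mp hzero
    intro j _
    have := hrele j
    have := hp j
    have := hq j
    nlinarith
  -- each j in the support gives z ^ j = 1
  have hpow : ∀ j ∈ (Finset.Icc 1 k).filter (fun j => 0 < p j + q j), z ^ j = 1 := by
    intro j hj
    rw [Finset.mem_filter] at hj
    have h0 := hterms j hj.1
    have hne0 : p j + q j ≠ 0 := ne_of_gt hj.2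
    have hre1 : (z ^ j).re = 1 := by
      rcases mul_eq_zero.mp h0 with h | h
      · exact absurd h hne0
      · linarith
    exact unit_re_one (habsj j) hre1
  -- order argument
  have hdvd : orderOf z ∣ Finset.gcd ((Finset.Icc 1 k).filter (fun j => 0 < p j + q j)) id :=
    Finset.dvd_gcd fun b hb => orderOf_dvd_of_pow_eq_one (hpow b hb)
  rw [hgcd, Nat.dvd_one] at hdvd
  exact hne (orderOf_eq_one_iff.mp hdvd)


end Stmt11Aux

/-- When μ < 0, χ̃ has exactly k_q roots (with multiplicity) of absolute value ≤ 1,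
and all of them except the root z = 1 have absolute value strictly less than 1. -/
theorem stmt_11 (k kp kq : ℕ) (hk : 1 ≤ k) (hkp : 1 ≤ kp) (hkq : 1 ≤ kq)
    (hkpk : kp ≤ k) (hkqk : kq ≤ k)
    (p q : ℕ → ℝ) (hp : ∀ j, 0 ≤ p j) (hq : ∀ j, 0 ≤ q j)
    (hpk : 0 < p kp) (hpmax : ∀ j, kp < j → p j = 0)
    (hqk : 0 < q kq) (hqmax : ∀ j, kq < j → q j = 0)
    (hsum : ∑ j ∈ Finset.Icc 1 k, (p j + q j) = 1)
    (hmu : (∑ j ∈ Finset.Icc 1 k, (j : ℝ) * (p j - q j)) < 0)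
    (hgcd : Finset.gcd ((Finset.Icc 1 k).filter (fun j => 0 < p j + q j)) id = 1) :
    Multiset.card ((chiTilde k kq p q).roots.filter (fun z => ‖z‖ ≤ 1)) = kq ∧
    (1 : ℂ) ∈ (chiTilde k kq p q).roots ∧
    (∀ z ∈ (chiTilde k kq p q).roots, ‖z‖ ≤ 1 → z ≠ 1 → ‖z‖ < 1) := by
  have hchine : chiTilde k kq p q ≠ 0 := by
    rw [← Stmt11Aux.Fp_one (k := k) (kp := kp) (kq := kq) (p := p) (q := q)]
    exact Stmt11Aux.Fp_ne_zero hkp hkpk hkq hpk 1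
  have heval1 : (chiTilde k kq p q).eval 1 = 0 := Stmt11Aux.chi_eval_one hqmax hkqk hsum
  have part2 : (1 : ℂ) ∈ (chiTilde k kq p q).roots := by
    rw [Polynomial.mem_roots hchine]
    exact heval1
  have part3 : ∀ z ∈ (chiTilde k kq p q).roots,
      ‖z‖ ≤ 1 → z ≠ 1 → ‖z‖ < 1 := by
    intro z hz hle hne
    rcases lt_or_eq_of_le hle with h | h
    · exact h
    · exact absurd (Stmt11Aux.boundary hp hq hqmax hkqk hsum hgcd h
        (Polynomial.isRoot_of_mem_roots hz) hne) id
  refine ⟨?_, part2, part3⟩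
  obtain ⟨δ₂, hδ₂pos, hδ₂⟩ : ∃ δ₂, 0 < δ₂ ∧ ∀ z ∈ (chiTilde k kq p q).roots,
      1 < ‖z‖ → 1 + δ₂ ≤ ‖z‖ := by
    set out := (chiTilde k kq p q).roots.filter (fun z => 1 < ‖z‖) with hout
    rcases eq_or_ne out 0 with h | h
    · refine ⟨1, one_pos, fun z hz h1 => ?_⟩
      exfalso
      have hm : z ∈ out := Multiset.mem_filter.mpr ⟨hz, h1⟩
      rw [h] at hm
      simp at hm
    · obtain ⟨x, hx, hmin⟩ := Stmt11Aux.multiset_exists_min h norm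
      have hx1 : 1 < ‖x‖ := (Multiset.mem_filter.mp hx).2
      refine ⟨‖x‖ - 1, by linarith, fun z hz h1 => ?_⟩
      have hzo : z ∈ out := Multiset.mem_filter.mpr ⟨hz, h1⟩
      have := hmin z hzo
      linarith
  obtain ⟨u, hu, hsub⟩ := mem_nhdsGT_iff_exists_Ioo_subset.mp
    (Stmt11Aux.eventually_Bf_lt hqmax hkqk hsum hmu)
  have hu1 : (1 : ℝ) < u := hu
  set R := min ((1 + u) / 2) (1 + δ₂ / 2) with hRdef
  have hR1 : 1 < R := lt_min (by linarith) (by linarith)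
  have hRu : R < u := lt_of_le_of_lt (min_le_left _ _) (by linarith)
  have hRδ : R < 1 + δ₂ := lt_of_le_of_lt (min_le_right _ _) (by linarith)
  have hB : Stmt11Aux.Bf k kq p q R < R ^ kq := hsub ⟨hR1, hRu⟩
  have hcount := Stmt11Aux.count_R hp hq hkp hkpk hkq hpk hpmax hR1 hB
  have hfe : (chiTilde k kq p q).roots.filter (fun z => ‖z‖ ≤ 1) =
      (chiTilde k kq p q).roots.filter (fun z => ‖z‖ < R) := by
    apply Multiset.filter_congr
    intro z hz
    constructor
    · intro h
      exact lt_of_le_of_lt h hR1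
    · intro h
      by_contra hcon
      push_neg at hcon
      have := hδ₂ z hz hcon
      linarith
  rw [hfe]
  exact hcount
end

section
/- For the one-sided reflecting random leap on {0,1,2,...} with mean increment μ = Σ_{j=1}^k j(p_j − q_j) ≥ 0 and q_{k_q} > 0, no stationary probability distribution exists. -/
/-- Transition probabilities of the one-sided reflecting random leap on ℕ:
from state i, move up j with probability p j, down j (staying positive) with
probability q j, and to 0 with all remaining leftward mass. -/
noncomputable def reflectLeapP (k : ℕ) (p q : ℕ → ℝ) (i j : ℕ) : ℝ :=
  if j = 0 then ∑ l ∈ Finset.Icc (max i 1) k, q l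
  else if i < j then p (j - i) else q (i - j)

section aux
variable (k : ℕ) (p q : ℕ → ℝ)

lemma Pnonneg (hp : ∀ j, 0 ≤ p j) (hq : ∀ j, 0 ≤ q j) (i j : ℕ) :
    0 ≤ reflectLeapP k p q i j := by
  unfold reflectLeapP
  split
  · exact Finset.sum_nonneg fun l _ => hq l
  · split
    · exact hp _
    · exact hq _

lemma Psupp (hpk : ∀ j, k < j → p j = 0) (i j : ℕ) (hj : j ∉ Finset.range (i + k + 1)) :
    reflectLeapP k p q i j = 0 := by
  simp only [Finset.mem_range] at hj
  unfold reflectLeapP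
  rw [if_neg (by omega), if_pos (by omega)]
  exact hpk _ (by omega)

/-- decomposition of the basic finite sum -/
lemma decomp (i : ℕ) (f : ℕ → ℝ) :
    ∑ j ∈ Finset.range (i + k + 1), reflectLeapP k p q i j * f j
      = (∑ l ∈ Finset.Icc (max i 1) k, q l) * f 0
        + ∑ l ∈ Finset.range i, q l * f (i - l)
        + ∑ m ∈ Finset.Icc 1 k, p m * f (i + m) := by
  rw [Finset.range_eq_Ico,
    ← Finset.sum_Ico_consecutive (fun j => reflectLeapP k p q i j * f j)
      (Nat.zero_le 1) (by omega : 1 ≤ i + k + 1),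
    ← Finset.sum_Ico_consecutive (fun j => reflectLeapP k p q i j * f j)
      (by omega : 1 ≤ i + 1) (by omega : i + 1 ≤ i + k + 1)]
  have h0 : ∑ j ∈ Finset.Ico 0 1, reflectLeapP k p q i j * f j
      = (∑ l ∈ Finset.Icc (max i 1) k, q l) * f 0 := by
    rw [show Finset.Ico 0 1 = {0} from rfl, Finset.sum_singleton]
    unfold reflectLeapP
    rw [if_pos rfl]
  have h1 : ∑ j ∈ Finset.Ico 1 (i + 1), reflectLeapP k p q i j * f j
      = ∑ l ∈ Finset.range i, q l * f (i - l) := by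
    apply Finset.sum_nbij' (fun j => i - j) (fun l => i - l)
    · intro a ha; simp only [Finset.mem_Ico] at ha; simp only [Finset.mem_range]; omega
    · intro a ha; simp only [Finset.mem_range] at ha; simp only [Finset.mem_Ico]; omega
    · intro a ha; simp only [Finset.mem_Ico] at ha; omega
    · intro a ha; simp only [Finset.mem_range] at ha; omega
    · intro a ha; simp only [Finset.mem_Ico] at ha
      unfold reflectLeapP
      rw [if_neg (by omega), if_neg (by omega), show i - (i - a) = a from by omega]
  have h2 : ∑ j ∈ Finset.Ico (i + 1) (i + k + 1), reflectLeapP k p q i j * f j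
      = ∑ m ∈ Finset.Icc 1 k, p m * f (i + m) := by
    apply Finset.sum_nbij' (fun j => j - i) (fun m => i + m)
    · intro a ha; simp only [Finset.mem_Ico] at ha; simp only [Finset.mem_Icc]; omega
    · intro a ha; simp only [Finset.mem_Icc] at ha; simp only [Finset.mem_Ico]; omega
    · intro a ha; simp only [Finset.mem_Ico] at ha; omega
    · intro a ha; simp only [Finset.mem_Icc] at ha; omega
    · intro a ha; simp only [Finset.mem_Ico] at ha
      unfold reflectLeapP
      rw [if_neg (by omega), if_pos (by omega), show i + (a - i) = a from by omega]
  rw [Finset.range_eq_Ico] at h1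
  rw [h0, h1, h2, add_assoc, Finset.range_eq_Ico]


noncomputable def fN (N j : ℕ) : ℝ := min (j : ℝ) (N : ℝ)

lemma fN_nonneg (N j : ℕ) : 0 ≤ fN N j := le_min (Nat.cast_nonneg _) (Nat.cast_nonneg _)

lemma fN_le (N j : ℕ) : fN N j ≤ (N : ℝ) := min_le_right _ _

lemma fN_le_self (N j : ℕ) : fN N j ≤ (j : ℝ) := min_le_left _ _

lemma fN_eq (N j : ℕ) (h : j ≤ N) : fN N j = (j : ℝ) :=
  min_eq_left (by exact_mod_cast h)

lemma fN_mono (N a b : ℕ) (h : a ≤ b) : fN N a ≤ fN N b :=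
  min_le_min (by exact_mod_cast h) le_rfl

lemma fN_lip (N a b : ℕ) (h : a ≤ b) : fN N b - ((b : ℝ) - (a : ℝ)) ≤ fN N a := by
  have h1 : fN N b ≤ (b : ℝ) := fN_le_self N b
  have h2 : fN N b ≤ (N : ℝ) := fN_le N b
  have h3 : (a : ℝ) ≤ (b : ℝ) := by exact_mod_cast h
  exact le_min (by linarith) (by linarith)

/-- extension of the truncated q-sum to `Icc 1 k` -/
lemma qext (F : ℕ → ℝ) (hq0 : F 0 = 0) (hqk : ∀ l, k < l → F l = 0) (i : ℕ) :
    ∑ l ∈ Finset.range i, F l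
      = ∑ l ∈ (Finset.Icc 1 k).filter (fun l => l < i), F l := by
  apply (Finset.sum_subset ?_ ?_).symm
  · intro x hx
    simp only [Finset.mem_filter, Finset.mem_Icc] at hx
    simp only [Finset.mem_range]
    omega
  · intro x hx hnx
    simp only [Finset.mem_range] at hx
    simp only [Finset.mem_filter, Finset.mem_Icc, not_and, not_lt] at hnx
    have : x = 0 ∨ k < x := by omega
    rcases this with h | h
    · rw [h, hq0]
    · rw [hqk _ h]

lemma Icc_max_filter (i : ℕ) :
    Finset.Icc (max i 1) k = (Finset.Icc 1 k).filter (fun l => ¬ l < i) := by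
  ext l
  simp only [Finset.mem_filter, Finset.mem_Icc, not_lt, max_le_iff]
  omega

lemma rowsum (hq0 : q 0 = 0) (hqk : ∀ l, k < l → q l = 0)
    (hsum : ∑ j ∈ Finset.Icc 1 k, (p j + q j) = 1) (i : ℕ) :
    ∑ j ∈ Finset.range (i + k + 1), reflectLeapP k p q i j = 1 := by
  have : ∑ j ∈ Finset.range (i + k + 1), reflectLeapP k p q i j
      = ∑ j ∈ Finset.range (i + k + 1), reflectLeapP k p q i j * (fun _ => (1:ℝ)) j := by
    simp
  rw [this, decomp]
  simp only [mul_one]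
  rw [qext k q hq0 hqk i, Icc_max_filter]
  have hsplit := Finset.sum_filter_add_sum_filter_not (Finset.Icc 1 k) (fun l => l < i) q
  rw [Finset.sum_add_distrib] at hsum
  linarith


lemma g_zero (hp : ∀ j, 0 ≤ p j) (hq : ∀ j, 0 ≤ q j) (kq N : ℕ)
    (hkq : 1 ≤ kq) (hkqk : kq ≤ k) (hkN : k ≤ N)
    (hmu : 0 ≤ ∑ j ∈ Finset.Icc 1 k, (j : ℝ) * (p j - q j)) :
    (kq : ℝ) * q kq ≤ ∑ j ∈ Finset.range (0 + k + 1), reflectLeapP k p q 0 j * fN N j := by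
  rw [decomp]
  have h0 : fN N 0 = 0 := by simp [fN]
  rw [h0, mul_zero]
  simp only [Finset.range_zero, Finset.sum_empty, zero_add, add_zero]
  have e : ∀ m ∈ Finset.Icc 1 k, p m * fN N m = (m : ℝ) * p m := by
    intro m hm
    simp only [Finset.mem_Icc] at hm
    rw [fN_eq N m (by omega), mul_comm]
  rw [Finset.sum_congr rfl e]
  have h1 : ∑ m ∈ Finset.Icc 1 k, (m : ℝ) * q m ≤ ∑ m ∈ Finset.Icc 1 k, (m : ℝ) * p m := by
    have : ∑ j ∈ Finset.Icc 1 k, (j : ℝ) * (p j - q j)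
        = ∑ m ∈ Finset.Icc 1 k, (m : ℝ) * p m - ∑ m ∈ Finset.Icc 1 k, (m : ℝ) * q m := by
      rw [← Finset.sum_sub_distrib]
      exact Finset.sum_congr rfl fun x _ => by ring
    linarith [hmu, this ▸ hmu]
  have h2 : (kq : ℝ) * q kq ≤ ∑ m ∈ Finset.Icc 1 k, (m : ℝ) * q m := by
    apply Finset.single_le_sum (f := fun (m : ℕ) => (m : ℝ) * q m)
    · intro m _
      exact mul_nonneg (Nat.cast_nonneg _) (hq m)
    · simp only [Finset.mem_Icc]; omega
  linarith

lemma g_pos (hp : ∀ j, 0 ≤ p j) (hq : ∀ j, 0 ≤ q j)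
    (hq0 : q 0 = 0) (hqk : ∀ l, k < l → q l = 0)
    (hsum : ∑ j ∈ Finset.Icc 1 k, (p j + q j) = 1)
    (hmu : 0 ≤ ∑ j ∈ Finset.Icc 1 k, (j : ℝ) * (p j - q j))
    (i N : ℕ) (hi : 1 ≤ i) (hiN : i + k ≤ N) :
    (i : ℝ) ≤ ∑ j ∈ Finset.range (i + k + 1), reflectLeapP k p q i j * fN N j := by
  rw [decomp]
  have h0 : fN N 0 = 0 := by simp [fN]
  rw [h0, mul_zero, zero_add]
  have e1 : ∀ l ∈ Finset.range i, q l * fN N (i - l) = q l * ((i : ℝ) - (l : ℝ)) := by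
    intro l hl
    simp only [Finset.mem_range] at hl
    rw [fN_eq N (i - l) (by omega)]
    congr 1
    push_cast [Nat.cast_sub hl.le]
    ring
  have e2 : ∀ m ∈ Finset.Icc 1 k, p m * fN N (i + m) = p m * ((i : ℝ) + (m : ℝ)) := by
    intro m hm
    simp only [Finset.mem_Icc] at hm
    rw [fN_eq N (i + m) (by omega)]
    push_cast
    ring
  rw [Finset.sum_congr rfl e1, Finset.sum_congr rfl e2]
  rw [qext k (fun l => q l * ((i : ℝ) - (l : ℝ))) (by simp [hq0]) (fun l hl => by simp [hqk l hl]) i]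
  rw [Finset.sum_filter]
  -- abbreviations
  have hpq : ∑ j ∈ Finset.Icc 1 k, p j + ∑ j ∈ Finset.Icc 1 k, q j = 1 := by
    rw [← Finset.sum_add_distrib]; exact hsum
  have hmup : ∑ m ∈ Finset.Icc 1 k, (m : ℝ) * q m ≤ ∑ m ∈ Finset.Icc 1 k, (m : ℝ) * p m := by
    have : ∑ j ∈ Finset.Icc 1 k, (j : ℝ) * (p j - q j)
        = ∑ m ∈ Finset.Icc 1 k, (m : ℝ) * p m - ∑ m ∈ Finset.Icc 1 k, (m : ℝ) * q m := by
      rw [← Finset.sum_sub_distrib]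
      exact Finset.sum_congr rfl fun x _ => by ring
    linarith [this ▸ hmu]
  have hB : ∑ l ∈ Finset.Icc 1 k, (i : ℝ) * q l
      ≤ ∑ l ∈ Finset.Icc 1 k,
          ((if l < i then q l * ((i : ℝ) - (l : ℝ)) else 0) + (l : ℝ) * q l) := by
    apply Finset.sum_le_sum
    intro l hl
    by_cases h : l < i
    · rw [if_pos h]; ring_nf; exact le_rfl
    · rw [if_neg h]
      have : (i : ℝ) ≤ (l : ℝ) := by exact_mod_cast Nat.le_of_not_lt h
      nlinarith [hq l]
  rw [Finset.sum_add_distrib] at hB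
  have hE : ∑ m ∈ Finset.Icc 1 k, p m * ((i : ℝ) + (m : ℝ))
      = (i : ℝ) * ∑ m ∈ Finset.Icc 1 k, p m + ∑ m ∈ Finset.Icc 1 k, (m : ℝ) * p m := by
    rw [Finset.mul_sum, ← Finset.sum_add_distrib]
    exact Finset.sum_congr rfl fun x _ => by ring
  have hI : (i : ℝ) * ∑ l ∈ Finset.Icc 1 k, q l = ∑ l ∈ Finset.Icc 1 k, (i : ℝ) * q l :=
    Finset.mul_sum _ _ _
  nlinarith [hB, hE, hI, hpq, hmup]

lemma g_lip (hp : ∀ j, 0 ≤ p j) (hq : ∀ j, 0 ≤ q j)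
    (hq0 : q 0 = 0) (hqk : ∀ l, k < l → q l = 0)
    (hsum : ∑ j ∈ Finset.Icc 1 k, (p j + q j) = 1)
    (i N : ℕ) :
    fN N i - (k : ℝ) ≤ ∑ j ∈ Finset.range (i + k + 1), reflectLeapP k p q i j * fN N j := by
  by_cases hik : i ≤ k
  · have h1 : fN N i - (k : ℝ) ≤ 0 := by
      have := fN_le_self N i
      have : (i : ℝ) ≤ (k : ℝ) := by exact_mod_cast hik
      linarith [fN_le_self N i]
    refine h1.trans (Finset.sum_nonneg fun j _ =>
      mul_nonneg (Pnonneg k p q hp hq i j) (fN_nonneg N j))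
  · push_neg at hik
    rw [decomp]
    have hempty : Finset.Icc (max i 1) k = ∅ := Finset.Icc_eq_empty (by omega)
    rw [hempty]
    simp only [Finset.sum_empty, zero_mul, zero_add]
    have hqsum : ∑ l ∈ Finset.range i, q l = ∑ l ∈ Finset.Icc 1 k, q l := by
      apply (Finset.sum_subset ?_ ?_).symm
      · intro x hx
        simp only [Finset.mem_Icc] at hx
        simp only [Finset.mem_range]; omega
      · intro x hx hnx
        simp only [Finset.mem_range] at hx
        simp only [Finset.mem_Icc, not_and, not_le] at hnx
        have : x = 0 ∨ k < x := by omega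
        rcases this with h | h
        · rw [h, hq0]
        · exact hqk _ h
    have t1 : ∑ l ∈ Finset.range i, q l * (fN N i - (k : ℝ))
        ≤ ∑ l ∈ Finset.range i, q l * fN N (i - l) := by
      apply Finset.sum_le_sum
      intro l hl
      simp only [Finset.mem_range] at hl
      by_cases hlk : l ≤ k
      · apply mul_le_mul_of_nonneg_left _ (hq l)
        have := fN_lip N (i - l) i (by omega)
        have hc : ((i : ℝ) - ((i - l : ℕ) : ℝ)) = (l : ℝ) := by
          push_cast [Nat.cast_sub (by omega : i - l ≤ i)]
          have : ((i - l : ℕ) : ℝ) = (i : ℝ) - (l : ℝ) := by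
            push_cast [Nat.cast_sub (by omega : l ≤ i)]; ring
          rw [this]; ring
        rw [hc] at this
        have hlk' : (l : ℝ) ≤ (k : ℝ) := by exact_mod_cast hlk
        linarith
      · push_neg at hlk
        rw [hqk _ hlk]
        simp
    have t2 : ∑ m ∈ Finset.Icc 1 k, p m * (fN N i - (k : ℝ))
        ≤ ∑ m ∈ Finset.Icc 1 k, p m * fN N (i + m) := by
      apply Finset.sum_le_sum
      intro m _
      apply mul_le_mul_of_nonneg_left _ (hp m)
      have := fN_mono N i (i + m) (by omega)
      have := fN_le N i
      linarith [fN_mono N i (i + m) (by omega)]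
    have hw : ∑ l ∈ Finset.range i, q l * (fN N i - (k : ℝ))
        + ∑ m ∈ Finset.Icc 1 k, p m * (fN N i - (k : ℝ)) = fN N i - (k : ℝ) := by
      rw [← Finset.sum_mul, ← Finset.sum_mul, ← add_mul, hqsum]
      have h1 : ∑ l ∈ Finset.Icc 1 k, q l + ∑ m ∈ Finset.Icc 1 k, p m = 1 := by
        rw [← Finset.sum_add_distrib, ← hsum]
        exact Finset.sum_congr rfl fun x _ => by ring
      rw [h1, one_mul]
    linarith

end aux


/-- If the mean increment μ ≥ 0, the one-sided reflecting random leap has no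
stationary distribution. -/
theorem stmt_12 (k kq : ℕ) (hk : 1 ≤ k) (hkq : 1 ≤ kq) (hkqk : kq ≤ k)
    (p q : ℕ → ℝ) (hp : ∀ j, 0 ≤ p j) (hq : ∀ j, 0 ≤ q j)
    (hp0 : p 0 = 0) (hq0 : q 0 = 0)
    (hpk : ∀ j, k < j → p j = 0) (hqk : ∀ j, k < j → q j = 0)
    (hqkq : 0 < q kq) (hqmax : ∀ j, kq < j → q j = 0)
    (hsum : ∑ j ∈ Finset.Icc 1 k, (p j + q j) = 1)
    (hgcd : Finset.gcd ((Finset.Icc 1 k).filter (fun j => 0 < p j + q j)) id = 1)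
    (hmu : 0 ≤ ∑ j ∈ Finset.Icc 1 k, (j : ℝ) * (p j - q j)) :
    ¬ ∃ π : ℕ → ℝ, (∀ i, 0 ≤ π i) ∧ HasSum π 1 ∧
      ∀ j, HasSum (fun i => π i * reflectLeapP k p q i j) (π j) := by
  rintro ⟨π, hpos, hπsum, hstat⟩
  have hPnn : ∀ i j, 0 ≤ reflectLeapP k p q i j := Pnonneg k p q hp hq
  have hPsupp : ∀ i j, j ∉ Finset.range (i + k + 1) → reflectLeapP k p q i j = 0 :=
    fun i j h => Psupp k p q hpk i j h
  have hrow : ∀ i, ∑ j ∈ Finset.range (i + k + 1), reflectLeapP k p q i j = 1 :=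
    rowsum k p q hq0 hqk hsum
  have hPle1 : ∀ i j, reflectLeapP k p q i j ≤ 1 := by
    intro i j
    by_cases hj : j ∈ Finset.range (i + k + 1)
    · rw [← hrow i]
      exact Finset.single_le_sum (fun l _ => hPnn i l) hj
    · rw [hPsupp i j hj]; exact zero_le_one
  -- Step A : π 0 > 0
  have keyprop : ∀ i j, 0 < π i → 0 < reflectLeapP k p q i j → 0 < π j := by
    intro i j hi hPij
    have hle : π i * reflectLeapP k p q i j ≤ π j :=
      le_hasSum (hstat j) i (fun b _ => mul_nonneg (hpos b) (hPnn b j))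
    exact lt_of_lt_of_le (mul_pos hi hPij) hle
  have hdesc : ∀ i, 0 < π i → 0 < π 0 := by
    intro i
    induction i using Nat.strong_induction_on with
    | _ i ih =>
      intro hi
      rcases Nat.eq_zero_or_pos i with h0 | h1
      · rwa [h0] at hi
      by_cases hikq : i ≤ kq
      · refine keyprop i 0 hi ?_
        have hPi0 : reflectLeapP k p q i 0 = ∑ l ∈ Finset.Icc (max i 1) k, q l := by
          simp [reflectLeapP]
        rw [hPi0]
        have hmem : kq ∈ Finset.Icc (max i 1) k := by
          simp only [Finset.mem_Icc, max_le_iff]; omega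
        exact lt_of_lt_of_le hqkq (Finset.single_le_sum (fun l _ => hq l) hmem)
      · push_neg at hikq
        have hPstep : reflectLeapP k p q i (i - kq) = q kq := by
          unfold reflectLeapP
          rw [if_neg (by omega), if_neg (by omega), show i - (i - kq) = kq from by omega]
        have := keyprop i (i - kq) hi (by rw [hPstep]; exact hqkq)
        exact ih (i - kq) (by omega) this
  have hπ0 : 0 < π 0 := by
    obtain ⟨m, hm⟩ : ∃ m, 0 < π m := by
      by_contra h
      push_neg at h
      have hz : π = fun _ => 0 := funext fun i => le_antisymm (h i) (hpos i)
      rw [hz] at hπsum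
      exact (one_ne_zero (α := ℝ)) (hπsum.unique hasSum_zero)
    exact hdesc m hm
  set c : ℝ := (kq : ℝ) * q kq with hc
  have hcpos : 0 < c := mul_pos (by exact_mod_cast hkq) hqkq
  have hkpos : (0:ℝ) < (k:ℝ) := by exact_mod_cast hk
  have hεpos : 0 < π 0 * c / (2 * k) := by positivity
  obtain ⟨F0, hF0⟩ : ∃ F0 : Finset ℕ, 1 - π 0 * c / (2 * k) < ∑ i ∈ F0, π i := by
    have h1 : (1 - π 0 * c / (2 * k)) < (1 : ℝ) := by linarith
    have h2 : ∀ᶠ s in Filter.atTop, 1 - π 0 * c / (2 * k) < ∑ i ∈ s, π i :=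
      hπsum.eventually (eventually_gt_nhds h1)
    exact h2.exists
  set F : Finset ℕ := insert 0 F0 with hF
  have hFsum : 1 - π 0 * c / (2 * k) < ∑ i ∈ F, π i :=
    lt_of_lt_of_le hF0 (Finset.sum_le_sum_of_subset_of_nonneg
      (Finset.subset_insert 0 F0) fun i _ _ => hpos i)
  have h0F : 0 ∈ F := Finset.mem_insert_self 0 F0
  set N : ℕ := F.sup id + k with hN
  have hFN : ∀ i ∈ F, i + k ≤ N := by
    intro i hi
    have := Finset.le_sup (f := id) hi
    simp only [id] at this
    omega
  have hkN : k ≤ N := by omega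
  set g : ℕ → ℝ := fun i => ∑ j ∈ Finset.range (i + k + 1), reflectLeapP k p q i j * fN N j
    with hg
  set G : ℕ → ℕ → ℝ := fun i j => (π i * reflectLeapP k p q i j) * fN N j with hG
  have hGnn : ∀ i j, 0 ≤ G i j :=
    fun i j => mul_nonneg (mul_nonneg (hpos i) (hPnn i j)) (fN_nonneg N j)
  have hrowS : ∀ i, Summable (G i) := by
    intro i
    apply summable_of_ne_finset_zero (s := Finset.range (i + k + 1))
    intro j hj
    simp only [hG, hPsupp i j hj, mul_zero, zero_mul]
  have hrowT : ∀ i, ∑' j, G i j = π i * g i := by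
    intro i
    rw [tsum_eq_sum (s := Finset.range (i + k + 1))
      (fun j hj => by simp only [hG, hPsupp i j hj, mul_zero, zero_mul])]
    rw [hg, Finset.mul_sum]
    exact Finset.sum_congr rfl fun j _ => by ring
  have hgnn : ∀ i, 0 ≤ g i :=
    fun i => Finset.sum_nonneg fun j _ => mul_nonneg (hPnn i j) (fN_nonneg N j)
  have hgle : ∀ i, g i ≤ (N : ℝ) := by
    intro i
    have h1 : g i ≤ ∑ j ∈ Finset.range (i + k + 1), reflectLeapP k p q i j * (N : ℝ) :=
      Finset.sum_le_sum fun j _ => mul_le_mul_of_nonneg_left (fN_le N j) (hPnn i j)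
    rwa [← Finset.sum_mul, hrow i, one_mul] at h1
  have hA : Summable (fun i => π i * g i) := by
    apply Summable.of_nonneg_of_le (fun i => mul_nonneg (hpos i) (hgnn i))
      (fun i => mul_le_mul_of_nonneg_left (hgle i) (hpos i))
    exact hπsum.summable.mul_right _
  have hB : Summable (fun i => π i * fN N i) := by
    apply Summable.of_nonneg_of_le (fun i => mul_nonneg (hpos i) (fN_nonneg N i))
      (fun i => mul_le_mul_of_nonneg_left (fN_le N i) (hpos i))
    exact hπsum.summable.mul_right _
  have huncurry : Summable (Function.uncurry G) := by
    refine (summable_prod_of_nonneg (f := Function.uncurry G) ?_).2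
      ⟨fun i => hrowS i, (hA.congr fun i => (hrowT i).symm)⟩
    intro z
    exact hGnn z.1 z.2
  have hcolS : ∀ j, Summable (fun i => G i j) := by
    intro j
    apply Summable.of_nonneg_of_le (fun i => hGnn i j) (fun i => ?_)
      (hπsum.summable.mul_right (N : ℝ))
    have h1 : π i * reflectLeapP k p q i j ≤ π i :=
      mul_le_of_le_one_right (hpos i) (hPle1 i j)
    exact mul_le_mul h1 (fN_le N j) (fN_nonneg N j) (hpos i)
  have hswap : ∑' i, π i * g i = ∑' j, π j * fN N j := by
    calc ∑' i, π i * g i = ∑' i, ∑' j, G i j := tsum_congr fun i => (hrowT i).symm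
      _ = ∑' j, ∑' i, G i j := (Summable.tsum_comm' huncurry hrowS hcolS).symm
      _ = ∑' j, π j * fN N j := by
          refine tsum_congr fun j => ?_
          rw [hG]
          rw [tsum_mul_right, (hstat j).tsum_eq]
  have hzero : ∑' i, (π i * g i - π i * fN N i) = 0 := by
    rw [Summable.tsum_sub hA hB, hswap, sub_self]
  set T : ℕ → ℝ := fun i => if i ∈ F then 0 else π i with hT
  have hTsummable : Summable T := by
    apply Summable.of_nonneg_of_le (fun i => ?_) (fun i => ?_) hπsum.summable
    · by_cases hi : i ∈ F <;> simp [hT, hi, hpos i]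
    · by_cases hi : i ∈ F <;> simp [hT, hi, hpos i]
  have hTval : ∑' i, T i = 1 - ∑ i ∈ F, π i := by
    have h1 : Summable (fun i => if i ∈ F then π i else 0) :=
      summable_of_ne_finset_zero (s := F) (fun i hi => if_neg hi)
    have h2 : ∑' i, (if i ∈ F then π i else 0) = ∑ i ∈ F, π i := by
      rw [tsum_eq_sum (s := F) (fun i hi => if_neg hi)]
      exact Finset.sum_congr rfl fun i hi => if_pos hi
    have h3 : ∀ i, T i = π i - (if i ∈ F then π i else 0) := by
      intro i
      by_cases hi : i ∈ F <;> simp [hT, hi]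
    rw [tsum_congr h3, Summable.tsum_sub hπsum.summable h1, hπsum.tsum_eq, h2]
  set u : ℕ → ℝ := fun i => (π i * g i - π i * fN N i) + (k : ℝ) * T i with hu
  have husum : Summable u := (hA.sub hB).add (hTsummable.mul_left _)
  have huval : ∑' i, u i = (k : ℝ) * (1 - ∑ i ∈ F, π i) := by
    rw [hu, Summable.tsum_add (hA.sub hB) (hTsummable.mul_left _), hzero, tsum_mul_left, hTval,
      zero_add]
  have hunn : ∀ i, 0 ≤ u i := by
    intro i
    by_cases hi : i ∈ F
    · have hTi : T i = 0 := if_pos hi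
      simp only [hu, hTi, mul_zero, add_zero]
      rcases Nat.eq_zero_or_pos i with h0 | h1
      · subst h0
        have : fN N 0 = 0 := by simp [fN]
        rw [this, mul_zero, sub_zero]
        exact mul_nonneg (hpos 0) (hgnn 0)
      · have hfi : fN N i = (i : ℝ) := fN_eq N i (by have := hFN i hi; omega)
        have hgi : (i : ℝ) ≤ g i :=
          g_pos k p q hp hq hq0 hqk hsum hmu i N h1 (hFN i hi)
        rw [hfi]
        have := mul_le_mul_of_nonneg_left hgi (hpos i)
        linarith
    · have hTi : T i = π i := if_neg hi
      simp only [hu, hTi]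
      have hl : fN N i - (k : ℝ) ≤ g i := g_lip k p q hp hq hq0 hqk hsum i N
      have h2 := mul_le_mul_of_nonneg_left hl (hpos i)
      have h3 : π i * (fN N i - (k : ℝ)) = π i * fN N i - (k : ℝ) * π i := by ring
      linarith
  have hu0 : π 0 * c ≤ u 0 := by
    have hT0 : T 0 = 0 := if_pos h0F
    have hf0 : fN N 0 = 0 := by simp [fN]
    have hg0 : c ≤ g 0 := g_zero k p q hp hq kq N hkq hkqk hkN hmu
    have := mul_le_mul_of_nonneg_left hg0 (hpos 0)
    simp only [hu, hT0, mul_zero, add_zero, hf0, sub_zero]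
    linarith
  have hfinal : π 0 * c ≤ (k : ℝ) * (1 - ∑ i ∈ F, π i) := by
    rw [← huval]
    exact le_trans hu0 (Summable.le_tsum husum 0 (fun j _ => hunn j))
  have h5 : 1 - ∑ i ∈ F, π i < π 0 * c / (2 * k) := by linarith
  have h6 : (k : ℝ) * (1 - ∑ i ∈ F, π i) < (k : ℝ) * (π 0 * c / (2 * k)) :=
    mul_lt_mul_of_pos_left h5 hkpos
  have h7 : (k : ℝ) * (π 0 * c / (2 * k)) = π 0 * c / 2 := by
    field_simp
  nlinarith [mul_pos hπ0 hcpos]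
end

section
/- Let z_1, z_2, z_3 be the (distinct, nonzero) roots of p_2 z³ + (p_1+p_2) z² − (q_1+q_2) z − q_2, where p_2, q_2 > 0. Then the upper absorption probabilities of the absorbing random jump on {0,...,N} are u_i = [ (z_2^{N+1}−z_3^{N+1}) S_i(z_1) + (z_3^{N+1}−z_1^{N+1}) S_i(z_2) + (z_1^{N+1}−z_2^{N+1}) S_i(z_3) ] / [ same expression with i replaced by N ], where S_i(z) = Σ_{j=1}^i z^j. -/
open Finset

noncomputable def Tgeo (z : ℂ) (i : ℤ) : ℂ := ∑ j ∈ Finset.range (i + 1).toNat, z ^ j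

lemma Tgeo_succ (z : ℂ) (i : ℤ) (hi : -1 ≤ i) :
    Tgeo z (i + 1) = Tgeo z i + z ^ (i + 1).toNat := by
  unfold Tgeo
  have h : (i + 1 + 1).toNat = (i + 1).toNat + 1 := by omega
  rw [h, Finset.sum_range_succ]

lemma sum_range_Icc (z : ℂ) (n : ℕ) :
    ∑ j ∈ Finset.range (n + 1), z ^ j = 1 + ∑ j ∈ Finset.Icc 1 n, z ^ j := by
  induction n with
  | zero => simp
  | succ n ih =>
    rw [Finset.sum_range_succ, ih, Finset.sum_Icc_succ_top (by omega : 1 ≤ n + 1)]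
    ring

lemma cubic_rec (p1 p2 q1 q2 : ℝ) (hsum : p1 + p2 + q1 + q2 = 1) (z : ℂ)
    (hz : (p2 : ℂ) * z ^ 3 + ((p1 : ℂ) + p2) * z ^ 2 - ((q1 : ℂ) + q2) * z - q2 = 0)
    (i : ℤ) (hi : 1 ≤ i) :
    Tgeo z i = (p1 : ℂ) * Tgeo z (i + 1) + (p2 : ℂ) * Tgeo z (i + 2) +
      (q1 : ℂ) * Tgeo z (i - 1) + (q2 : ℂ) * Tgeo z (i - 2) := by
  obtain ⟨m, rfl⟩ : ∃ m : ℕ, i = (m : ℤ) + 1 := ⟨(i - 1).toNat, by omega⟩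
  have hsC : (p1 : ℂ) + p2 + q1 + q2 = 1 := by exact_mod_cast hsum
  have S : ∀ k : ℕ, ∑ j ∈ Finset.range (k + 1), z ^ j = (∑ j ∈ Finset.range k, z ^ j) + z ^ k :=
    fun k => Finset.sum_range_succ _ _
  have T0 : Tgeo z ((m : ℤ) + 1 - 2) = ∑ j ∈ Finset.range m, z ^ j := by
    unfold Tgeo; rw [show ((m:ℤ) + 1 - 2 + 1).toNat = m by omega]
  have T1 : Tgeo z ((m : ℤ) + 1 - 1) = ∑ j ∈ Finset.range m, z ^ j + z ^ m := by
    unfold Tgeo; rw [show ((m:ℤ) + 1 - 1 + 1).toNat = m + 1 by omega]; exact S m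
  have T2 : Tgeo z ((m : ℤ) + 1) = ∑ j ∈ Finset.range m, z ^ j + z ^ m + z ^ (m+1) := by
    unfold Tgeo; rw [show ((m:ℤ) + 1 + 1).toNat = (m + 1) + 1 by omega, S (m+1), S m]
  have T3 : Tgeo z ((m : ℤ) + 1 + 1) = ∑ j ∈ Finset.range m, z ^ j + z ^ m + z ^ (m+1) + z ^ (m+2) := by
    unfold Tgeo; rw [show ((m:ℤ) + 1 + 1 + 1).toNat = (m + 2) + 1 by omega, S (m+2),
      show m + 2 = (m + 1) + 1 from rfl, S (m+1), S m]
  have T4 : Tgeo z ((m : ℤ) + 1 + 2) = ∑ j ∈ Finset.range m, z ^ j + z ^ m + z ^ (m+1) + z ^ (m+2) + z ^ (m+3) := by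
    unfold Tgeo; rw [show ((m:ℤ) + 1 + 2 + 1).toNat = (m + 3) + 1 by omega, S (m+3),
      show m + 3 = (m + 2) + 1 from rfl, S (m+2), show m + 2 = (m + 1) + 1 from rfl, S (m+1), S m]
  rw [T0, T1, T2, T3, T4]
  have hp1 : z ^ (m+1) = z ^ m * z := by rw [pow_succ]
  have hp2 : z ^ (m+2) = z ^ m * z ^ 2 := by rw [pow_add]
  have hp3 : z ^ (m+3) = z ^ m * z ^ 3 := by rw [pow_add]
  rw [hp1, hp2, hp3]
  linear_combination (-(z ^ m)) * hz - ((∑ j ∈ Finset.range m, z ^ j) + z ^ m + z ^ m * z) * hsC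

lemma maxp_le (N : ℕ) (hN : 4 ≤ N) (p1 p2 q1 q2 : ℝ)
    (hp1 : 0 ≤ p1) (hp2 : 0 < p2) (hq1 : 0 ≤ q1) (hq2 : 0 < q2)
    (hsum : p1 + p2 + q1 + q2 = 1) (w : ℤ → ℝ)
    (b1 : w (-1) = 0) (b2 : w 0 = 0) (b3 : w N = 0) (b4 : w ((N : ℤ) + 1) = 0)
    (hrec : ∀ i : ℤ, 0 < i → i < (N : ℤ) →
      w i = p1 * w (i + 1) + p2 * w (i + 2) + q1 * w (i - 1) + q2 * w (i - 2)) :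
    ∀ i : ℤ, -1 ≤ i → i ≤ (N : ℤ) + 1 → w i ≤ 0 := by
  set I : Finset ℤ := Finset.Icc (-1 : ℤ) ((N : ℤ) + 1) with hI
  have hIne : I.Nonempty := ⟨0, by simp [hI]; omega⟩
  obtain ⟨m, hmI, hmax⟩ := Finset.exists_max_image I w hIne
  by_cases hM : w m ≤ 0
  · intro i hi1 hi2
    exact le_trans (hmax i (by simp [hI]; omega)) hM
  push_neg at hM
  exfalso
  set A : Finset ℤ := I.filter (fun j => w m ≤ w j) with hA
  have hAne : A.Nonempty := ⟨m, Finset.mem_filter.mpr ⟨hmI, le_refl _⟩⟩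
  set a := A.max' hAne with ha
  have haA : a ∈ A := A.max'_mem hAne
  rw [hA, Finset.mem_filter] at haA
  obtain ⟨haI, hva⟩ := haA
  have hwa : w a = w m := le_antisymm (hmax a haI) hva
  have haI' : -1 ≤ a ∧ a ≤ (N : ℤ) + 1 := by simpa [hI, Finset.mem_Icc] using haI
  have hint : 0 < a ∧ a < (N : ℤ) := by
    constructor
    · rcases lt_or_ge 0 a with h | h
      · exact h
      · exfalso
        have : a = -1 ∨ a = 0 := by omega
        rcases this with h' | h' <;> rw [h'] at hwa <;>
          [rw [b1] at hwa; rw [b2] at hwa] <;> linarith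
    · rcases lt_or_ge a (N : ℤ) with h | h
      · exact h
      · exfalso
        have : a = (N : ℤ) ∨ a = (N : ℤ) + 1 := by omega
        rcases this with h' | h' <;> rw [h'] at hwa <;>
          [rw [b3] at hwa; rw [b4] at hwa] <;> linarith
  have hr := hrec a hint.1 hint.2
  have hb1 : w (a + 1) ≤ w m := hmax _ (by simp [hI, Finset.mem_Icc]; omega)
  have hb2 : w (a - 1) ≤ w m := hmax _ (by simp [hI, Finset.mem_Icc]; omega)
  have hb3 : w (a - 2) ≤ w m := hmax _ (by simp [hI, Finset.mem_Icc]; omega)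
  have hkey : w m ≤ w (a + 2) := by nlinarith [hwa, hr]
  have hmem : a + 2 ∈ A := by
    rw [hA, Finset.mem_filter]
    exact ⟨by simp [hI, Finset.mem_Icc]; omega, hkey⟩
  have := A.le_max' (a + 2) hmem
  omega

open Complex in
lemma helper_mod (ρ s : ℝ) (hρ : 0 < ρ) (hs1 : s ≤ -1) (hs2 : s ≤ -ρ ^ 2)
    (b c : ℂ) (hbc : b ≠ c) (hb : ‖b‖ = ρ)
    (hprod : b * c = (ρ : ℂ) ^ 2) (hsum : (ρ : ℂ) + b + c = (s : ℂ)) : False := by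
  have hb0 : b ≠ 0 := by
    intro h; rw [h, norm_zero] at hb; exact hρ.ne' hb.symm
  have hconj : (starRingEnd ℂ) b = c := by
    have h1 : b * (starRingEnd ℂ) b = ((ρ ^ 2 : ℝ) : ℂ) := by
      rw [Complex.mul_conj, ← Complex.sq_norm, hb]
    have h2 : b * (starRingEnd ℂ) b = b * c := by
      rw [h1, hprod]; push_cast; ring_nf
    exact (mul_left_cancel₀ hb0 h2)
  have him : b.im ≠ 0 := by
    intro h
    apply hbc
    rw [← hconj, Complex.conj_eq_iff_im.mpr h]
  have hre : |b.re| < ρ := by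
    rw [← hb]; exact Complex.abs_re_lt_norm.mpr him
  have hsum' : ρ + 2 * b.re = s := by
    have : ((ρ + 2 * b.re : ℝ) : ℂ) = ((s : ℝ) : ℂ) := by
      rw [← hsum, ← hconj]
      push_cast
      rw [add_assoc, Complex.add_conj]
      push_cast; ring
    exact_mod_cast this
  have h1 : -ρ < b.re := by cases abs_lt.mp hre; linarith
  nlinarith

open Complex in
lemma no_eq_abs (p1 p2 q1 q2 : ℝ)
    (hp1 : 0 ≤ p1) (hp2 : 0 < p2) (hq1 : 0 ≤ q1) (hq2 : 0 < q2)
    (z1 z2 z3 : ℂ)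
    (hd12 : z1 ≠ z2) (hd13 : z1 ≠ z3) (hd23 : z2 ≠ z3)
    (hnz1 : z1 ≠ 0)
    (hv1 : (p2 : ℂ) * (z1 + z2 + z3) = -((p1 : ℂ) + p2))
    (hv2 : (p2 : ℂ) * (z1 * z2 + z1 * z3 + z2 * z3) = -((q1 : ℂ) + q2))
    (hv3 : (p2 : ℂ) * (z1 * z2 * z3) = (q2 : ℂ))
    (h12 : ‖z1‖ = ‖z2‖)
    (h13 : ‖z1‖ = ‖z3‖) : False := by
  have hp2C : (p2 : ℂ) ≠ 0 := by exact_mod_cast hp2.ne'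
  set ρ : ℝ := ‖z1‖ with hρdef
  have hρ : 0 < ρ := by
    rw [hρdef]; exact norm_pos_iff.mpr hnz1
  have hρC : (ρ : ℂ) ≠ 0 := by exact_mod_cast hρ.ne'
  set s : ℝ := -(p1 + p2) / p2 with hsdef
  set t : ℝ := -(q1 + q2) / p2 with htdef
  have he1 : z1 + z2 + z3 = ((s : ℝ) : ℂ) := by
    apply mul_left_cancel₀ hp2C
    rw [hv1, hsdef]; push_cast; field_simp
  have he2 : z1 * z2 + z1 * z3 + z2 * z3 = ((t : ℝ) : ℂ) := by
    apply mul_left_cancel₀ hp2C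
    rw [hv2, htdef]; push_cast; field_simp
  have he3' : z1 * z2 * z3 = ((q2 / p2 : ℝ) : ℂ) := by
    apply mul_left_cancel₀ hp2C
    rw [hv3]; push_cast; field_simp
  have hq2ρ : q2 / p2 = ρ ^ 3 := by
    have h := congrArg (‖·‖) he3'
    rw [norm_mul, norm_mul] at h
    rw [Complex.norm_real, Real.norm_eq_abs, abs_of_pos (by positivity)] at h
    rw [← h12, ← h13] at h
    rw [← h]; ring
  have he3 : z1 * z2 * z3 = (ρ : ℂ) ^ 3 := by rw [he3', hq2ρ]; push_cast; ring
  have hcs : (starRingEnd ℂ) z1 + (starRingEnd ℂ) z2 + (starRingEnd ℂ) z3 = ((s : ℝ) : ℂ) := by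
    have h := congrArg (starRingEnd ℂ) he1
    simpa [map_add, Complex.conj_ofReal] using h
  have hz1c : z1 * (starRingEnd ℂ) z1 = (ρ : ℂ) ^ 2 := by
    rw [Complex.mul_conj, ← Complex.sq_norm]; push_cast; ring
  have hz2c : z2 * (starRingEnd ℂ) z2 = (ρ : ℂ) ^ 2 := by
    rw [Complex.mul_conj, ← Complex.sq_norm, ← h12]; push_cast; ring
  have hz3c : z3 * (starRingEnd ℂ) z3 = (ρ : ℂ) ^ 2 := by
    rw [Complex.mul_conj, ← Complex.sq_norm, ← h13]; push_cast; ring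
  have hkey : ((s * ρ ^ 3 : ℝ) : ℂ) = ((ρ ^ 2 * t : ℝ) : ℂ) := by
    push_cast
    linear_combination (z2 * z3) * hz1c + (z1 * z3) * hz2c + (z1 * z2) * hz3c -
      ((ρ : ℂ) ^ 3) * hcs + (ρ : ℂ) ^ 2 * he2 -
      ((starRingEnd ℂ) z1 + (starRingEnd ℂ) z2 + (starRingEnd ℂ) z3) * he3
  have hst : s * ρ ^ 3 = ρ ^ 2 * t := Complex.ofReal_inj.mp hkey
  have hs1 : s ≤ -1 := by
    rw [hsdef]
    rw [div_le_iff₀ hp2]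
    nlinarith
  have ht3 : t ≤ -ρ ^ 3 := by
    rw [htdef, ← hq2ρ]
    have h' : q2 / p2 ≤ (q1 + q2) / p2 := by gcongr; linarith
    rw [neg_div]
    linarith
  have hs2 : s ≤ -ρ ^ 2 := by nlinarith [pow_pos hρ 3, pow_pos hρ 2]
  have hst' : ρ ^ 2 * s = ρ * t := by
    apply mul_right_cancel₀ hρ.ne'
    linear_combination hst
  have hroot : (z1 - (ρ : ℂ)) * ((z2 - (ρ : ℂ)) * (z3 - (ρ : ℂ))) = 0 := by
    have hst'' : ((ρ ^ 2 * s : ℝ) : ℂ) = ((ρ * t : ℝ) : ℂ) := by exact_mod_cast hst'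
    push_cast at hst''
    linear_combination he3 - (ρ : ℂ) * he2 + (ρ : ℂ) ^ 2 * he1 + hst''
  rcases mul_eq_zero.mp hroot with h | h
  · have hz : z1 = (ρ : ℂ) := sub_eq_zero.mp h
    have hprod : z2 * z3 = (ρ : ℂ) ^ 2 := by
      apply mul_left_cancel₀ hρC
      linear_combination he3 - (z2 * z3) * hz
    exact helper_mod ρ s hρ hs1 hs2 z2 z3 hd23 h12.symm hprod
      (by linear_combination he1 - hz)
  rcases mul_eq_zero.mp h with h' | h'
  · have hz : z2 = (ρ : ℂ) := sub_eq_zero.mp h'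
    have hprod : z1 * z3 = (ρ : ℂ) ^ 2 := by
      apply mul_left_cancel₀ hρC
      linear_combination he3 - (z1 * z3) * hz
    exact helper_mod ρ s hρ hs1 hs2 z1 z3 hd13 rfl hprod
      (by linear_combination he1 - hz)
  · have hz : z3 = (ρ : ℂ) := sub_eq_zero.mp h'
    have hprod : z1 * z2 = (ρ : ℂ) ^ 2 := by
      apply mul_left_cancel₀ hρC
      linear_combination he3 - z1 * z2 * hz
    exact helper_mod ρ s hρ hs1 hs2 z1 z2 hd12 rfl hprod
      (by linear_combination he1 - hz)

lemma vieta (p1 p2 q1 q2 : ℝ) (z1 z2 z3 : ℂ)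
    (hz1 : (p2 : ℂ) * z1 ^ 3 + ((p1 : ℂ) + p2) * z1 ^ 2 - ((q1 : ℂ) + q2) * z1 - q2 = 0)
    (hz2 : (p2 : ℂ) * z2 ^ 3 + ((p1 : ℂ) + p2) * z2 ^ 2 - ((q1 : ℂ) + q2) * z2 - q2 = 0)
    (hz3 : (p2 : ℂ) * z3 ^ 3 + ((p1 : ℂ) + p2) * z3 ^ 2 - ((q1 : ℂ) + q2) * z3 - q2 = 0)
    (hd12 : z1 ≠ z2) (hd13 : z1 ≠ z3) (hd23 : z2 ≠ z3) :
    (p2 : ℂ) * (z1 + z2 + z3) = -((p1 : ℂ) + p2) ∧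
    (p2 : ℂ) * (z1 * z2 + z1 * z3 + z2 * z3) = -((q1 : ℂ) + q2) ∧
    (p2 : ℂ) * (z1 * z2 * z3) = (q2 : ℂ) := by
  set A : ℂ := ((p1 : ℂ) + p2) + (p2 : ℂ) * (z1 + z2 + z3) with hA
  set B : ℂ := -((q1 : ℂ) + q2) - (p2 : ℂ) * (z1 * z2 + z1 * z3 + z2 * z3) with hB
  set C : ℂ := -(q2 : ℂ) + (p2 : ℂ) * (z1 * z2 * z3) with hC
  have R1 : A * z1 ^ 2 + B * z1 + C = 0 := by rw [hA, hB, hC]; linear_combination hz1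
  have R2 : A * z2 ^ 2 + B * z2 + C = 0 := by rw [hA, hB, hC]; linear_combination hz2
  have R3 : A * z3 ^ 2 + B * z3 + C = 0 := by rw [hA, hB, hC]; linear_combination hz3
  have h12 : A * (z1 + z2) + B = 0 := by
    have h : (z1 - z2) * (A * (z1 + z2) + B) = 0 := by linear_combination R1 - R2
    exact (mul_eq_zero.mp h).resolve_left (sub_ne_zero.mpr hd12)
  have h13 : A * (z1 + z3) + B = 0 := by
    have h : (z1 - z3) * (A * (z1 + z3) + B) = 0 := by linear_combination R1 - R3
    exact (mul_eq_zero.mp h).resolve_left (sub_ne_zero.mpr hd13)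
  have hA0 : A = 0 := by
    have h : (z2 - z3) * A = 0 := by linear_combination h12 - h13
    exact (mul_eq_zero.mp h).resolve_left (sub_ne_zero.mpr hd23)
  have hB0 : B = 0 := by linear_combination h12 - (z1 + z2) * hA0
  have hC0 : C = 0 := by linear_combination R1 - z1 ^ 2 * hA0 - z1 * hB0
  rw [hA] at hA0; rw [hB] at hB0; rw [hC] at hC0
  exact ⟨by linear_combination hA0, by linear_combination -hB0, by linear_combination hC0⟩

lemma maxp_eq (N : ℕ) (hN : 4 ≤ N) (p1 p2 q1 q2 : ℝ)
    (hp1 : 0 ≤ p1) (hp2 : 0 < p2) (hq1 : 0 ≤ q1) (hq2 : 0 < q2)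
    (hsum : p1 + p2 + q1 + q2 = 1) (w : ℤ → ℝ)
    (b1 : w (-1) = 0) (b2 : w 0 = 0) (b3 : w N = 0) (b4 : w ((N : ℤ) + 1) = 0)
    (hrec : ∀ i : ℤ, 0 < i → i < (N : ℤ) →
      w i = p1 * w (i + 1) + p2 * w (i + 2) + q1 * w (i - 1) + q2 * w (i - 2)) :
    ∀ i : ℤ, -1 ≤ i → i ≤ (N : ℤ) + 1 → w i = 0 := by
  have h1 := maxp_le N hN p1 p2 q1 q2 hp1 hp2 hq1 hq2 hsum w b1 b2 b3 b4 hrec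
  have h2 := maxp_le N hN p1 p2 q1 q2 hp1 hp2 hq1 hq2 hsum (fun i => -(w i))
    (by simp [b1]) (by simp [b2]) (by simp [b3]) (by simp [b4])
    (fun i hi1 hi2 => by rw [hrec i hi1 hi2]; ring)
  intro i hi1 hi2
  have := h2 i hi1 hi2
  linarith [h1 i hi1 hi2]

lemma pow_abs_inj (x y : ℝ) (hx : 0 ≤ x) (hy : 0 ≤ y) (n : ℕ) (hn : n ≠ 0)
    (h : x ^ n = y ^ n) : x = y := by
  rcases lt_trichotomy x y with h' | h' | h'
  · exfalso; have := pow_lt_pow_left₀ h' hx hn; linarith [this.trans_eq h.symm]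
  · exact h'
  · exfalso; have := pow_lt_pow_left₀ h' hy hn; linarith [this.trans_eq h]

/-- Closed form for the upper absorption probabilities of the absorbing random jump
in terms of the three distinct nonzero roots of p₂z³ + (p₁+p₂)z² − (q₁+q₂)z − q₂. -/
theorem stmt_19 (N : ℕ) (hN : 4 ≤ N) (p1 p2 q1 q2 : ℝ)
    (hp1 : 0 ≤ p1) (hp2 : 0 < p2) (hq1 : 0 ≤ q1) (hq2 : 0 < q2)
    (hsum : p1 + p2 + q1 + q2 = 1)
    (u : ℤ → ℝ)
    (hu0 : ∀ i : ℤ, i ≤ 0 → u i = 0) (huN : ∀ i : ℤ, (N : ℤ) ≤ i → u i = 1)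
    (hstep : ∀ i : ℤ, 0 < i → i < (N : ℤ) →
      u i = p1 * u (i + 1) + p2 * u (i + 2) + q1 * u (i - 1) + q2 * u (i - 2))
    (z1 z2 z3 : ℂ)
    (hz1 : (p2 : ℂ) * z1 ^ 3 + ((p1 : ℂ) + p2) * z1 ^ 2 - ((q1 : ℂ) + q2) * z1 - q2 = 0)
    (hz2 : (p2 : ℂ) * z2 ^ 3 + ((p1 : ℂ) + p2) * z2 ^ 2 - ((q1 : ℂ) + q2) * z2 - q2 = 0)
    (hz3 : (p2 : ℂ) * z3 ^ 3 + ((p1 : ℂ) + p2) * z3 ^ 2 - ((q1 : ℂ) + q2) * z3 - q2 = 0)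
    (hdist : z1 ≠ z2 ∧ z1 ≠ z3 ∧ z2 ≠ z3)
    (hnz : z1 ≠ 0 ∧ z2 ≠ 0 ∧ z3 ≠ 0) :
    ∀ i : ℕ, i ≤ N →
      ((u (i : ℤ) : ℝ) : ℂ) =
        ((z2 ^ (N + 1) - z3 ^ (N + 1)) * (∑ j ∈ Finset.Icc 1 i, z1 ^ j) +
          (z3 ^ (N + 1) - z1 ^ (N + 1)) * (∑ j ∈ Finset.Icc 1 i, z2 ^ j) +
          (z1 ^ (N + 1) - z2 ^ (N + 1)) * (∑ j ∈ Finset.Icc 1 i, z3 ^ j)) /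
        ((z2 ^ (N + 1) - z3 ^ (N + 1)) * (∑ j ∈ Finset.Icc 1 N, z1 ^ j) +
          (z3 ^ (N + 1) - z1 ^ (N + 1)) * (∑ j ∈ Finset.Icc 1 N, z2 ^ j) +
          (z1 ^ (N + 1) - z2 ^ (N + 1)) * (∑ j ∈ Finset.Icc 1 N, z3 ^ j)) := by
  obtain ⟨hd12, hd13, hd23⟩ := hdist
  obtain ⟨hnz1, hnz2, hnz3⟩ := hnz
  obtain ⟨hv1, hv2, hv3⟩ := vieta p1 p2 q1 q2 z1 z2 z3 hz1 hz2 hz3 hd12 hd13 hd23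
  set W1 : ℂ := z2 ^ (N + 1) - z3 ^ (N + 1) with hW1
  set W2 : ℂ := z3 ^ (N + 1) - z1 ^ (N + 1) with hW2
  set W3 : ℂ := z1 ^ (N + 1) - z2 ^ (N + 1) with hW3
  set v : ℤ → ℂ := fun i => W1 * Tgeo z1 i + W2 * Tgeo z2 i + W3 * Tgeo z3 i with hv
  have hWsum : W1 + W2 + W3 = 0 := by rw [hW1, hW2, hW3]; ring
  have hTm1 : ∀ z : ℂ, Tgeo z (-1) = 0 := fun z => by unfold Tgeo; norm_num
  have hT0 : ∀ z : ℂ, Tgeo z 0 = 1 := fun z => by unfold Tgeo; norm_num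
  have hvm1 : v (-1) = 0 := by rw [hv]; simp [hTm1]
  have hv0 : v 0 = 0 := by rw [hv]; simp only [hT0, mul_one]; exact hWsum
  set D : ℂ := v (N : ℤ) with hD
  have hvN1 : v ((N : ℤ) + 1) = D := by
    rw [hD, hv]; simp only
    rw [Tgeo_succ z1 (N : ℤ) (by omega), Tgeo_succ z2 (N : ℤ) (by omega),
      Tgeo_succ z3 (N : ℤ) (by omega), show ((N : ℤ) + 1).toNat = N + 1 by omega]
    rw [hW1, hW2, hW3]; ring
  have hvrec : ∀ i : ℤ, 0 < i → i < (N : ℤ) →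
      v i = (p1 : ℂ) * v (i + 1) + (p2 : ℂ) * v (i + 2) + (q1 : ℂ) * v (i - 1) + (q2 : ℂ) * v (i - 2) := by
    intro i hi1 hi2
    have r1 := cubic_rec p1 p2 q1 q2 hsum z1 hz1 i hi1
    have r2 := cubic_rec p1 p2 q1 q2 hsum z2 hz2 i hi1
    have r3 := cubic_rec p1 p2 q1 q2 hsum z3 hz3 i hi1
    rw [hv]; simp only
    linear_combination W1 * r1 + W2 * r2 + W3 * r3
  set w : ℤ → ℂ := fun i => D * ((u i : ℝ) : ℂ) - v i with hw
  have hwm1 : w (-1) = 0 := by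
    rw [hw]; simp only; rw [hu0 (-1) (by norm_num), hvm1]; simp
  have hw0 : w 0 = 0 := by
    rw [hw]; simp only; rw [hu0 0 le_rfl, hv0]; simp
  have hwN : w (N : ℤ) = 0 := by
    rw [hw]; simp only; rw [huN (N : ℤ) le_rfl, ← hD]; simp
  have hwN1 : w ((N : ℤ) + 1) = 0 := by
    rw [hw]; simp only; rw [huN ((N : ℤ) + 1) (by omega), hvN1]; simp
  have hwrec : ∀ i : ℤ, 0 < i → i < (N : ℤ) →
      w i = (p1 : ℂ) * w (i + 1) + (p2 : ℂ) * w (i + 2) + (q1 : ℂ) * w (i - 1) + (q2 : ℂ) * w (i - 2) := by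
    intro i hi1 hi2
    have hu := hstep i hi1 hi2
    have huC : ((u i : ℝ) : ℂ) = (p1 : ℂ) * ((u (i + 1) : ℝ) : ℂ) + (p2 : ℂ) * ((u (i + 2) : ℝ) : ℂ)
        + (q1 : ℂ) * ((u (i - 1) : ℝ) : ℂ) + (q2 : ℂ) * ((u (i - 2) : ℝ) : ℂ) := by
      exact_mod_cast congrArg (fun x : ℝ => (x : ℂ)) hu
    have hvr := hvrec i hi1 hi2
    rw [hw]; simp only
    linear_combination D * huC - hvr
  have main0 : ∀ i : ℤ, -1 ≤ i → i ≤ (N : ℤ) + 1 → w i = 0 := by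
    have hre := maxp_eq N hN p1 p2 q1 q2 hp1 hp2 hq1 hq2 hsum (fun i => (w i).re)
      (by simp [hwm1]) (by simp [hw0]) (by simp [hwN]) (by simp [hwN1])
      (fun i hi1 hi2 => by
        have h := congrArg Complex.re (hwrec i hi1 hi2)
        simpa [Complex.mul_re] using h)
    have him := maxp_eq N hN p1 p2 q1 q2 hp1 hp2 hq1 hq2 hsum (fun i => (w i).im)
      (by simp [hwm1]) (by simp [hw0]) (by simp [hwN]) (by simp [hwN1])
      (fun i hi1 hi2 => by
        have h := congrArg Complex.im (hwrec i hi1 hi2)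
        simpa [Complex.mul_im] using h)
    intro i hi1 hi2
    have h1 := hre i hi1 hi2
    have h2 := him i hi1 hi2
    exact Complex.ext (by simpa using h1) (by simpa using h2)
  have hDne : D ≠ 0 := by
    intro hD0
    have hvz : ∀ k : ℤ, -1 ≤ k → k ≤ (N : ℤ) + 1 → v k = 0 := by
      intro k h1 h2
      have h := main0 k h1 h2
      rw [hw] at h; simp only at h
      rw [hD0, zero_mul, zero_sub, neg_eq_zero] at h
      exact h
    have hT1 : ∀ z : ℂ, Tgeo z 1 = 1 + z := fun z => by
      unfold Tgeo
      rw [show ((1 : ℤ) + 1).toNat = 2 by omega]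
      simp [Finset.sum_range_succ]
    have hT2 : ∀ z : ℂ, Tgeo z 2 = 1 + z + z ^ 2 := fun z => by
      unfold Tgeo
      rw [show ((2 : ℤ) + 1).toNat = 3 by omega]
      simp [Finset.sum_range_succ]
    have hT3 : ∀ z : ℂ, Tgeo z 3 = 1 + z + z ^ 2 + z ^ 3 := fun z => by
      unfold Tgeo
      rw [show ((3 : ℤ) + 1).toNat = 4 by omega]
      simp [Finset.sum_range_succ]
    have G1 : W1 * (1 + z1) + W2 * (1 + z2) + W3 * (1 + z3) = 0 := by
      have h := hvz 1 (by omega) (by omega)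
      rw [hv] at h; simp only at h
      rwa [hT1, hT1, hT1] at h
    have G2 : W1 * (1 + z1 + z1 ^ 2) + W2 * (1 + z2 + z2 ^ 2) + W3 * (1 + z3 + z3 ^ 2) = 0 := by
      have h := hvz 2 (by omega) (by omega)
      rw [hv] at h; simp only at h
      rwa [hT2, hT2, hT2] at h
    have G3 : W1 * (1 + z1 + z1 ^ 2 + z1 ^ 3) + W2 * (1 + z2 + z2 ^ 2 + z2 ^ 3)
        + W3 * (1 + z3 + z3 ^ 2 + z3 ^ 3) = 0 := by
      have h := hvz 3 (by omega) (by omega)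
      rw [hv] at h; simp only at h
      rwa [hT3, hT3, hT3] at h
    have hW1z : W1 * (z1 * ((z1 - z2) * (z1 - z3))) = 0 := by
      linear_combination G3 - (1 + z2 + z3) * G2 + (z2 + z3 + z2 * z3) * G1 - (z2 * z3) * hWsum
    have hW2z : W2 * (z2 * ((z2 - z1) * (z2 - z3))) = 0 := by
      linear_combination G3 - (1 + z1 + z3) * G2 + (z1 + z3 + z1 * z3) * G1 - (z1 * z3) * hWsum
    have hW1zero : W1 = 0 :=
      (mul_eq_zero.mp hW1z).resolve_right
        (mul_ne_zero hnz1 (mul_ne_zero (sub_ne_zero.mpr hd12) (sub_ne_zero.mpr hd13)))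
    have hW2zero : W2 = 0 :=
      (mul_eq_zero.mp hW2z).resolve_right
        (mul_ne_zero hnz2 (mul_ne_zero (sub_ne_zero.mpr hd12.symm) (sub_ne_zero.mpr hd23)))
    have hW3zero : W3 = 0 := by
      have h := hWsum; rw [hW1zero, hW2zero] at h; linear_combination h
    have hp12 : z1 ^ (N + 1) = z2 ^ (N + 1) := by
      rw [hW3] at hW3zero; exact sub_eq_zero.mp hW3zero
    have hp13 : z1 ^ (N + 1) = z3 ^ (N + 1) := by
      rw [hW2] at hW2zero; exact (sub_eq_zero.mp hW2zero).symm
    have habs12 : ‖z1‖ = ‖z2‖ :=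
      pow_abs_inj _ _ (norm_nonneg _) (norm_nonneg _) (N + 1)
        (by omega) (by rw [← norm_pow, ← norm_pow, hp12])
    have habs13 : ‖z1‖ = ‖z3‖ :=
      pow_abs_inj _ _ (norm_nonneg _) (norm_nonneg _) (N + 1)
        (by omega) (by rw [← norm_pow, ← norm_pow, hp13])
    exact no_eq_abs p1 p2 q1 q2 hp1 hp2 hq1 hq2 z1 z2 z3 hd12 hd13 hd23 hnz1
      hv1 hv2 hv3 habs12 habs13
  intro i hiN
  have h0 := main0 (i : ℤ) (by omega) (by omega)
  rw [hw] at h0; simp only at h0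
  have hTi : ∀ z : ℂ, Tgeo z (i : ℤ) = 1 + ∑ j ∈ Finset.Icc 1 i, z ^ j := fun z => by
    unfold Tgeo; rw [show ((i : ℤ) + 1).toNat = i + 1 by omega]; exact sum_range_Icc z i
  have hTN : ∀ z : ℂ, Tgeo z (N : ℤ) = 1 + ∑ j ∈ Finset.Icc 1 N, z ^ j := fun z => by
    unfold Tgeo; rw [show ((N : ℤ) + 1).toNat = N + 1 by omega]; exact sum_range_Icc z N
  have hnum : v (i : ℤ) = W1 * (∑ j ∈ Finset.Icc 1 i, z1 ^ j) +
      W2 * (∑ j ∈ Finset.Icc 1 i, z2 ^ j) + W3 * (∑ j ∈ Finset.Icc 1 i, z3 ^ j) := by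
    rw [hv]; simp only; rw [hTi, hTi, hTi]; linear_combination hWsum
  have hden : D = W1 * (∑ j ∈ Finset.Icc 1 N, z1 ^ j) +
      W2 * (∑ j ∈ Finset.Icc 1 N, z2 ^ j) + W3 * (∑ j ∈ Finset.Icc 1 N, z3 ^ j) := by
    rw [hD, hv]; simp only; rw [hTN, hTN, hTN]; linear_combination hWsum
  rw [← hden, ← hnum, eq_div_iff hDne]
  linear_combination h0
end
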